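/- arXiv:1308.2128 — 9 statements merged into one kernel-verified Lean document; each statement's English description precedes it below -/
import Mathlib

section
/- Let γ be a normalized profile function on [0,ℓ] which is symmetric about the equator, i.e. γ(t) = γ(ℓ−t) for all t ∈ [0,ℓ], and suppose that the Gaussian curvature K(t) := −γ''(t)/γ(t) is monotone nondecreasing on (0, ℓ/2]. Then |Γ(t) + γ'(t)| ≤ γ(t) for every t ∈ (0,ℓ); equivalently, m_γ := sup_{t∈(0,ℓ)} |(Γ(t)+γ'(t))/γ(t)| ≤ 1. -/
/-- A profile function on `[0, ℓ]`: smooth, vanishing at the endpoints, positive inside,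
with `γ'(0) = 1`, `γ'(ℓ) = -1`, `|γ'| < 1` inside, and all even-order derivatives
(of order `≥ 2`) vanishing at the endpoints. -/
structure IsProfileFn (ℓ : ℝ) (γ : ℝ → ℝ) : Prop where
  len_pos : 0 < ℓ
  smooth : ContDiff ℝ (⊤ : ℕ∞) γ
  zero_left : γ 0 = 0
  zero_right : γ ℓ = 0
  pos : ∀ t ∈ Set.Ioo 0 ℓ, 0 < γ t
  deriv_left : deriv γ 0 = 1
  deriv_right : deriv γ ℓ = -1
  abs_deriv_lt : ∀ t ∈ Set.Ioo 0 ℓ, |deriv γ t| < 1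
  even_deriv_left : ∀ n : ℕ, 1 ≤ n → iteratedDeriv (2 * n) γ 0 = 0
  even_deriv_right : ∀ n : ℕ, 1 ≤ n → iteratedDeriv (2 * n) γ ℓ = 0

/-- The area normalization `∫₀^ℓ γ = 2`. -/
def IsNormalized (ℓ : ℝ) (γ : ℝ → ℝ) : Prop := (∫ t in (0:ℝ)..ℓ, γ t) = 2

/-- `Γ(t) = -1 + ∫₀^t γ`. -/
noncomputable def Gam (γ : ℝ → ℝ) (t : ℝ) : ℝ := -1 + ∫ s in (0:ℝ)..t, γ s

/-- If the normalized profile function is symmetric about the equator and the Gaussian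
curvature `K = -γ''/γ` is nondecreasing from the poles to the equator, then
`|Γ + γ'| ≤ γ` on `(0,ℓ)`, i.e. `m_γ ≤ 1`. -/
theorem stmt_0 (ℓ : ℝ) (γ : ℝ → ℝ) (hγ : IsProfileFn ℓ γ) (hnorm : IsNormalized ℓ γ)
    (hsym : ∀ t ∈ Set.Icc 0 ℓ, γ t = γ (ℓ - t))
    (hK : ∀ s ∈ Set.Ioc 0 (ℓ / 2), ∀ t ∈ Set.Ioc 0 (ℓ / 2), s ≤ t →
      -(iteratedDeriv 2 γ s) / γ s ≤ -(iteratedDeriv 2 γ t) / γ t) :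
    ∀ t ∈ Set.Ioo 0 ℓ, |Gam γ t + deriv γ t| ≤ γ t := by
  obtain ⟨hℓ, hsm, h0, hl0, hpos, hd0, hdl, habs, _, _⟩ := hγ
  have hdiff : Differentiable ℝ γ := hsm.differentiable (by simp)
  have hsm' : ContDiff ℝ ((⊤:ℕ∞):WithTop ℕ∞) γ := hsm.of_le (by simp)
  have hdiff1 : Differentiable ℝ (deriv γ) :=
    (contDiff_infty_iff_deriv.mp hsm').2.differentiable (by simp)
  have hcont : Continuous γ := hdiff.continuous
  have hcont1 : Continuous (deriv γ) := hdiff1.continuous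
  have h2iter : iteratedDeriv 2 γ = deriv (deriv γ) := by
    rw [iteratedDeriv_succ, iteratedDeriv_one]
  have hl2 : (0:ℝ) < ℓ / 2 := by linarith
  have hl2l : ℓ / 2 < ℓ := by linarith
  -- derivative of Gam
  have hGamD : ∀ t : ℝ, HasDerivAt (Gam γ) (γ t) t := by
    intro t
    have h1 : HasDerivAt (fun u => ∫ s in (0:ℝ)..u, γ s) (γ t) t :=
      intervalIntegral.integral_hasDerivAt_right (hcont.intervalIntegrable _ _)
        (hcont.stronglyMeasurableAtFilter _ _) hcont.continuousAt
    exact (h1.const_add (-1))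
  have hGamdiff : Differentiable ℝ (Gam γ) := fun t => (hGamD t).differentiableAt
  -- derivative symmetry
  have hderiv_sym : ∀ t ∈ Set.Ioo (0:ℝ) ℓ, deriv γ t = -deriv γ (ℓ - t) := by
    intro t ht
    have hev : γ =ᶠ[nhds t] fun s => γ (ℓ - s) := by
      filter_upwards [Ioo_mem_nhds ht.1 ht.2] with s hs
      exact hsym s ⟨hs.1.le, hs.2.le⟩
    have hca : HasDerivAt (fun s => γ (ℓ - s)) (deriv γ (ℓ - t) * (-1)) t := by
      have hg : HasDerivAt (fun s : ℝ => ℓ - s) (-1) t := (hasDerivAt_id t).const_sub ℓ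
      exact (hdiff (ℓ - t)).hasDerivAt.comp t hg
    rw [hev.deriv_eq, hca.deriv]; ring
  have hg_half : deriv γ (ℓ / 2) = 0 := by
    have := hderiv_sym (ℓ / 2) ⟨hl2, hl2l⟩
    rw [show ℓ - ℓ / 2 = ℓ / 2 by ring] at this
    linarith
  -- integral reflections
  have hint : ∀ a b : ℝ, IntervalIntegrable γ MeasureTheory.volume a b :=
    fun a b => hcont.intervalIntegrable a b
  have hrefl : ∀ t ∈ Set.Icc (0:ℝ) ℓ,
      (∫ s in (0:ℝ)..t, γ s) = ∫ s in (ℓ - t)..ℓ, γ s := by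
    intro t ht
    have h1 : (∫ s in (0:ℝ)..t, γ (ℓ - s)) = ∫ s in (ℓ - t)..(ℓ - 0), γ s :=
      intervalIntegral.integral_comp_sub_left γ ℓ
    have h2 : (∫ s in (0:ℝ)..t, γ s) = ∫ s in (0:ℝ)..t, γ (ℓ - s) := by
      apply intervalIntegral.integral_congr
      intro s hs
      rw [Set.uIcc_of_le ht.1] at hs
      exact hsym s ⟨hs.1, hs.2.trans ht.2⟩
    rw [h2, h1, sub_zero]
  have hGam_sym : ∀ t ∈ Set.Icc (0:ℝ) ℓ, Gam γ (ℓ - t) = -Gam γ t := by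
    intro t ht
    have h3 : (∫ s in (0:ℝ)..(ℓ - t), γ s) + (∫ s in (ℓ - t)..ℓ, γ s) = 2 := by
      rw [intervalIntegral.integral_add_adjacent_intervals (hint _ _) (hint _ _)]
      exact hnorm
    have h4 := hrefl t ht
    simp only [Gam]
    linarith
  have hGam_half : Gam γ (ℓ / 2) = 0 := by
    have := hGam_sym (ℓ / 2) ⟨hl2.le, hl2l.le⟩
    rw [show ℓ - ℓ / 2 = ℓ / 2 by ring] at this
    linarith
  -- rephrased curvature monotonicity
  have hKst : ∀ s, 0 < s → s ≤ ℓ / 2 → ∀ t, 0 < t → t ≤ ℓ / 2 → s ≤ t →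
      -(deriv (deriv γ) s) / γ s ≤ -(deriv (deriv γ) t) / γ t := by
    intro s hs1 hs2 t ht1 ht2 hst
    have := hK s ⟨hs1, hs2⟩ t ⟨ht1, ht2⟩ hst
    rwa [h2iter] at this
  -- Step 1 : γ'' < 0 on (0, ℓ/2]
  have hstep1 : ∀ t, 0 < t → t ≤ ℓ / 2 → deriv (deriv γ) t < 0 := by
    intro t ht0 htl
    by_contra hc
    have hc' : 0 ≤ deriv (deriv γ) t := not_lt.mp hc
    have hγt : 0 < γ t := hpos t ⟨ht0, htl.trans_lt hl2l⟩
    have hKt : -(deriv (deriv γ) t) / γ t ≤ 0 :=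
      div_nonpos_iff.mpr (Or.inr ⟨by linarith, hγt.le⟩)
    have hnn : ∀ s ∈ interior (Set.Icc (0:ℝ) t), 0 ≤ deriv (deriv γ) s := by
      intro s hs
      rw [interior_Icc] at hs
      have hγs : 0 < γ s := hpos s ⟨hs.1, lt_trans (hs.2.trans_le htl) hl2l⟩
      have hKs := (hKst s hs.1 (hs.2.le.trans htl) t ht0 htl hs.2.le).trans hKt
      rcases div_nonpos_iff.mp hKs with ⟨_, h2⟩ | ⟨h1, _⟩
      · linarith
      · linarith
    have hmono : MonotoneOn (deriv γ) (Set.Icc 0 t) :=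
      monotoneOn_of_deriv_nonneg (convex_Icc 0 t) hcont1.continuousOn
        (fun s _ => (hdiff1 s).differentiableWithinAt) hnn
    have h1le := hmono (Set.left_mem_Icc.mpr ht0.le) (Set.right_mem_Icc.mpr ht0.le) ht0.le
    rw [hd0] at h1le
    have := habs t ⟨ht0, htl.trans_lt hl2l⟩
    rw [abs_lt] at this
    linarith [this.2]
  -- derivative of F
  have hFD : ∀ s : ℝ, HasDerivAt (fun u => Gam γ u + deriv γ u)
      (γ s + deriv (deriv γ) s) s :=
    fun s => (hGamD s).add (hdiff1 s).hasDerivAt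
  have hFcont : Continuous (fun u => Gam γ u + deriv γ u) :=
    (hGamdiff.continuous.add hcont1)
  have hF0 : Gam γ 0 + deriv γ 0 = 0 := by
    simp [Gam, hd0]
  have hFhalf : Gam γ (ℓ / 2) + deriv γ (ℓ / 2) = 0 := by
    rw [hGam_half, hg_half]; ring
  -- Step 2 : 0 ≤ F on (0, ℓ/2]
  have hlow : ∀ t, 0 < t → t ≤ ℓ / 2 → 0 ≤ Gam γ t + deriv γ t := by
    intro t ht0 htl
    have hγt : 0 < γ t := hpos t ⟨ht0, htl.trans_lt hl2l⟩
    rcases le_or_gt (-(deriv (deriv γ) t) / γ t) 1 with hKle | hKgt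
    · -- monotone on [0, t]
      have hnn : ∀ s ∈ interior (Set.Icc (0:ℝ) t),
          0 ≤ deriv (fun u => Gam γ u + deriv γ u) s := by
        intro s hs
        rw [interior_Icc] at hs
        have hγs : 0 < γ s := hpos s ⟨hs.1, lt_trans (hs.2.trans_le htl) hl2l⟩
        have hKs := (hKst s hs.1 (hs.2.le.trans htl) t ht0 htl hs.2.le).trans hKle
        have h5 : -(deriv (deriv γ) s) ≤ γ s := (div_le_one hγs).mp hKs
        rw [(hFD s).deriv]
        linarith
      have hmono : MonotoneOn (fun u => Gam γ u + deriv γ u) (Set.Icc 0 t) :=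
        monotoneOn_of_deriv_nonneg (convex_Icc 0 t) hFcont.continuousOn
          (fun s _ => ((hFD s).differentiableAt).differentiableWithinAt) hnn
      have h6 := hmono (Set.left_mem_Icc.mpr ht0.le) (Set.right_mem_Icc.mpr ht0.le) ht0.le
      change Gam γ 0 + deriv γ 0 ≤ Gam γ t + deriv γ t at h6
      linarith
    · -- antitone on [t, ℓ/2]
      have hnp : ∀ s ∈ interior (Set.Icc t (ℓ / 2)),
          deriv (fun u => Gam γ u + deriv γ u) s ≤ 0 := by
        intro s hs
        rw [interior_Icc] at hs
        have hγs : 0 < γ s := hpos s ⟨ht0.trans hs.1, hs.2.trans hl2l⟩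
        have hKs := hKgt.trans_le
          (hKst t ht0 htl s (ht0.trans hs.1) hs.2.le hs.1.le)
        have h5 : γ s < -(deriv (deriv γ) s) := (one_lt_div hγs).mp hKs
        rw [(hFD s).deriv]
        linarith
      have hanti : AntitoneOn (fun u => Gam γ u + deriv γ u) (Set.Icc t (ℓ / 2)) :=
        antitoneOn_of_deriv_nonpos (convex_Icc t (ℓ / 2)) hFcont.continuousOn
          (fun s _ => ((hFD s).differentiableAt).differentiableWithinAt) hnp
      have h6 := hanti (Set.left_mem_Icc.mpr htl) (Set.right_mem_Icc.mpr htl) htl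
      change Gam γ (ℓ / 2) + deriv γ (ℓ / 2) ≤ Gam γ t + deriv γ t at h6
      linarith
  -- Gam ≤ 0 on [0, ℓ/2]
  have hGamle : ∀ t, 0 ≤ t → t ≤ ℓ / 2 → Gam γ t ≤ 0 := by
    intro t ht0 htl
    have hnn : ∀ s ∈ interior (Set.Icc (0:ℝ) (ℓ / 2)), 0 ≤ deriv (Gam γ) s := by
      intro s hs
      rw [interior_Icc] at hs
      rw [(hGamD s).deriv]
      exact (hpos s ⟨hs.1, hs.2.trans hl2l⟩).le
    have hmono : MonotoneOn (Gam γ) (Set.Icc 0 (ℓ / 2)) :=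
      monotoneOn_of_deriv_nonneg (convex_Icc 0 (ℓ / 2)) hGamdiff.continuous.continuousOn
        (fun s _ => (hGamdiff s).differentiableWithinAt) hnn
    have := hmono (Set.mem_Icc.mpr ⟨ht0, htl⟩) (Set.right_mem_Icc.mpr hl2.le) htl
    rw [hGam_half] at this
    exact this
  -- Step 3 : F ≤ γ on (0, ℓ/2] via minimum of h = γ - γ' - Gam
  have hup : ∀ t, 0 < t → t ≤ ℓ / 2 → Gam γ t + deriv γ t ≤ γ t := by
    have hhD : ∀ s : ℝ, HasDerivAt (fun u => γ u - deriv γ u - Gam γ u)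
        (deriv γ s - deriv (deriv γ) s - γ s) s :=
      fun s => ((hdiff s).hasDerivAt.sub (hdiff1 s).hasDerivAt).sub (hGamD s)
    have hhcont : Continuous (fun u => γ u - deriv γ u - Gam γ u) :=
      (hcont.sub hcont1).sub hGamdiff.continuous
    obtain ⟨t₁, ht₁, hmin⟩ :=
      isCompact_Icc.exists_isMinOn (Set.nonempty_Icc.mpr hl2.le) hhcont.continuousOn
        (s := Set.Icc (0:ℝ) (ℓ / 2))
    have hkey : 0 ≤ γ t₁ - deriv γ t₁ - Gam γ t₁ := by
      by_contra hneg
      push_neg at hneg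
      have hh0 : γ 0 - deriv γ 0 - Gam γ 0 = 0 := by simp [Gam, h0, hd0]
      have hhhalf : 0 < γ (ℓ / 2) - deriv γ (ℓ / 2) - Gam γ (ℓ / 2) := by
        rw [hg_half, hGam_half]
        simpa using hpos (ℓ / 2) ⟨hl2, hl2l⟩
      have ht10 : t₁ ≠ 0 := by rintro rfl; rw [hh0] at hneg; exact absurd hneg (lt_irrefl 0)
      have ht1h : t₁ ≠ ℓ / 2 := by rintro rfl; linarith
      have ht1mem : t₁ ∈ Set.Ioo (0:ℝ) (ℓ / 2) :=
        ⟨lt_of_le_of_ne ht₁.1 (Ne.symm ht10), lt_of_le_of_ne ht₁.2 ht1h⟩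
      have hloc : IsLocalMin (fun u => γ u - deriv γ u - Gam γ u) t₁ :=
        hmin.isLocalMin (Icc_mem_nhds ht1mem.1 ht1mem.2)
      have hder := hloc.deriv_eq_zero
      rw [(hhD t₁).deriv] at hder
      have hg2 : deriv (deriv γ) t₁ < 0 := hstep1 t₁ ht1mem.1 ht1mem.2.le
      have hGle : Gam γ t₁ ≤ 0 := hGamle t₁ ht₁.1 ht₁.2
      linarith
    intro t ht0 htl
    have := hmin (Set.mem_Icc.mpr ⟨ht0.le, htl⟩)
    simp only [Set.mem_setOf_eq] at this
    linarith [hkey, this]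
  -- conclusion
  intro t ht
  rcases le_or_gt t (ℓ / 2) with hcase | hcase
  · have h1 := hlow t ht.1 hcase
    have h2 := hup t ht.1 hcase
    have h3 : 0 < γ t := hpos t ht
    rw [abs_le]
    constructor <;> linarith
  · have h1 : 0 < ℓ - t := by linarith [ht.2]
    have h2 : ℓ - t ≤ ℓ / 2 := by linarith
    have e1 : γ t = γ (ℓ - t) := hsym t ⟨ht.1.le, ht.2.le⟩
    have e2 : deriv γ t = -deriv γ (ℓ - t) := hderiv_sym t ht
    have e3 : Gam γ t = -Gam γ (ℓ - t) := by
      have := hGam_sym (ℓ - t) ⟨h1.le, by linarith [ht.1]⟩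
      rw [show ℓ - (ℓ - t) = t by ring] at this
      linarith
    have h4 := hlow (ℓ - t) h1 h2
    have h5 := hup (ℓ - t) h1 h2
    have h6 : 0 < γ (ℓ - t) := hpos (ℓ - t) ⟨h1, by linarith [ht.1]⟩
    rw [e1, e2, e3, abs_le]
    constructor <;> linarith
end

section
/- For every C > 0 there exist ℓ > 0, a normalized profile function γ on [0,ℓ] with γ''(t) ≤ 0 for all t ∈ (0,ℓ) (i.e. the associated surface of revolution is convex with total area 4π), and a point t ∈ (0,ℓ) such that |Γ(t) + γ'(t)| > C·γ(t) (equivalently, m_γ > C). -/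
open Real intervalIntegral MeasureTheory Finset

noncomputable def Bq (m : ℕ) : ℝ := ∫ u in (0:ℝ)..(π/2), (π - 2*u) * Real.cos u ^ (2*m+1)
noncomputable def cq (m : ℕ) : ℝ := ∫ u in (0:ℝ)..(π/2), Real.cos u ^ (2*m+1)
noncomputable def om (m : ℕ) : ℝ := Real.sqrt (Bq m / 2)
noncomputable def Pm (m : ℕ) (x : ℝ) : ℝ :=
  ∑ j ∈ Finset.range (m+1), ((m.choose j : ℝ) * (-1)^j / (2*j+1)) * x^(2*j+1)
noncomputable def gam (m : ℕ) (t : ℝ) : ℝ := (1/om m) * Pm m (Real.sin (om m * t))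

lemma Bq_pos (m : ℕ) : 0 < Bq m := by
  apply intervalIntegral.intervalIntegral_pos_of_pos_on
  · apply Continuous.intervalIntegrable; fun_prop
  · intro x hx
    have h1 : 0 < π - 2*x := by nlinarith [hx.2]
    have h2 : 0 < Real.cos x := Real.cos_pos_of_mem_Ioo ⟨by linarith [hx.1, Real.pi_pos], hx.2⟩
    positivity
  · positivity

lemma om_pos (m : ℕ) : 0 < om m := Real.sqrt_pos.mpr (by linarith [Bq_pos m])

lemma om_sq (m : ℕ) : om m ^ 2 = Bq m / 2 := Real.sq_sqrt (by linarith [Bq_pos m])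

lemma Pm_hasDerivAt (m : ℕ) (x : ℝ) : HasDerivAt (Pm m) ((1 - x^2)^m) x := by
  have h : HasDerivAt (Pm m)
      (∑ j ∈ Finset.range (m+1),
        ((m.choose j : ℝ) * (-1)^j / (2*j+1)) * ((2*j+1) * x^(2*j))) x := by
    apply HasDerivAt.fun_sum
    intro j _
    have := (hasDerivAt_pow (2*j+1) x).const_mul ((m.choose j : ℝ) * (-1)^j / (2*j+1))
    simpa [Nat.add_sub_cancel] using this
  convert h using 1
  have : ((1:ℝ) - x^2)^m = ∑ j ∈ Finset.range (m+1), (m.choose j : ℝ) * (-1)^j * x^(2*j) := by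
    have hb := add_pow (-x^2) (1:ℝ) m
    simp only [one_pow, mul_one] at hb
    have : (1:ℝ) - x^2 = -x^2 + 1 := by ring
    rw [this, hb]
    apply Finset.sum_congr rfl
    intro j _
    rw [neg_pow, pow_mul]
    ring
  rw [this]
  apply Finset.sum_congr rfl
  intro j _
  have h2 : ((2*(j:ℝ)+1)) ≠ 0 := by positivity
  field_simp
lemma gam_hasDerivAt (m : ℕ) (t : ℝ) :
    HasDerivAt (gam m) (Real.cos (om m * t) ^ (2*m+1)) t := by
  have h1 : HasDerivAt (fun t : ℝ => om m * t) (om m) t := by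
    simpa using (hasDerivAt_id t).const_mul (om m)
  have h2 := (Real.hasDerivAt_sin (om m * t)).comp t h1
  have h3 := ((Pm_hasDerivAt m (Real.sin (om m * t))).comp t h2).const_mul (1/om m)
  refine h3.congr_deriv ?_
  have hc : (1:ℝ) - Real.sin (om m * t)^2 = Real.cos (om m * t)^2 := by
    rw [Real.cos_sq']
  rw [hc]
  have hω := (om_pos m).ne'
  field_simp [pow_succ, pow_mul]
  ring

lemma gam_deriv (m : ℕ) : deriv (gam m) = fun t => Real.cos (om m * t) ^ (2*m+1) :=
  funext fun t => (gam_hasDerivAt m t).deriv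

lemma gam_zero (m : ℕ) : gam m 0 = 0 := by
  simp [gam, Pm]

lemma gam_eq_integral (m : ℕ) (t : ℝ) :
    gam m t = ∫ s in (0:ℝ)..t, Real.cos (om m * s) ^ (2*m+1) := by
  rw [intervalIntegral.integral_eq_sub_of_hasDerivAt
    (fun s _ => gam_hasDerivAt m s) (by apply Continuous.intervalIntegrable; fun_prop),
    gam_zero, sub_zero]

lemma gam_smooth (m : ℕ) : ContDiff ℝ (⊤ : ℕ∞) (gam m) := by
  unfold gam
  apply ContDiff.mul contDiff_const
  apply ContDiff.comp (g := Pm m)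
  · unfold Pm
    apply ContDiff.sum
    intro j _
    exact contDiff_const.mul (contDiff_id.pow _)
  · exact Real.contDiff_sin.comp (contDiff_const.mul contDiff_id)

noncomputable def ell (m : ℕ) : ℝ := π / om m

lemma ell_pos (m : ℕ) : 0 < ell m := div_pos Real.pi_pos (om_pos m)

lemma om_mul_ell (m : ℕ) : om m * ell m = π := by
  rw [ell, mul_div_cancel₀ _ (om_pos m).ne']

lemma gam_deriv_zero (m : ℕ) : deriv (gam m) 0 = 1 := by
  rw [gam_deriv]; simp

lemma gam_deriv_ell (m : ℕ) : deriv (gam m) (ell m) = -1 := by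
  rw [gam_deriv]
  simp only [om_mul_ell, Real.cos_pi]
  exact Odd.neg_one_pow ⟨m, by ring⟩

lemma gam_ell (m : ℕ) : gam m (ell m) = 0 := by
  simp [gam, om_mul_ell, Pm]

lemma gam_pos (m : ℕ) : ∀ t ∈ Set.Ioo 0 (ell m), 0 < gam m t := by
  intro t ht
  obtain ⟨ht0, htl⟩ := ht
  have hω := om_pos m
  rcases le_or_gt t (ell m / 2) with hle | hgt
  · rw [gam_eq_integral]
    apply intervalIntegral.intervalIntegral_pos_of_pos_on
    · apply Continuous.intervalIntegrable; fun_prop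
    · intro s hs
      have h1 : om m * s < π / 2 := by
        have : om m * s < om m * (ell m / 2) := by
          apply mul_lt_mul_of_pos_left (lt_of_lt_of_le hs.2 hle) hω
        calc om m * s < om m * (ell m / 2) := this
          _ = π / 2 := by rw [mul_div_assoc', om_mul_ell]
      have h2 : 0 < Real.cos (om m * s) :=
        Real.cos_pos_of_mem_Ioo ⟨by nlinarith [Real.pi_pos, hs.1], h1⟩
      positivity
    · exact ht0
  · have hsplit : gam m t + (∫ s in t..(ell m), Real.cos (om m * s) ^ (2*m+1)) = 0 := by
      rw [gam_eq_integral]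
      rw [intervalIntegral.integral_add_adjacent_intervals
        (by apply Continuous.intervalIntegrable; fun_prop)
        (by apply Continuous.intervalIntegrable; fun_prop)]
      rw [← gam_eq_integral, gam_ell]
    have hneg : (∫ s in t..(ell m), Real.cos (om m * s) ^ (2*m+1)) < 0 := by
      rw [← neg_pos, ← intervalIntegral.integral_neg]
      apply intervalIntegral.intervalIntegral_pos_of_pos_on
      · apply Continuous.intervalIntegrable; fun_prop
      · intro s hs
        have h1 : π / 2 < om m * s := by
          have : om m * (ell m / 2) < om m * s := mul_lt_mul_of_pos_left (lt_trans hgt hs.1) hω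
          calc π/2 = om m * (ell m / 2) := by rw [mul_div_assoc', om_mul_ell]
            _ < om m * s := this
        have h2 : om m * s < π := by
          calc om m * s < om m * ell m := mul_lt_mul_of_pos_left hs.2 hω
            _ = π := om_mul_ell m
        have h3 : Real.cos (om m * s) < 0 :=
          Real.cos_neg_of_pi_div_two_lt_of_lt h1 (by linarith [Real.pi_pos])
        have : Real.cos (om m * s) ^ (2*m+1) < 0 := by
          apply Odd.pow_neg ⟨m, by ring⟩ h3
        linarith
      · exact htl
    linarith

lemma gam_abs_deriv_lt (m : ℕ) : ∀ t ∈ Set.Ioo 0 (ell m), |deriv (gam m) t| < 1 := by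
  intro t ht
  rw [gam_deriv]
  have hω := om_pos m
  have h1 : 0 < om m * t := mul_pos hω ht.1
  have h2 : om m * t < π := by
    calc om m * t < om m * ell m := mul_lt_mul_of_pos_left ht.2 hω
      _ = π := om_mul_ell m
  have hs : 0 < Real.sin (om m * t) := Real.sin_pos_of_pos_of_lt_pi h1 h2
  have habs : |Real.cos (om m * t)| < 1 := by
    have := Real.sin_sq_add_cos_sq (om m * t)
    nlinarith [abs_nonneg (Real.cos (om m * t)), sq_abs (Real.cos (om m * t))]
  rw [abs_pow]
  exact pow_lt_one₀ (abs_nonneg _) habs (by omega)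

lemma gam_second_deriv (m : ℕ) : ∀ t ∈ Set.Ioo 0 (ell m), iteratedDeriv 2 (gam m) t ≤ 0 := by
  intro t ht
  have hω := om_pos m
  have hd2 : iteratedDeriv 2 (gam m) t = deriv (deriv (gam m)) t := by
    rw [show (2:ℕ) = 1 + 1 from rfl, iteratedDeriv_succ, iteratedDeriv_one]
  rw [hd2, gam_deriv]
  have h1 : HasDerivAt (fun t : ℝ => om m * t) (om m) t := by
    simpa using (hasDerivAt_id t).const_mul (om m)
  have h2 : HasDerivAt (fun t : ℝ => Real.cos (om m * t) ^ (2*m+1))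
      ((2*m+1 : ℕ) * Real.cos (om m * t) ^ (2*m+1-1) * (-Real.sin (om m * t) * om m)) t := by
    simpa [Function.comp] using ((Real.hasDerivAt_cos (om m * t)).comp t h1).fun_pow (2*m+1)
  rw [h2.deriv]
  have hsin : 0 ≤ Real.sin (om m * t) := by
    apply Real.sin_nonneg_of_nonneg_of_le_pi
    · exact (mul_pos hω ht.1).le
    · calc om m * t ≤ om m * ell m := by
            apply mul_le_mul_of_nonneg_left ht.2.le hω.le
        _ = π := om_mul_ell m
  have hcos : 0 ≤ Real.cos (om m * t) ^ (2*m+1-1) := by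
    rw [show 2*m+1-1 = 2*m from rfl]
    exact Even.pow_nonneg ⟨m, by ring⟩ _
  have : (0:ℝ) ≤ ((2*m+1 : ℕ) : ℝ) := Nat.cast_nonneg _
  nlinarith [mul_nonneg (mul_nonneg this hcos) (mul_nonneg hsin hω.le)]

lemma odd_iteratedDeriv_zero (g : ℝ → ℝ) (hg : ∀ x, g (-x) = g x) {n : ℕ} (hn : Odd n) :
    iteratedDeriv n g 0 = 0 := by
  have h := iteratedDeriv_comp_neg n g 0
  have heq : (fun x : ℝ => g (-x)) = g := funext hg
  rw [heq, neg_zero, hn.neg_one_pow] at h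
  simp only [smul_eq_mul, neg_one_mul] at h
  linarith

lemma gam_even_left (m : ℕ) : ∀ n : ℕ, 1 ≤ n → iteratedDeriv (2*n) (gam m) 0 = 0 := by
  intro n hn
  obtain ⟨k, rfl⟩ : ∃ k, n = k + 1 := ⟨n - 1, by omega⟩
  have h2 : 2*(k+1) = (2*k+1) + 1 := by ring
  rw [h2, iteratedDeriv_succ', gam_deriv]
  exact odd_iteratedDeriv_zero _ (fun x => by simp [mul_neg]) ⟨k, by ring⟩

lemma gam_even_right (m : ℕ) : ∀ n : ℕ, 1 ≤ n → iteratedDeriv (2*n) (gam m) (ell m) = 0 := by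
  intro n hn
  obtain ⟨k, rfl⟩ : ∃ k, n = k + 1 := ⟨n - 1, by omega⟩
  have h2 : 2*(k+1) = (2*k+1) + 1 := by ring
  rw [h2, iteratedDeriv_succ', gam_deriv]
  have hshift := iteratedDeriv_comp_const_add (2*k+1)
    (fun t => Real.cos (om m * t) ^ (2*m+1)) (ell m)
  have h0 := congrFun hshift 0
  rw [add_zero] at h0
  rw [← h0]
  apply odd_iteratedDeriv_zero _ _ ⟨k, by ring⟩
  intro x
  simp only [mul_add, mul_neg, om_mul_ell]
  rw [Real.cos_add, Real.cos_add, Real.cos_neg, Real.sin_neg, Real.cos_pi, Real.sin_pi]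
  ring_nf

lemma gam_normalized (m : ℕ) : (∫ t in (0:ℝ)..(ell m), gam m t) = 2 := by
  have hω := om_pos m
  set p := 2*m+1 with hp
  set ω := om m with hw
  set L := ell m with hL
  -- integration by parts
  have hH : ∀ t ∈ Set.uIcc (0:ℝ) L, HasDerivAt (fun t => (t - L) * gam m t)
      (gam m t + (t - L) * Real.cos (ω * t) ^ p) t := by
    intro t _
    have h1 := ((hasDerivAt_id t).sub_const L).mul (gam_hasDerivAt m t)
    refine h1.congr_deriv ?_
    simp only [id_eq]
    ring
  have hparts := intervalIntegral.integral_eq_sub_of_hasDerivAt hH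
    (by apply Continuous.intervalIntegrable
        have := (gam_smooth m).continuous
        fun_prop)
  simp only [sub_self, zero_mul, gam_ell, mul_zero, zero_sub, gam_zero, neg_zero, sub_zero,
    zero_mul] at hparts
  rw [intervalIntegral.integral_add
    (by apply Continuous.intervalIntegrable; have := (gam_smooth m).continuous; fun_prop)
    (by apply Continuous.intervalIntegrable; fun_prop)] at hparts
  have hkey : (∫ t in (0:ℝ)..L, gam m t) = ∫ t in (0:ℝ)..L, (L - t) * Real.cos (ω * t) ^ p := by
    have : (∫ t in (0:ℝ)..L, (L - t) * Real.cos (ω * t) ^ p)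
        = - ∫ t in (0:ℝ)..L, (t - L) * Real.cos (ω * t) ^ p := by
      rw [← intervalIntegral.integral_neg]
      congr 1; funext t; ring
    rw [this]; linarith
  rw [hkey]
  -- substitution u = ω t
  have hsub : (∫ t in (0:ℝ)..L, (L - t) * Real.cos (ω * t) ^ p)
      = ω⁻¹ • ∫ u in (0:ℝ)..π, (L - u/ω) * Real.cos u ^ p := by
    have := intervalIntegral.integral_comp_mul_left (a := 0) (b := L)
      (fun u => (L - u/ω) * Real.cos u ^ p) hω.ne'
    simp only [mul_zero] at this
    rw [om_mul_ell] at this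
    rw [← this]
    congr 1; funext t
    rw [mul_comm ω t, mul_div_assoc, div_self hω.ne', mul_one]
  rw [hsub]
  have hLdef : ∀ u : ℝ, L - u/ω = (π - u)/ω := by
    intro u
    rw [hL, ell]
    ring
  have hsplit : (∫ u in (0:ℝ)..π, (L - u/ω) * Real.cos u ^ p)
      = ω⁻¹ * ∫ u in (0:ℝ)..π, (π - u) * Real.cos u ^ p := by
    rw [← intervalIntegral.integral_const_mul]
    congr 1; funext u
    rw [hLdef u]; ring
  rw [hsplit]
  have hBq : (∫ u in (0:ℝ)..π, (π - u) * Real.cos u ^ p) = Bq m := by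
    have hadd : (∫ u in (0:ℝ)..(π/2), (π - u) * Real.cos u ^ p)
        + (∫ u in (π/2)..π, (π - u) * Real.cos u ^ p)
        = ∫ u in (0:ℝ)..π, (π - u) * Real.cos u ^ p :=
      intervalIntegral.integral_add_adjacent_intervals
        (by apply Continuous.intervalIntegrable; fun_prop)
        (by apply Continuous.intervalIntegrable; fun_prop)
    have hrefl : (∫ u in (π/2)..π, (π - u) * Real.cos u ^ p)
        = ∫ x in (0:ℝ)..(π/2), (π - (π - x)) * Real.cos (π - x) ^ p := by
      rw [intervalIntegral.integral_comp_sub_left (fun v => (π - v) * Real.cos v ^ p) π]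
      rw [show π - π/2 = π/2 by ring, sub_zero]
    have hrefl2 : (∫ x in (0:ℝ)..(π/2), (π - (π - x)) * Real.cos (π - x) ^ p)
        = ∫ x in (0:ℝ)..(π/2), -(x * Real.cos x ^ p) := by
      congr 1; funext x
      rw [Real.cos_pi_sub, Odd.neg_pow ⟨m, by omega⟩]
      ring_nf
    rw [← hadd, hrefl, hrefl2, Bq]
    rw [← intervalIntegral.integral_add
      (by apply Continuous.intervalIntegrable; fun_prop)
      (by apply Continuous.intervalIntegrable; fun_prop)]
    congr 1; funext u
    ring
  rw [hBq]
  have h2 : ω^2 = Bq m / 2 := om_sq m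
  have hBpos := Bq_pos m
  rw [smul_eq_mul]
  field_simp
  nlinarith

lemma cq_pos (m : ℕ) : 0 < cq m := by
  apply intervalIntegral.intervalIntegral_pos_of_pos_on
  · apply Continuous.intervalIntegrable; fun_prop
  · intro x hx
    have h2 : 0 < Real.cos x := Real.cos_pos_of_mem_Ioo ⟨by linarith [hx.1, Real.pi_pos], hx.2⟩
    positivity
  · positivity

lemma sin_cos_int (m : ℕ) :
    (∫ u in (0:ℝ)..(π/2), Real.sin u * Real.cos u ^ (2*m+1)) = 1/(2*(m:ℝ)+2) := by
  set p := 2*m+1 with hp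
  have hF : ∀ u ∈ Set.uIcc (0:ℝ) (π/2),
      HasDerivAt (fun u => -(Real.cos u ^ (p+1)) / (p+1 : ℝ))
        (Real.sin u * Real.cos u ^ p) u := by
    intro u _
    have h1 : HasDerivAt (fun u => Real.cos u ^ (p+1))
        ((p+1 : ℕ) * Real.cos u ^ p * (-Real.sin u)) u := by
      simpa using (Real.hasDerivAt_cos u).fun_pow (p+1)
    have h2 := (h1.neg).div_const ((p:ℝ)+1)
    refine h2.congr_deriv ?_
    have : ((p:ℝ))+1 ≠ 0 := by positivity
    push_cast
    field_simp
  rw [intervalIntegral.integral_eq_sub_of_hasDerivAt hF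
    (by apply Continuous.intervalIntegrable; fun_prop)]
  rw [Real.cos_pi_div_two, Real.cos_zero]
  rw [zero_pow (by omega), one_pow]
  rw [hp]
  push_cast
  ring_nf

lemma u_cos_int_le (m : ℕ) :
    (∫ u in (0:ℝ)..(π/2), u * Real.cos u ^ (2*m+1)) ≤ (π/2) * (1/(2*(m:ℝ)+2)) := by
  have hmono : (∫ u in (0:ℝ)..(π/2), u * Real.cos u ^ (2*m+1))
      ≤ ∫ u in (0:ℝ)..(π/2), (π/2) * (Real.sin u * Real.cos u ^ (2*m+1)) := by
    apply intervalIntegral.integral_mono_on (by positivity)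
      (by apply Continuous.intervalIntegrable; fun_prop)
      (by apply Continuous.intervalIntegrable; fun_prop)
    intro u hu
    have hu1 : 0 ≤ u := hu.1
    have hu2 : u ≤ π/2 := hu.2
    have hsin := Real.mul_le_sin hu1 hu2
    have hcos : 0 ≤ Real.cos u := Real.cos_nonneg_of_mem_Icc ⟨by linarith, hu2⟩
    have hcp : 0 ≤ Real.cos u ^ (2*m+1) := by positivity
    have hup : u ≤ (π/2) * Real.sin u := by
      have hπ := Real.pi_pos
      calc u = (π/2) * (2/π * u) := by field_simp
        _ ≤ (π/2) * Real.sin u := by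
            apply mul_le_mul_of_nonneg_left hsin (by positivity)
    calc u * Real.cos u ^ (2*m+1) ≤ ((π/2) * Real.sin u) * Real.cos u ^ (2*m+1) :=
          mul_le_mul_of_nonneg_right hup hcp
      _ = (π/2) * (Real.sin u * Real.cos u ^ (2*m+1)) := by ring
  rw [intervalIntegral.integral_const_mul, sin_cos_int m] at hmono
  exact hmono

lemma Bq_ge (m : ℕ) : π * cq m - π * (1/(2*(m:ℝ)+2)) ≤ Bq m := by
  have hsplit : Bq m = π * cq m - 2 * ∫ u in (0:ℝ)..(π/2), u * Real.cos u ^ (2*m+1) := by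
    rw [Bq, cq, ← intervalIntegral.integral_const_mul, ← intervalIntegral.integral_const_mul,
      ← intervalIntegral.integral_sub
        (by apply Continuous.intervalIntegrable; fun_prop)
        (by apply Continuous.intervalIntegrable; fun_prop)]
    congr 1; funext u; ring
  rw [hsplit]
  have := u_cos_int_le m
  linarith

lemma cq_lower (m : ℕ) : 1/(2*Real.sqrt (2*(m:ℝ)+2)) ≤ cq m := by
  set s := Real.sqrt (2*(m:ℝ)+2) with hs
  have hs2 : s^2 = 2*(m:ℝ)+2 := Real.sq_sqrt (by positivity)
  have hspos : 0 < s := Real.sqrt_pos.mpr (by positivity)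
  have hsge : Real.sqrt 2 ≤ s := Real.sqrt_le_sqrt (by push_cast; linarith)
  have hs1 : 1 ≤ s := by
    nlinarith [Real.sq_sqrt (by norm_num : (2:ℝ) ≥ 0), Real.sqrt_nonneg 2]
  set δ := 1/s with hδ
  have hδpos : 0 < δ := by positivity
  have hδle : δ ≤ 1 := by rw [hδ]; rw [div_le_one hspos]; exact hs1
  have hδlt : δ ≤ π/2 := by nlinarith [Real.pi_gt_three]
  -- cos δ ^ p ≥ 1/2
  have hcosδ : 1 - δ^2/2 ≤ Real.cos δ := Real.one_sub_sq_div_two_le_cos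
  have hδsq : δ^2 = 1/(2*(m:ℝ)+2) := by
    rw [hδ, div_pow, one_pow, hs2]
  have h1 : (0:ℝ) ≤ 1 - δ^2/2 := by rw [hδsq]; nlinarith [Nat.cast_nonneg (α := ℝ) m]
  have hpow : (1 - δ^2/2)^(2*m+1) ≤ Real.cos δ ^ (2*m+1) :=
    pow_le_pow_left₀ h1 hcosδ _
  have hbern : 1 + (2*m+1 : ℕ) * (-(δ^2/2)) ≤ (1 + (-(δ^2/2)))^(2*m+1) := by
    apply one_add_mul_le_pow
    rw [hδsq]; nlinarith [Nat.cast_nonneg (α := ℝ) m]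
  have hhalf : (1:ℝ)/2 ≤ (1 - δ^2/2)^(2*m+1) := by
    have : 1 + (2*m+1 : ℕ) * (-(δ^2/2)) = 1 - (2*(m:ℝ)+1) * δ^2/2 := by push_cast; ring
    rw [this] at hbern
    have : 1 - (2*(m:ℝ)+1) * δ^2/2 ≥ 1/2 := by
      rw [hδsq]
      have hden : (0:ℝ) < 2*(m:ℝ)+2 := by positivity
      have h2 : (2*(m:ℝ)+1) * (1/(2*(m:ℝ)+2)) ≤ 1 := by
        rw [mul_one_div, div_le_one hden]; linarith
      linarith
    have heq : (1 + -(δ^2/2)) = 1 - δ^2/2 := by ring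
    rw [heq] at hbern
    linarith
  -- ∫₀^δ ≥ δ * cos δ ^ p ≥ δ/2
  have hsplit : cq m = (∫ u in (0:ℝ)..δ, Real.cos u ^ (2*m+1))
      + ∫ u in δ..(π/2), Real.cos u ^ (2*m+1) := by
    rw [cq, intervalIntegral.integral_add_adjacent_intervals
      (by apply Continuous.intervalIntegrable; fun_prop)
      (by apply Continuous.intervalIntegrable; fun_prop)]
  have htail : 0 ≤ ∫ u in δ..(π/2), Real.cos u ^ (2*m+1) := by
    apply intervalIntegral.integral_nonneg hδlt
    intro u hu
    have : 0 ≤ Real.cos u := Real.cos_nonneg_of_mem_Icc ⟨by linarith [hu.1], hu.2⟩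
    positivity
  have hhead : δ * (Real.cos δ ^ (2*m+1)) ≤ ∫ u in (0:ℝ)..δ, Real.cos u ^ (2*m+1) := by
    have hconst : (∫ u in (0:ℝ)..δ, Real.cos δ ^ (2*m+1)) = δ * Real.cos δ ^ (2*m+1) := by
      rw [intervalIntegral.integral_const, smul_eq_mul, sub_zero]
    rw [← hconst]
    apply intervalIntegral.integral_mono_on hδpos.le
      (by apply Continuous.intervalIntegrable; fun_prop)
      (by apply Continuous.intervalIntegrable; fun_prop)
    intro u hu
    have hcu : Real.cos δ ≤ Real.cos u := by
      apply Real.cos_le_cos_of_nonneg_of_le_pi hu.1 (by nlinarith [Real.pi_gt_three]) hu.2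
    have hc0 : 0 ≤ Real.cos δ := by linarith [hcosδ, h1]
    exact pow_le_pow_left₀ hc0 hcu _
  have : δ/2 ≤ δ * (Real.cos δ ^ (2*m+1)) := by
    have := le_trans hhalf hpow
    nlinarith
  have heq : 1/(2*s) = δ/2 := by rw [hδ]; ring
  rw [heq]
  calc δ/2 ≤ δ * (Real.cos δ ^ (2*m+1)) := this
    _ ≤ cq m := by rw [hsplit]; linarith [hhead, htail]

lemma Bq_ge_34 (m : ℕ) (hm : 31 ≤ m) : (3/4) * (π * cq m) ≤ Bq m := by
  have h1 := Bq_ge m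
  have h2 := cq_lower m
  set s := Real.sqrt (2*(m:ℝ)+2) with hs
  have hs2 : s^2 = 2*(m:ℝ)+2 := Real.sq_sqrt (by positivity)
  have hspos : 0 < s := Real.sqrt_pos.mpr (by positivity)
  have hm' : (31:ℝ) ≤ (m:ℝ) := by exact_mod_cast hm
  have hs8 : 8 ≤ s := by nlinarith
  have hπ := Real.pi_pos
  have h3 : 4/(2*(m:ℝ)+2) ≤ 1/(2*s) := by
    rw [← hs2, div_le_div_iff₀ (by positivity) (by positivity)]
    nlinarith
  have h4 : 1/(2*(m:ℝ)+2) ≤ cq m / 4 := by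
    have h5 := le_trans h3 h2
    have e : 4/(2*(m:ℝ)+2) = 4*(1/(2*(m:ℝ)+2)) := by ring
    rw [e] at h5
    linarith
  nlinarith

lemma cq_upper (m : ℕ) {δ : ℝ} (hδ0 : 0 < δ) (hδ1 : δ ≤ 1) :
    cq m ≤ δ + (5*π/2) / ((2*(m:ℝ)+1) * δ^2) := by
  have hπ := Real.pi_gt_three
  have hδπ : δ ≤ π/2 := by linarith
  set p := 2*m+1 with hp
  have hpR : ((p:ℕ):ℝ) = 2*(m:ℝ)+1 := by push_cast [hp]; ring
  -- cos δ ≤ 1 - δ²/5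
  have hub : Real.cos δ ≤ 1 - δ^2/5 := by
    have h := Real.cos_le_one_sub_mul_cos_sq (x := δ) (by rw [abs_of_pos hδ0]; linarith)
    have h25 : δ^2/5 ≤ 2/π^2 * δ^2 := by
      have hπ2 : π^2 ≤ 10 := by nlinarith [Real.pi_lt_d2]
      have : (1:ℝ)/5 ≤ 2/π^2 := by
        rw [div_le_div_iff₀ (by norm_num) (by positivity)]
        linarith
      nlinarith [sq_nonneg δ]
    linarith
  have hcosδ0 : 0 ≤ Real.cos δ := Real.cos_nonneg_of_mem_Icc ⟨by linarith, hδπ⟩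
  -- Bernoulli: (1 - δ²/5)^p ≤ 1/(1 + p δ²/5) ≤ 5/(p δ²)
  have hx0 : 0 ≤ δ^2/5 := by positivity
  have hx1 : δ^2/5 ≤ 1 := by nlinarith
  have hbern : (1 + δ^2/5)^p ≥ 1 + (p:ℝ) * (δ^2/5) := by
    have := one_add_mul_le_pow (a := δ^2/5) (by linarith) p
    linarith
  have hprod : (1 - δ^2/5)^p * (1 + δ^2/5)^p ≤ 1 := by
    rw [← mul_pow]
    have : (1 - δ^2/5) * (1 + δ^2/5) = 1 - (δ^2/5)^2 := by ring
    rw [this]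
    apply pow_le_one₀ (by nlinarith) (by nlinarith)
  have hpδ : (0:ℝ) < (p:ℝ) * (δ^2/5) := by
    have : (0:ℝ) < (p:ℝ) := by rw [hpR]; positivity
    positivity
  have hkey : (1 - δ^2/5)^p ≤ 5/((p:ℝ) * δ^2) := by
    have h1pos : (0:ℝ) < 1 + (p:ℝ) * (δ^2/5) := by linarith
    have h2 : (1 - δ^2/5)^p * (1 + (p:ℝ) * (δ^2/5)) ≤ 1 := by
      have hnn : (0:ℝ) ≤ (1 - δ^2/5)^p := pow_nonneg (by nlinarith) _
      calc (1 - δ^2/5)^p * (1 + (p:ℝ) * (δ^2/5))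
          ≤ (1 - δ^2/5)^p * (1 + δ^2/5)^p := by
            apply mul_le_mul_of_nonneg_left hbern hnn
        _ ≤ 1 := hprod
    rw [le_div_iff₀ (by positivity)]
    nlinarith
  -- split the integral
  have hsplit : cq m = (∫ u in (0:ℝ)..δ, Real.cos u ^ p)
      + ∫ u in δ..(π/2), Real.cos u ^ p := by
    rw [cq, intervalIntegral.integral_add_adjacent_intervals
      (by apply Continuous.intervalIntegrable; fun_prop)
      (by apply Continuous.intervalIntegrable; fun_prop)]
  have hhead : (∫ u in (0:ℝ)..δ, Real.cos u ^ p) ≤ δ := by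
    have hconst : (∫ u in (0:ℝ)..δ, (1:ℝ)) = δ := by simp
    have hmono : (∫ u in (0:ℝ)..δ, Real.cos u ^ p) ≤ ∫ u in (0:ℝ)..δ, (1:ℝ) := by
      apply intervalIntegral.integral_mono_on hδ0.le
        (by apply Continuous.intervalIntegrable; fun_prop)
        (by apply Continuous.intervalIntegrable; fun_prop)
      intro u hu
      have : 0 ≤ Real.cos u := Real.cos_nonneg_of_mem_Icc ⟨by linarith [hu.1], by linarith [hu.2]⟩
      exact pow_le_one₀ this (Real.cos_le_one u)
    rw [hconst] at hmono
    exact hmono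
  have htail : (∫ u in δ..(π/2), Real.cos u ^ p) ≤ (π/2) * (Real.cos δ ^ p) := by
    have hconst : (∫ u in δ..(π/2), Real.cos δ ^ p) = (π/2 - δ) * Real.cos δ ^ p := by
      rw [intervalIntegral.integral_const, smul_eq_mul]
    have hmono : (∫ u in δ..(π/2), Real.cos u ^ p) ≤ (π/2 - δ) * Real.cos δ ^ p := by
      rw [← hconst]
      apply intervalIntegral.integral_mono_on hδπ
        (by apply Continuous.intervalIntegrable; fun_prop)
        (by apply Continuous.intervalIntegrable; fun_prop)
      intro u hu
      have hcu0 : 0 ≤ Real.cos u := Real.cos_nonneg_of_mem_Icc ⟨by linarith [hu.1], hu.2⟩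
      have hcu : Real.cos u ≤ Real.cos δ :=
        Real.cos_le_cos_of_nonneg_of_le_pi hδ0.le (by linarith [hu.2]) hu.1
      exact pow_le_pow_left₀ hcu0 hcu _
    have hcp : 0 ≤ Real.cos δ ^ p := pow_nonneg hcosδ0 _
    nlinarith
  have hcosp : Real.cos δ ^ p ≤ 5/((p:ℝ) * δ^2) := by
    calc Real.cos δ ^ p ≤ (1 - δ^2/5)^p := pow_le_pow_left₀ hcosδ0 hub _
      _ ≤ 5/((p:ℝ) * δ^2) := hkey
  have hfinal : (π/2) * (Real.cos δ ^ p) ≤ (5*π/2) / ((2*(m:ℝ)+1) * δ^2) := by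
    rw [← hpR]
    have h5 : (π/2) * (5/((p:ℝ) * δ^2)) = (5*π/2) / ((p:ℝ) * δ^2) := by
      field_simp
    rw [← h5]
    apply mul_le_mul_of_nonneg_left hcosp (by positivity)
  rw [hsplit]
  linarith

lemma half_int (m : ℕ) :
    (∫ x in (0:ℝ)..(ell m/2), Real.cos (om m * x)^(2*m+1)) = cq m / om m := by
  have hω := om_pos m
  have h := intervalIntegral.integral_comp_mul_left (a := 0) (b := ell m/2)
    (fun u => Real.cos u ^ (2*m+1)) hω.ne'
  simp only [mul_zero] at h
  have h2 : om m * (ell m / 2) = π/2 := by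
    rw [mul_div_assoc', om_mul_ell]
  rw [h2] at h
  rw [h, ← cq, smul_eq_mul]
  ring

lemma gam_le_half (m : ℕ) : ∀ t, 0 ≤ t → t ≤ ell m / 2 → gam m t ≤ cq m / om m := by
  intro t ht0 ht2
  have hω := om_pos m
  have hsplit : (∫ x in (0:ℝ)..(ell m/2), Real.cos (om m * x)^(2*m+1))
      = gam m t + ∫ x in t..(ell m/2), Real.cos (om m * x)^(2*m+1) := by
    rw [gam_eq_integral, intervalIntegral.integral_add_adjacent_intervals
      (by apply Continuous.intervalIntegrable; fun_prop)
      (by apply Continuous.intervalIntegrable; fun_prop)]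
  have htail : 0 ≤ ∫ x in t..(ell m/2), Real.cos (om m * x)^(2*m+1) := by
    apply intervalIntegral.integral_nonneg ht2
    intro u hu
    have h1 : 0 ≤ om m * u := mul_nonneg hω.le (le_trans ht0 hu.1)
    have h2 : om m * u ≤ π/2 := by
      have : om m * u ≤ om m * (ell m / 2) := mul_le_mul_of_nonneg_left hu.2 hω.le
      rwa [mul_div_assoc', om_mul_ell] at this
    have : 0 ≤ Real.cos (om m * u) := Real.cos_nonneg_of_mem_Icc ⟨by linarith [Real.pi_pos], h2⟩
    positivity
  rw [half_int] at hsplit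
  linarith

lemma int_quarter_le (m : ℕ) :
    (∫ t in (0:ℝ)..(ell m/4), gam m t) ≤ π * cq m / (2 * Bq m) := by
  have hω := om_pos m
  have hl := ell_pos m
  have hcq := cq_pos m
  have hmono : (∫ t in (0:ℝ)..(ell m/4), gam m t)
      ≤ ∫ t in (0:ℝ)..(ell m/4), cq m / om m := by
    apply intervalIntegral.integral_mono_on (by linarith)
      (by apply Continuous.intervalIntegrable; exact (gam_smooth m).continuous)
      (by apply Continuous.intervalIntegrable; fun_prop)
    intro t ht
    exact gam_le_half m t ht.1 (by linarith [ht.2])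
  rw [intervalIntegral.integral_const, smul_eq_mul, sub_zero] at hmono
  have heq : ell m / 4 * (cq m / om m) = π * cq m / (4 * om m ^2) := by
    rw [ell]
    field_simp
  rw [heq, om_sq] at hmono
  calc (∫ t in (0:ℝ)..(ell m/4), gam m t) ≤ π * cq m / (4 * (Bq m / 2)) := hmono
    _ = π * cq m / (2 * Bq m) := by congr 1; ring

lemma cos_quarter_le (m : ℕ) (hm : 31 ≤ m) : Real.cos (π/4) ^ (2*m+1) ≤ 1/12 := by
  have h2 : Real.cos (π/4) = Real.sqrt 2 / 2 := Real.cos_pi_div_four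
  have hle : Real.cos (π/4) ≤ 3/4 := by
    rw [h2]
    nlinarith [Real.sq_sqrt (by norm_num : (0:ℝ) ≤ 2), Real.sqrt_nonneg 2]
  have h0 : (0:ℝ) ≤ Real.cos (π/4) := by
    rw [h2]; positivity
  calc Real.cos (π/4) ^ (2*m+1) ≤ (3/4 : ℝ)^(2*m+1) := pow_le_pow_left₀ h0 hle _
    _ ≤ (3/4 : ℝ)^9 := by
        apply pow_le_pow_of_le_one (by norm_num) (by norm_num) (by omega)
    _ ≤ 1/12 := by norm_num

lemma final_aux (C : ℝ) (hC : 0 < C) (m : ℕ) (hm31 : 31 ≤ m)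
    (hcqlt : cq m < 1/(16*C^2)) :
    ∃ ℓ : ℝ, ∃ γ : ℝ → ℝ, IsProfileFn ℓ γ ∧ IsNormalized ℓ γ ∧
      (∀ t ∈ Set.Ioo 0 ℓ, iteratedDeriv 2 γ t ≤ 0) ∧
      ∃ t ∈ Set.Ioo 0 ℓ, C * γ t < |Gam γ t + deriv γ t| := by
  have hπ := Real.pi_gt_three
  have hπ0 := Real.pi_pos
  have hωpos := om_pos m
  have hlpos := ell_pos m
  have hcq := cq_pos m
  have hBq := Bq_pos m
  have hB34 := Bq_ge_34 m hm31
  refine ⟨ell m, gam m, ⟨hlpos, gam_smooth m, gam_zero m, gam_ell m, gam_pos m,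
    gam_deriv_zero m, gam_deriv_ell m, gam_abs_deriv_lt m,
    gam_even_left m, gam_even_right m⟩, gam_normalized m, gam_second_deriv m, ?_⟩
  refine ⟨ell m / 4, ⟨by linarith, by linarith⟩, ?_⟩
  have hot : om m * (ell m / 4) = π/4 := by
    rw [mul_div_assoc', om_mul_ell]
  have hderiv : deriv (gam m) (ell m / 4) = Real.cos (π/4) ^ (2*m+1) := by
    rw [gam_deriv]
    simp only [hot]
  have hint := int_quarter_le m
  have hfrac : π * cq m / (2 * Bq m) ≤ 2/3 := by
    have h1 : (3/2) * (π * cq m) ≤ 2 * Bq m := by linarith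
    have h2 : π * cq m / (2 * Bq m) ≤ π * cq m / ((3/2) * (π * cq m)) := by
      apply div_le_div_of_nonneg_left (by positivity) (by positivity) h1
    have h3 : π * cq m / ((3/2) * (π * cq m)) = 2/3 := by
      rw [div_eq_iff (by positivity)]
      ring
    linarith
  have hcos := cos_quarter_le m hm31
  have hGam : Gam (gam m) (ell m / 4) + deriv (gam m) (ell m / 4) ≤ -(1/4) := by
    rw [hderiv]
    have : Gam (gam m) (ell m / 4) = -1 + ∫ t in (0:ℝ)..(ell m / 4), gam m t := rfl
    rw [this]
    linarith
  have habs : 1/4 ≤ |Gam (gam m) (ell m / 4) + deriv (gam m) (ell m / 4)| := by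
    have := neg_le_abs (Gam (gam m) (ell m / 4) + deriv (gam m) (ell m / 4))
    linarith
  have hg0 : 0 < gam m (ell m / 4) := gam_pos m _ ⟨by linarith, by linarith⟩
  have hgle : gam m (ell m / 4) ≤ cq m / om m :=
    gam_le_half m _ (by linarith) (by linarith)
  have hB2 : 2 * cq m ≤ Bq m := by nlinarith
  have hsq : (cq m / om m)^2 ≤ cq m := by
    rw [div_pow, om_sq]
    rw [div_le_iff₀ (by linarith)]
    nlinarith
  have hCg : C * gam m (ell m / 4) < 1/4 := by
    have hg2 : (gam m (ell m / 4))^2 < 1/(16*C^2) := by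
      have h4 : (gam m (ell m / 4))^2 ≤ (cq m / om m)^2 :=
        pow_le_pow_left₀ hg0.le hgle 2
      calc (gam m (ell m / 4))^2 ≤ cq m := le_trans h4 hsq
        _ < 1/(16*C^2) := hcqlt
    have hC2 : C^2 * (gam m (ell m / 4))^2 < 1/16 := by
      rw [lt_div_iff₀ (by positivity)] at hg2
      nlinarith [sq_nonneg C]
    nlinarith [mul_pos hC hg0]
  linarith

/-- For every `C > 0` there is a convex surface of revolution of total area `4π`
with `m_γ > C`. -/
theorem stmt_1 (C : ℝ) (hC : 0 < C) :
    ∃ ℓ : ℝ, ∃ γ : ℝ → ℝ, IsProfileFn ℓ γ ∧ IsNormalized ℓ γ ∧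
      (∀ t ∈ Set.Ioo 0 ℓ, iteratedDeriv 2 γ t ≤ 0) ∧
      ∃ t ∈ Set.Ioo 0 ℓ, C * γ t < |Gam γ t + deriv γ t| := by
  have hπ := Real.pi_gt_three
  have hπ0 := Real.pi_pos
  have hε0 : (0:ℝ) < min (1/(16*C^2)) 1 := lt_min (by positivity) one_pos
  obtain ⟨m, hm31, hcqlt⟩ : ∃ m : ℕ, 31 ≤ m ∧ cq m < min (1/(16*C^2)) 1 := by
    set ε : ℝ := min (1/(16*C^2)) 1 with hε
    have hε1 : ε ≤ 1 := min_le_right _ _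
    refine ⟨max 31 (Nat.ceil (20*π/ε^3) + 1), le_max_left _ _, ?_⟩
    set m : ℕ := max 31 (Nat.ceil (20*π/ε^3) + 1) with hm
    have hmbig : 20*π/ε^3 < (m:ℝ) := by
      have h1 : 20*π/ε^3 ≤ (Nat.ceil (20*π/ε^3) : ℝ) := Nat.le_ceil _
      have h2 : (Nat.ceil (20*π/ε^3) + 1 : ℕ) ≤ m := le_max_right _ _
      have h3 : ((Nat.ceil (20*π/ε^3) + 1 : ℕ) : ℝ) ≤ (m:ℝ) := by exact_mod_cast h2
      push_cast at h3
      linarith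
    have hup := cq_upper m (δ := ε/2) (by positivity) (by linarith)
    have hme : (m:ℝ) * ε^3 > 20*π := by
      rw [div_lt_iff₀ (by positivity)] at hmbig
      linarith
    have hbig : (2*(m:ℝ)+1) * ε^3 > 20*π := by
      nlinarith [pow_pos hε0 3, Nat.cast_nonneg (α := ℝ) m]
    have htail : (5*π/2) / ((2*(m:ℝ)+1) * (ε/2)^2) < ε/2 := by
      rw [div_lt_iff₀ (by positivity)]
      nlinarith
    linarith
  exact final_aux C hC m hm31 (lt_of_lt_of_le hcqlt (min_le_left _ _))
end

section
/- For every 0 < δ < π/2 and every ε > 0 there exist ℓ > δ and a normalized profile function γ on [0,ℓ] such that γ''(t) ≤ 0 for all t ∈ (0,ℓ) (convex surface) and γ'(δ) < ε. -/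
open Real intervalIntegral

/-- The odd polynomial `p(u) = ∫₀ᵘ (1-v²)^m dv`, written as an explicit sum. -/
noncomputable def cvxP (m : ℕ) (u : ℝ) : ℝ :=
  ∑ i ∈ Finset.range (m+1), ((m.choose i : ℝ) * (-1)^i * u^(2*i+1)/(2*i+1))

lemma cvxP_contDiff (m : ℕ) : ContDiff ℝ (⊤ : ℕ∞) (cvxP m) := by
  apply ContDiff.sum
  intro i _
  exact ContDiff.div_const (contDiff_const.mul (contDiff_id.pow _)) _

lemma cvxP_zero (m : ℕ) : cvxP m 0 = 0 := by
  simp [cvxP]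

lemma cvxP_odd (m : ℕ) (u : ℝ) : cvxP m (-u) = -(cvxP m u) := by
  unfold cvxP
  rw [← Finset.sum_neg_distrib]
  refine Finset.sum_congr rfl fun i _ => ?_
  rw [Odd.neg_pow (odd_two_mul_add_one i)]
  ring

lemma cvxP_hasDerivAt (m : ℕ) (u : ℝ) : HasDerivAt (cvxP m) ((1 - u^2)^m) u := by
  have key : ∑ i ∈ Finset.range (m+1), ((m.choose i : ℝ) * (-1)^i * u^(2*i)) = (1-u^2)^m := by
    have hb := add_pow (-u^2) (1:ℝ) m
    simp only [one_pow, mul_one] at hb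
    rw [show (1:ℝ) - u^2 = -u^2 + 1 by ring, hb]
    refine Finset.sum_congr rfl fun i _ => ?_
    rw [show (-u^2 : ℝ) = -(u^2) by ring, neg_pow, pow_mul]
    ring
  rw [← key]
  unfold cvxP
  apply HasDerivAt.fun_sum
  intro i _
  have h1 : HasDerivAt (fun u : ℝ => u^(2*i+1)) (((2*i+1 : ℕ) : ℝ) * u^(2*i)) u := by
    simpa using hasDerivAt_pow (2*i+1) u
  have h2 := (h1.const_mul ((m.choose i : ℝ) * (-1)^i)).div_const ((2:ℝ)*i+1)
  refine h2.congr_deriv ?_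
  have hne : ((2:ℝ)*i+1) ≠ 0 := by positivity
  field_simp
  push_cast
  ring

lemma cvxP_eq_integral (m : ℕ) (u : ℝ) : cvxP m u = ∫ v in (0:ℝ)..u, (1 - v^2)^m := by
  have hcont : Continuous (fun v : ℝ => (1 - v^2)^m) := by continuity
  rw [intervalIntegral.integral_eq_sub_of_hasDerivAt
      (fun x _ => cvxP_hasDerivAt m x) (hcont.intervalIntegrable _ _)]
  rw [cvxP_zero]; ring

lemma cvxP_nonneg (m : ℕ) {u : ℝ} (h0 : 0 ≤ u) (h1 : u ≤ 1) : 0 ≤ cvxP m u := by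
  rw [cvxP_eq_integral]
  apply intervalIntegral.integral_nonneg h0
  intro v hv
  exact pow_nonneg (by nlinarith [hv.1, hv.2]) m

lemma cvxP_pos (m : ℕ) {u : ℝ} (h0 : 0 < u) (h1 : u ≤ 1) : 0 < cvxP m u := by
  rw [cvxP_eq_integral]
  apply intervalIntegral_pos_of_pos_on
  · exact (by continuity : Continuous (fun v : ℝ => (1 - v^2)^m)).intervalIntegrable _ _
  · intro v hv
    have : v < 1 := lt_of_lt_of_le hv.2 h1
    have : (0:ℝ) < 1 - v^2 := by nlinarith [hv.1]
    positivity
  · exact h0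

lemma cvxP_mono (m : ℕ) {a b : ℝ} (ha : -1 ≤ a) (hab : a ≤ b) (hb : b ≤ 1) :
    cvxP m a ≤ cvxP m b := by
  rw [cvxP_eq_integral, cvxP_eq_integral]
  have hcont : Continuous (fun v : ℝ => (1 - v^2)^m) := by continuity
  rw [← intervalIntegral.integral_add_adjacent_intervals
      (hcont.intervalIntegrable 0 a) (hcont.intervalIntegrable a b)]
  have : 0 ≤ ∫ v in a..b, (1 - v^2)^m := by
    apply intervalIntegral.integral_nonneg hab
    intro v hv
    exact pow_nonneg (by nlinarith [hv.1, hv.2]) m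
  linarith

lemma one_sub_pow_le {q : ℝ} (h0 : 0 ≤ q) (h1 : q ≤ 1) (n : ℕ) : (1-q)^n ≤ 1/(1+n*q) := by
  have hpos : 0 < 1 + (n:ℝ)*q := by positivity
  have h2 : (1-q) ≤ 1/(1+q) := by
    rw [le_div_iff₀ (by linarith)]; nlinarith
  calc (1-q)^n ≤ (1/(1+q))^n := pow_le_pow_left₀ (by linarith) h2 n
    _ = 1/(1+q)^n := by rw [div_pow, one_pow]
    _ ≤ 1/(1+n*q) := by
        exact one_div_le_one_div_of_le hpos (one_add_mul_le_pow (by linarith) n)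

lemma cvxP_cont (m : ℕ) : Continuous (fun x : ℝ => cvxP m (Real.sin x)) :=
  (cvxP_contDiff m).continuous.comp Real.continuous_sin

lemma sin_mem_bounds {x : ℝ} (h0 : 0 ≤ x) (h1 : x ≤ Real.pi) :
    0 ≤ Real.sin x ∧ Real.sin x ≤ 1 :=
  ⟨Real.sin_nonneg_of_nonneg_of_le_pi h0 h1, Real.sin_le_one x⟩

lemma cvxP_one_le {m : ℕ} (hm : 512 ≤ m) : cvxP m 1 ≤ 1/4 := by
  have hmpos : (0:ℝ) < m := by positivity
  have hcont : Continuous (fun v : ℝ => (1 - v^2)^m) := by continuity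
  rw [cvxP_eq_integral, ← intervalIntegral.integral_add_adjacent_intervals
      (hcont.intervalIntegrable 0 (1/8)) (hcont.intervalIntegrable (1/8) 1)]
  have h1 : (∫ v in (0:ℝ)..(1/8), (1 - v^2)^m) ≤ 1/8 := by
    calc (∫ v in (0:ℝ)..(1/8), (1 - v^2)^m) ≤ ∫ _v in (0:ℝ)..(1/8), (1:ℝ) := by
          apply intervalIntegral.integral_mono_on (by norm_num)
            (hcont.intervalIntegrable _ _) (intervalIntegrable_const)
          intro v hv
          exact pow_le_one₀ (by nlinarith [hv.1, hv.2]) (by nlinarith [hv.1, hv.2])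
      _ = 1/8 := by simp
  have h2 : (∫ v in (1/8:ℝ)..1, (1 - v^2)^m) ≤ 1/8 := by
    have hb : ((63:ℝ)/64)^m ≤ 64/m := by
      have := one_sub_pow_le (q := 1/64) (by norm_num) (by norm_num) m
      have h64 : (1:ℝ) - 1/64 = 63/64 := by norm_num
      rw [h64] at this
      refine this.trans ?_
      rw [div_le_div_iff₀ (by positivity) hmpos]
      nlinarith
    calc (∫ v in (1/8:ℝ)..1, (1 - v^2)^m) ≤ ∫ _v in (1/8:ℝ)..1, ((63:ℝ)/64)^m := by
          apply intervalIntegral.integral_mono_on (by norm_num)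
            (hcont.intervalIntegrable _ _) (intervalIntegrable_const)
          intro v hv
          exact pow_le_pow_left₀ (by nlinarith [hv.1, hv.2]) (by nlinarith [hv.1, hv.2]) m
      _ = (7/8) * ((63:ℝ)/64)^m := by simp; ring
      _ ≤ (7/8) * (64/m) := by nlinarith [pow_nonneg (by norm_num : (0:ℝ) ≤ 63/64) m]
      _ ≤ 1/8 := by
          rw [mul_comm]
          rw [div_mul_eq_mul_div, div_le_div_iff₀ hmpos (by norm_num)]
          have : (512:ℝ) ≤ m := by exact_mod_cast hm
          nlinarith
  linarith

lemma J_high {m : ℕ} (hm : 512 ≤ m) :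
    (∫ x in (0:ℝ)..Real.pi, cvxP m (Real.sin x)) ≤ Real.pi/4 := by
  calc (∫ x in (0:ℝ)..Real.pi, cvxP m (Real.sin x)) ≤ ∫ _x in (0:ℝ)..Real.pi, cvxP m 1 := by
        apply intervalIntegral.integral_mono_on Real.pi_pos.le
          ((cvxP_cont m).intervalIntegrable _ _) (intervalIntegrable_const)
        intro x hx
        exact cvxP_mono m (by nlinarith [Real.neg_one_le_sin x]) (Real.sin_le_one x) le_rfl
    _ = Real.pi * cvxP m 1 := by simp [mul_comm]
    _ ≤ Real.pi/4 := by nlinarith [cvxP_one_le hm, Real.pi_pos]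

lemma sin_ge_on_middle {x : ℝ} (h1 : Real.pi/4 ≤ x) (h2 : x ≤ 3*Real.pi/4) :
    Real.sqrt 2 / 2 ≤ Real.sin x := by
  have hid : Real.sin x = Real.cos (x - Real.pi/2) := by
    rw [show x - Real.pi/2 = -(Real.pi/2 - x) by ring, Real.cos_neg, Real.cos_pi_div_two_sub]
  rw [hid, ← Real.cos_abs]
  have habs : |x - Real.pi/2| ≤ Real.pi/4 := by
    rw [abs_le]; constructor <;> linarith
  have := Real.cos_le_cos_of_nonneg_of_le_pi (abs_nonneg _)
    (by linarith [Real.pi_pos] : (Real.pi/4:ℝ) ≤ Real.pi) habs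
  calc Real.sqrt 2/2 = Real.cos (Real.pi/4) := (Real.cos_pi_div_four).symm
    _ ≤ Real.cos |x - Real.pi/2| := this

lemma cvxP_sqrt2_ge {m : ℕ} (hm : 2 ≤ m) :
    2/(3*Real.sqrt m) ≤ cvxP m (Real.sqrt 2 / 2) := by
  have hmpos : (0:ℝ) < m := by positivity
  have hs : 0 < Real.sqrt m := Real.sqrt_pos.mpr hmpos
  have hss : Real.sqrt m * Real.sqrt m = m := Real.mul_self_sqrt hmpos.le
  set u : ℝ := 1/Real.sqrt m with hu
  have hu0 : 0 < u := by positivity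
  have hu1 : u ≤ Real.sqrt 2 / 2 := by
    rw [hu, div_le_div_iff₀ hs (by norm_num)]
    have h2 : Real.sqrt 2 * Real.sqrt 2 = 2 := Real.mul_self_sqrt (by norm_num)
    have hms : Real.sqrt 2 ≤ Real.sqrt m := Real.sqrt_le_sqrt (by exact_mod_cast hm)
    nlinarith [Real.sqrt_nonneg 2]
  have hs2 : Real.sqrt 2 / 2 ≤ 1 := by
    nlinarith [Real.sq_sqrt (by norm_num : (0:ℝ) ≤ 2), Real.sqrt_nonneg 2]
  have hmono := cvxP_mono m (by linarith : (-1:ℝ) ≤ u) hu1 hs2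
  refine le_trans ?_ hmono
  -- cvxP m u ≥ ∫₀ᵘ (1 - m v²) = u - m u³/3 = (2/3) u
  have hcont : Continuous (fun v : ℝ => (1 - v^2)^m) := by continuity
  have hcont2 : Continuous (fun v : ℝ => 1 - (m:ℝ) * v^2) := by continuity
  have hlow : (∫ v in (0:ℝ)..u, (1 - (m:ℝ)*v^2)) ≤ ∫ v in (0:ℝ)..u, (1 - v^2)^m := by
    apply intervalIntegral.integral_mono_on hu0.le
      (hcont2.intervalIntegrable _ _) (hcont.intervalIntegrable _ _)
    intro v hv
    have := one_add_mul_le_pow (a := -v^2) (by nlinarith [hv.1, hv.2, hu1, hs2]) m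
    calc 1 - (m:ℝ)*v^2 = 1 + m * (-v^2) := by ring
      _ ≤ (1 + -v^2)^m := this
      _ = (1 - v^2)^m := by ring_nf
  have hval : (∫ v in (0:ℝ)..u, (1 - (m:ℝ)*v^2)) = u - (m:ℝ)*u^3/3 := by
    rw [intervalIntegral.integral_sub intervalIntegrable_const
        ((show Continuous (fun v : ℝ => (m:ℝ) * v^2) from continuous_const.mul (continuous_pow 2)).intervalIntegrable _ _)]
    rw [intervalIntegral.integral_const_mul, integral_pow]
    simp
    ring
  have hmu : (m:ℝ) * u^3 = u := by
    rw [hu]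
    field_simp
    nlinarith [hss]
  rw [cvxP_eq_integral]
  refine le_trans ?_ hlow
  rw [hval, hmu]
  have huu : u - u/3 = 2/(3*Real.sqrt m) := by rw [hu]; ring
  linarith

lemma J_low {m : ℕ} (hm : 2 ≤ m) :
    Real.pi/(3*Real.sqrt m) ≤ ∫ x in (0:ℝ)..Real.pi, cvxP m (Real.sin x) := by
  have hmpos : (0:ℝ) < m := by positivity
  have hs : 0 < Real.sqrt m := Real.sqrt_pos.mpr hmpos
  have hpi := Real.pi_pos
  have hint : ∀ a b : ℝ, IntervalIntegrable (fun x => cvxP m (Real.sin x)) MeasureTheory.volume a b :=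
    fun a b => (cvxP_cont m).intervalIntegrable a b
  have split1 : (∫ x in (0:ℝ)..Real.pi, cvxP m (Real.sin x))
      = (∫ x in (0:ℝ)..(Real.pi/4), cvxP m (Real.sin x))
      + (∫ x in (Real.pi/4)..(3*Real.pi/4), cvxP m (Real.sin x))
      + (∫ x in (3*Real.pi/4)..Real.pi, cvxP m (Real.sin x)) := by
    rw [intervalIntegral.integral_add_adjacent_intervals
        (hint _ _) (hint _ _), intervalIntegral.integral_add_adjacent_intervals
        (hint _ _) (hint _ _)]
  have hnonneg : ∀ a b : ℝ, 0 ≤ a → a ≤ b → b ≤ Real.pi →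
      0 ≤ ∫ x in a..b, cvxP m (Real.sin x) := by
    intro a b ha hab hb
    apply intervalIntegral.integral_nonneg hab
    intro x hx
    exact cvxP_nonneg m (Real.sin_nonneg_of_nonneg_of_le_pi (by linarith [hx.1]) (by linarith [hx.2]))
      (Real.sin_le_one x)
  have hmid : Real.pi/2 * (2/(3*Real.sqrt m)) ≤ ∫ x in (Real.pi/4)..(3*Real.pi/4), cvxP m (Real.sin x) := by
    calc Real.pi/2 * (2/(3*Real.sqrt m))
        = ∫ _x in (Real.pi/4)..(3*Real.pi/4), (2/(3*Real.sqrt m)) := by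
          simp
          ring
      _ ≤ ∫ x in (Real.pi/4)..(3*Real.pi/4), cvxP m (Real.sin x) := by
          apply intervalIntegral.integral_mono_on (by linarith)
            intervalIntegrable_const (hint _ _)
          intro x hx
          have hsin := sin_ge_on_middle hx.1 hx.2
          have hs2 : Real.sqrt 2 / 2 ≤ 1 := by
            nlinarith [Real.sq_sqrt (by norm_num : (0:ℝ) ≤ 2), Real.sqrt_nonneg 2]
          exact le_trans (cvxP_sqrt2_ge hm)
            (cvxP_mono m (by nlinarith [Real.sqrt_nonneg 2]) hsin (Real.sin_le_one x))
  have h1 := hnonneg 0 (Real.pi/4) le_rfl (by linarith) (by linarith)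
  have h3 := hnonneg (3*Real.pi/4) Real.pi (by linarith) (by linarith) le_rfl
  rw [split1]
  have : Real.pi/(3*Real.sqrt m) = Real.pi/2 * (2/(3*Real.sqrt m)) := by
    field_simp
  linarith [hmid]

set_option maxRecDepth 8000 in
set_option maxHeartbeats 1000000 in
/-- For every `0 < δ < π/2` and `ε > 0` there is a convex normalized profile function
with `γ'(δ) < ε`. -/
theorem stmt_2 (δ ε : ℝ) (hδ0 : 0 < δ) (hδ : δ < Real.pi / 2) (hε : 0 < ε) :
    ∃ ℓ : ℝ, δ < ℓ ∧ ∃ γ : ℝ → ℝ, IsProfileFn ℓ γ ∧ IsNormalized ℓ γ ∧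
      (∀ t ∈ Set.Ioo 0 ℓ, iteratedDeriv 2 γ t ≤ 0) ∧ deriv γ δ < ε := by
  classical
  have hπ := Real.pi_pos
  have hδ2 : (0:ℝ) < δ^2 := by positivity
  set m : ℕ := 512 + Nat.ceil ((12/(Real.pi*δ^2*ε))^2) + 2 with hm
  clear_value m
  have hm512 : 512 ≤ m := by omega
  have hm2 : 2 ≤ m := by omega
  have hmpos : (0:ℝ) < m := by positivity
  have hsqm : 0 < Real.sqrt m := Real.sqrt_pos.mpr hmpos
  have hmε : 12/(Real.pi*δ^2*ε) < Real.sqrt m := by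
    have h1 : ((12/(Real.pi*δ^2*ε))^2 : ℝ) < m := by
      have h0 : ((12/(Real.pi*δ^2*ε))^2 : ℝ) ≤ (Nat.ceil ((12/(Real.pi*δ^2*ε))^2) : ℝ) :=
        Nat.le_ceil _
      have hcast : ((512 + Nat.ceil ((12/(Real.pi*δ^2*ε))^2) + 2 : ℕ) : ℝ)
          = 512 + (Nat.ceil ((12/(Real.pi*δ^2*ε))^2) : ℝ) + 2 := by push_cast; ring
      rw [hm, hcast]
      linarith
    exact (Real.lt_sqrt (by positivity)).mpr h1
  set k : ℕ := 2*m+1 with hk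
  clear_value k
  set J : ℝ := ∫ x in (0:ℝ)..Real.pi, cvxP m (Real.sin x) with hJ
  have hJlow := J_low hm2
  have hJhigh := J_high hm512
  rw [← hJ] at hJlow hJhigh
  clear_value J
  have hJpos : 0 < J := lt_of_lt_of_le (by positivity) hJlow
  set ω : ℝ := Real.sqrt (J/2) with hω
  clear_value ω
  have hωpos : 0 < ω := by rw [hω]; exact Real.sqrt_pos.mpr (by linarith)
  have hω2 : ω^2 = J/2 := by rw [hω]; exact Real.sq_sqrt (by linarith)
  set ℓ : ℝ := Real.pi/ω with hℓ
  clear_value ℓ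
  have hℓpos : 0 < ℓ := by rw [hℓ]; positivity
  have hωℓ : ω * ℓ = Real.pi := by rw [hℓ]; field_simp
  set c : ℝ := 1/ω with hc
  clear_value c
  have hcω : c * ω = 1 := by rw [hc]; field_simp
  have hcpos : 0 < c := by rw [hc]; positivity
  have hωle : ω ≤ 2/Real.pi := by
    have hπ315 : Real.pi < 3.15 := Real.pi_lt_d2
    have h4 : J/2 ≤ (2/Real.pi)^2 := by
      rw [div_pow]
      rw [div_le_div_iff₀ two_pos (by positivity)]
      nlinarith [hJhigh, hπ]
    calc ω = Real.sqrt (J/2) := hω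
      _ ≤ Real.sqrt ((2/Real.pi)^2) := Real.sqrt_le_sqrt h4
      _ = 2/Real.pi := Real.sqrt_sq (by positivity)
  have hδℓ : δ < ℓ := by
    have hge : Real.pi^2/2 ≤ ℓ := by
      rw [hℓ, le_div_iff₀ hωpos]
      have he : Real.pi^2/2 * (2/Real.pi) = Real.pi := by field_simp
      nlinarith [mul_le_mul_of_nonneg_left hωle (by positivity : (0:ℝ) ≤ Real.pi^2/2), he]
    nlinarith [hπ, Real.pi_gt_three]
  set γ : ℝ → ℝ := fun t => c * cvxP m (Real.sin (ω*t)) with hγ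
  clear_value γ
  have hsmooth : ContDiff ℝ (⊤ : ℕ∞) γ := by
    rw [hγ]
    exact contDiff_const.mul ((cvxP_contDiff m).comp
      (Real.contDiff_sin.comp (contDiff_const.mul contDiff_id)))
  -- derivative of γ
  have hlin : ∀ t : ℝ, HasDerivAt (fun x : ℝ => ω*x) ω t := fun t => by
    simpa using (hasDerivAt_id t).const_mul ω
  have hd : ∀ t : ℝ, HasDerivAt γ (Real.cos (ω*t)^k) t := by
    intro t
    have h1 := (Real.hasDerivAt_sin (ω*t)).comp t (hlin t)
    have h2 := ((cvxP_hasDerivAt m (Real.sin (ω*t))).comp t h1).const_mul c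
    have hval : c * ((1 - Real.sin (ω*t)^2)^m * (Real.cos (ω*t)*ω)) = Real.cos (ω*t)^k := by
      rw [← Real.cos_sq', hk, hc]
      field_simp
      ring
    rw [hγ, ← hval]
    exact h2
  have hderiv : deriv γ = fun t => Real.cos (ω*t)^k := funext fun t => (hd t).deriv
  -- endpoint values
  have hzero_left : γ 0 = 0 := by
    rw [hγ]; simp [cvxP_zero]
  have hzero_right : γ ℓ = 0 := by
    rw [hγ]; simp only
    rw [hωℓ, Real.sin_pi, cvxP_zero, mul_zero]
  -- positivity
  have hpos : ∀ t ∈ Set.Ioo 0 ℓ, 0 < γ t := by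
    intro t ht
    have h1 : 0 < ω*t := mul_pos hωpos ht.1
    have h2 : ω*t < Real.pi := by
      rw [← hωℓ]; exact (mul_lt_mul_iff_right₀ hωpos).mpr ht.2
    have hsin := Real.sin_pos_of_pos_of_lt_pi h1 h2
    rw [hγ]
    exact mul_pos hcpos (cvxP_pos m hsin (Real.sin_le_one _))
  -- derivative at endpoints
  have hderiv_left : deriv γ 0 = 1 := by
    rw [hderiv]; simp
  have hderiv_right : deriv γ ℓ = -1 := by
    rw [hderiv]; simp only
    rw [hωℓ, Real.cos_pi, hk]
    exact Odd.neg_one_pow (odd_two_mul_add_one m)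
  -- |γ'| < 1 inside
  have habs : ∀ t ∈ Set.Ioo 0 ℓ, |deriv γ t| < 1 := by
    intro t ht
    rw [hderiv]
    have h1 : 0 < ω*t := mul_pos hωpos ht.1
    have h2 : ω*t < Real.pi := by
      rw [← hωℓ]; exact (mul_lt_mul_iff_right₀ hωpos).mpr ht.2
    have hlt1 : Real.cos (ω*t) < 1 := by
      have := Real.strictAntiOn_cos (Set.mem_Icc.mpr ⟨le_rfl, hπ.le⟩)
        (Set.mem_Icc.mpr ⟨h1.le, h2.le⟩) h1
      rwa [Real.cos_zero] at this
    have hgt1 : -1 < Real.cos (ω*t) := by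
      have := Real.strictAntiOn_cos (Set.mem_Icc.mpr ⟨h1.le, h2.le⟩)
        (Set.mem_Icc.mpr ⟨hπ.le, le_rfl⟩) h2
      rwa [Real.cos_pi] at this
    have habs1 : |Real.cos (ω*t)| < 1 := abs_lt.mpr ⟨hgt1, hlt1⟩
    calc |Real.cos (ω*t)^k| = |Real.cos (ω*t)|^k := abs_pow _ _
      _ < 1 := pow_lt_one₀ (abs_nonneg _) habs1 (by omega)
  -- odd symmetry
  have hodd : ∀ x, γ (-x) = -γ x := by
    intro x
    rw [hγ]; simp only
    rw [mul_neg, Real.sin_neg, cvxP_odd]; ring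
  have heven_left : ∀ n : ℕ, 1 ≤ n → iteratedDeriv (2 * n) γ 0 = 0 := by
    intro n _
    have h1 := iteratedDeriv_comp_neg (2*n) γ 0
    have h2 : (fun x => γ (-x)) = (fun x => -(γ x)) := funext hodd
    rw [h2, iteratedDeriv_fun_neg, neg_zero, Even.neg_one_pow (even_two_mul n), one_smul] at h1
    linarith
  have hshift : ∀ x, γ (x + ℓ) = -γ x := by
    intro x
    rw [hγ]; simp only
    rw [mul_add, hωℓ, Real.sin_add_pi, cvxP_odd]; ring
  have heven_right : ∀ n : ℕ, 1 ≤ n → iteratedDeriv (2 * n) γ ℓ = 0 := by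
    intro n hn
    have h1 := iteratedDeriv_comp_add_const (2*n) γ ℓ
    have h2 : (fun z => γ (z + ℓ)) = (fun z => -(γ z)) := funext hshift
    calc iteratedDeriv (2*n) γ ℓ = iteratedDeriv (2*n) (fun z => γ (z+ℓ)) 0 := by
          rw [h1]; simp
      _ = iteratedDeriv (2*n) (fun z => -(γ z)) 0 := by rw [h2]
      _ = -(iteratedDeriv (2*n) γ 0) := iteratedDeriv_neg _ _ _
      _ = 0 := by rw [heven_left n hn, neg_zero]
  -- normalization
  have hnorm : (∫ t in (0:ℝ)..ℓ, γ t) = 2 := by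
    have hJ2 : J = 2*ω^2 := by rw [hω2]; ring
    calc (∫ t in (0:ℝ)..ℓ, γ t)
        = ∫ t in (0:ℝ)..ℓ, c * cvxP m (Real.sin (ω*t)) := by rw [hγ]
      _ = c * ∫ t in (0:ℝ)..ℓ, cvxP m (Real.sin (ω*t)) :=
          intervalIntegral.integral_const_mul _ _
      _ = c * (ω⁻¹ • ∫ x in (ω*0)..(ω*ℓ), cvxP m (Real.sin x)) := by
          rw [intervalIntegral.integral_comp_mul_left (fun x => cvxP m (Real.sin x)) hωpos.ne']
      _ = c * (ω⁻¹ * J) := by rw [mul_zero, hωℓ, smul_eq_mul, ← hJ]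
      _ = 2 := by
          rw [hc, hJ2]; field_simp
  -- concavity
  have hconc : ∀ t ∈ Set.Ioo 0 ℓ, iteratedDeriv 2 γ t ≤ 0 := by
    intro t ht
    have h1 : 0 < ω*t := mul_pos hωpos ht.1
    have h2 : ω*t < Real.pi := by
      rw [← hωℓ]; exact (mul_lt_mul_iff_right₀ hωpos).mpr ht.2
    have h2eq : iteratedDeriv 2 γ = deriv (deriv γ) := by
      rw [show (2:ℕ) = 1+1 from rfl, iteratedDeriv_succ, iteratedDeriv_one]
    rw [h2eq, hderiv]
    have hcosd : HasDerivAt (fun s : ℝ => Real.cos (ω*s)) (-Real.sin (ω*t)*ω) t :=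
      (Real.hasDerivAt_cos (ω*t)).comp t (hlin t)
    have hp := hcosd.fun_pow k
    rw [hp.deriv]
    have hk1 : k - 1 = 2*m := by omega
    rw [hk1, pow_mul]
    have hsin : 0 ≤ Real.sin (ω*t) := Real.sin_nonneg_of_nonneg_of_le_pi h1.le h2.le
    have hnn : 0 ≤ (k:ℝ) * (Real.cos (ω*t)^2)^m := by positivity
    have hfin := mul_nonneg hnn (mul_nonneg hsin hωpos.le)
    have heq : (k:ℝ) * (Real.cos (ω*t)^2)^m * (-Real.sin (ω*t)*ω)
        = -(((k:ℝ) * (Real.cos (ω*t)^2)^m) * (Real.sin (ω*t)*ω)) := by ring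
    rw [heq]
    exact neg_nonpos.mpr hfin
  -- flatness at δ
  have hflat : deriv γ δ < ε := by
    rw [hderiv]; simp only
    set x₀ : ℝ := ω*δ with hx0
    have hx0pos : 0 < x₀ := mul_pos hωpos hδ0
    have hx01 : x₀ ≤ 1 := by
      have h1 : ω*δ ≤ (2/Real.pi)*(Real.pi/2) :=
        mul_le_mul hωle hδ.le hδ0.le (by positivity)
      have h2 : (2/Real.pi)*(Real.pi/2) = 1 := by field_simp
      rw [hx0]; linarith
    have hcos0 : 0 ≤ Real.cos x₀ :=
      Real.cos_nonneg_of_mem_Icc ⟨by linarith, by nlinarith [Real.pi_gt_three]⟩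
    have hcosb : Real.cos x₀ ≤ 1 - x₀^2/4 := by
      have hb := Real.cos_bound (x := x₀) (by rw [abs_of_pos hx0pos]; exact hx01)
      have h1 := (abs_le.mp hb).2
      rw [abs_of_pos hx0pos] at h1
      have hsq : x₀^2 ≤ 1 := by nlinarith
      have h4 : x₀^4 ≤ x₀^2 := by nlinarith [sq_nonneg x₀]
      linarith [sq_nonneg x₀]
    have hq : (0:ℝ) ≤ x₀^2/4 := by positivity
    have hq1 : x₀^2/4 ≤ 1 := by nlinarith
    have hchain : Real.cos x₀^k ≤ 1/(1+(k:ℝ)*(x₀^2/4)) :=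
      le_trans (pow_le_pow_left₀ hcos0 hcosb k) (one_sub_pow_le hq hq1 k)
    have hkx : Real.sqrt m * (Real.pi*δ^2)/3 ≤ (k:ℝ)*x₀^2 := by
      have hx2 : x₀^2 = (J/2)*δ^2 := by rw [hx0, mul_pow, hω2]
      have hkR : (k:ℝ) = 2*(m:ℝ)+1 := by rw [hk]; push_cast; ring
      have hss : Real.sqrt m * Real.sqrt m = (m:ℝ) := Real.mul_self_sqrt hmpos.le
      have hJs : Real.pi ≤ J * (3*Real.sqrt m) := by
        rw [div_le_iff₀ (by positivity)] at hJlow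
        exact hJlow
      rw [hx2, hkR]
      calc Real.sqrt m * (Real.pi*δ^2)/3
          ≤ Real.sqrt m * (J*(3*Real.sqrt m)*δ^2)/3 := by
            gcongr
        _ = (m:ℝ)*(J*δ^2) := by
            rw [show Real.sqrt m * (J*(3*Real.sqrt m)*δ^2)/3
              = (Real.sqrt m * Real.sqrt m)*(J*δ^2) by ring, hss]
        _ ≤ (2*(m:ℝ)+1)*(J/2*δ^2) := by
            have heq : (2*(m:ℝ)+1)*(J/2*δ^2) = (m:ℝ)*(J*δ^2) + (J*δ^2)/2 := by ring
            rw [heq]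
            linarith [mul_nonneg hJpos.le hδ2.le]
    have hε4 : 4/ε < Real.sqrt m * (Real.pi*δ^2)/3 := by
      rw [div_lt_iff₀ hε]
      rw [div_lt_iff₀ (by positivity)] at hmε
      have heq : Real.sqrt m*(Real.pi*δ^2)/3*ε = (Real.sqrt m*(Real.pi*δ^2*ε))/3 := by ring
      rw [heq]
      linarith
    have hfin : 1/(1+(k:ℝ)*(x₀^2/4)) < ε := by
      rw [div_lt_iff₀ (by positivity)]
      have h5 : 4 < ε*((k:ℝ)*x₀^2) := by
        rw [← div_lt_iff₀' hε]
        exact lt_of_lt_of_le hε4 hkx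
      have heq : ε*(1+(k:ℝ)*(x₀^2/4)) = ε + (ε*((k:ℝ)*x₀^2))/4 := by ring
      rw [heq]
      linarith
    exact lt_of_le_of_lt hchain hfin
  exact ⟨ℓ, hδℓ, γ, ⟨hℓpos, hsmooth, hzero_left, hzero_right, hpos, hderiv_left,
    hderiv_right, habs, heven_left, heven_right⟩, hnorm, hconc, hflat⟩
end

section
/- Let γ be a normalized profile function on [0,ℓ], let m > 0, and suppose that γ(t) − m²γ''(t) > 0 for all t ∈ (0,ℓ) (positive magnetic curvature K_m > 0). Then the equation m·γ'(t) = γ(t) has exactly one solution t⁺ ∈ (0,ℓ), and t⁺ is the unique maximizer on [0,ℓ] of the function t ↦ mγ(t) − Γ(t). Moreover, at any such critical point t₀ one has m·γ''(t₀) − γ'(t₀) < 0. -/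
open Set Filter Topology

/-- Under positive magnetic curvature `γ - m²γ'' > 0`, the equation `mγ' = γ` has exactly
one solution in `(0,ℓ)`, which is the unique maximizer of `Î⁺ = mγ - Γ`; moreover
`mγ'' - γ' < 0` at any such critical point. -/
theorem stmt_7 (ℓ : ℝ) (γ : ℝ → ℝ) (hγ : IsProfileFn ℓ γ) (hnorm : IsNormalized ℓ γ)
    (m : ℝ) (hm : 0 < m)
    (hK : ∀ t ∈ Set.Ioo 0 ℓ, 0 < γ t - m ^ 2 * iteratedDeriv 2 γ t) :
    (∃! t : ℝ, t ∈ Set.Ioo 0 ℓ ∧ m * deriv γ t = γ t) ∧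
    (∀ t₀ ∈ Set.Ioo 0 ℓ, m * deriv γ t₀ = γ t₀ →
      (∀ s ∈ Set.Icc 0 ℓ, s ≠ t₀ → m * γ s - Gam γ s < m * γ t₀ - Gam γ t₀) ∧
      m * iteratedDeriv 2 γ t₀ - deriv γ t₀ < 0) := by
  have hℓ := hγ.len_pos
  have hsm' : ContDiff ℝ ((⊤:ℕ∞) : WithTop ℕ∞) γ := hγ.smooth.of_le (by exact_mod_cast le_top)
  have hdiff : Differentiable ℝ γ := hsm'.differentiable (by simp)
  have hcd : ContDiff ℝ ((⊤:ℕ∞) : WithTop ℕ∞) (deriv γ) := (contDiff_infty_iff_deriv.mp hsm').2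
  have hdiff' : Differentiable ℝ (deriv γ) := hcd.differentiable (by simp)
  have h2 : ∀ t : ℝ, iteratedDeriv 2 γ t = deriv (deriv γ) t := by
    intro t; simp [iteratedDeriv_succ, iteratedDeriv_one]
  set g : ℝ → ℝ := fun t => m * deriv γ t - γ t with hgdef
  have hgc : Continuous g := (continuous_const.mul hcd.continuous).sub hdiff.continuous
  have hgd : ∀ t : ℝ, HasDerivAt g (m * iteratedDeriv 2 γ t - deriv γ t) t := by
    intro t
    rw [h2 t]
    exact (((hdiff' t).hasDerivAt).const_mul m).sub (hdiff t).hasDerivAt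
  have hg0 : g 0 = m := by simp [hgdef, hγ.deriv_left, hγ.zero_left]
  have hgl : g ℓ = -m := by simp [hgdef, hγ.deriv_right, hγ.zero_right]
  -- derivative of g is negative at every zero of g in (0,ℓ)
  have hcrit : ∀ t ∈ Set.Ioo 0 ℓ, g t = 0 → m * iteratedDeriv 2 γ t - deriv γ t < 0 := by
    intro t ht hgt
    have hK' := hK t ht
    have h1 : m * deriv γ t = γ t := by
      have : m * deriv γ t - γ t = 0 := hgt
      linarith
    nlinarith [hK t ht]
  -- local sign-change at a zero with negative derivative
  have hsign : ∀ c : ℝ, c ∈ Set.Ioo 0 ℓ → g c = 0 →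
      (∀ᶠ t in 𝓝[>] c, g t < 0) ∧ (∀ᶠ t in 𝓝[<] c, 0 < g t) := by
    intro c hc hgc0
    have hd : m * iteratedDeriv 2 γ c - deriv γ c < 0 := hcrit c hc hgc0
    have hslope : Tendsto (slope g c) (𝓝[≠] c) (𝓝 (m * iteratedDeriv 2 γ c - deriv γ c)) :=
      hasDerivAt_iff_tendsto_slope.mp (hgd c)
    have hev : ∀ᶠ t in 𝓝[≠] c, slope g c t < 0 := hslope.eventually (gt_mem_nhds hd)
    constructor
    · have h1 : ∀ᶠ t in 𝓝[>] c, slope g c t < 0 :=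
        hev.filter_mono (nhdsWithin_mono c fun x hx => ne_of_gt hx)
      have h2 : ∀ᶠ t in 𝓝[>] c, c < t := eventually_mem_nhdsWithin
      filter_upwards [h1, h2] with t hst hct
      have hslope_eq : slope g c t = g t / (t - c) := by
        rw [slope_def_field, hgc0, sub_zero]
      rw [hslope_eq] at hst
      rcases div_neg_iff.mp hst with ⟨_, h⟩ | ⟨h, _⟩
      · linarith
      · exact h
    · have h1 : ∀ᶠ t in 𝓝[<] c, slope g c t < 0 :=
        hev.filter_mono (nhdsWithin_mono c fun x hx => ne_of_lt hx)
      have h2 : ∀ᶠ t in 𝓝[<] c, t < c := eventually_mem_nhdsWithin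
      filter_upwards [h1, h2] with t hst hct
      have hslope_eq : slope g c t = g t / (t - c) := by
        rw [slope_def_field, hgc0, sub_zero]
      rw [hslope_eq] at hst
      rcases div_neg_iff.mp hst with ⟨h, hh⟩ | ⟨h, hh⟩
      · linarith
      · linarith
  -- no two zeros
  have hlt : ∀ t₁ t₂ : ℝ, t₁ ∈ Set.Ioo 0 ℓ → t₂ ∈ Set.Ioo 0 ℓ → g t₁ = 0 → g t₂ = 0 →
      ¬ t₁ < t₂ := by
    intro t₁ t₂ h1 h2 hz1 hz2 h12
    -- find x ∈ (t₁, t₂) with g x < 0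
    have hev : ∀ᶠ t in 𝓝[>] t₁, g t < 0 := (hsign t₁ h1 hz1).1
    have hIoo : ∀ᶠ t in 𝓝[>] t₁, t ∈ Set.Ioo t₁ t₂ :=
      eventually_of_mem (Ioo_mem_nhdsGT h12) fun x hx => hx
    obtain ⟨x, hgx, hx⟩ := (hev.and hIoo).exists
    -- the smallest zero of g in [x, t₂]
    set S : Set ℝ := Set.Icc x t₂ ∩ {t | g t = 0} with hSdef
    have hSne : S.Nonempty := ⟨t₂, ⟨hx.2.le, le_refl _⟩, hz2⟩
    have hSbdd : BddBelow S := BddBelow.mono Set.inter_subset_left bddBelow_Icc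
    have hScl : IsClosed S := isClosed_Icc.inter (isClosed_eq hgc continuous_const)
    set c := sInf S with hcdef
    have hcS : c ∈ S := hScl.csInf_mem hSne hSbdd
    have hgc0 : g c = 0 := hcS.2
    have hxc : x < c := lt_of_le_of_ne hcS.1.1 (by intro h; rw [← h] at hgc0; exact absurd hgc0 (ne_of_lt hgx))
    have hcmem : c ∈ Set.Ioo 0 ℓ := ⟨lt_trans h1.1 (lt_trans hx.1 hxc), lt_of_le_of_lt hcS.1.2 h2.2⟩
    -- g < 0 on [x, c)
    have hneg : ∀ t ∈ Set.Ico x c, g t < 0 := by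
      intro t ht
      by_contra hge
      push_neg at hge
      rcases eq_or_lt_of_le hge with heq | hgt
      · have : c ≤ t := csInf_le hSbdd ⟨⟨ht.1, le_trans ht.2.le hcS.1.2⟩, heq.symm⟩
        exact absurd ht.2 (not_lt.mpr this)
      · have hxt : x < t := by
          rcases eq_or_lt_of_le ht.1 with rfl | h
          · exact absurd hgt (not_lt.mpr hgx.le)
          · exact h
        have : (0:ℝ) ∈ Set.Ioo (g x) (g t) := ⟨hgx, hgt⟩
        obtain ⟨y, hy, hgy⟩ := intermediate_value_Ioo hxt.le hgc.continuousOn this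
        have : c ≤ y := csInf_le hSbdd ⟨⟨hy.1.le, le_trans (le_trans hy.2.le ht.2.le) hcS.1.2⟩, hgy⟩
        exact absurd (lt_of_lt_of_le (lt_of_lt_of_le hy.2 ht.2.le) this) (lt_irrefl _)
    -- but g > 0 just left of c : contradiction
    have hpos : ∀ᶠ t in 𝓝[<] c, 0 < g t := (hsign c hcmem hgc0).2
    have hIco : ∀ᶠ t in 𝓝[<] c, t ∈ Set.Ico x c :=
      eventually_of_mem (Ico_mem_nhdsLT hxc) fun t ht => ht
    obtain ⟨t, h₁, h₂⟩ := (hpos.and hIco).exists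
    exact absurd (hneg t h₂) (not_lt.mpr h₁.le)
  have huniq : ∀ t₁ ∈ Set.Ioo 0 ℓ, g t₁ = 0 → ∀ t₂ ∈ Set.Ioo 0 ℓ, g t₂ = 0 → t₁ = t₂ := by
    intro t₁ h1 hz1 t₂ h2 hz2
    rcases lt_trichotomy t₁ t₂ with h | h | h
    · exact absurd h (hlt t₁ t₂ h1 h2 hz1 hz2)
    · exact h
    · exact absurd h (hlt t₂ t₁ h2 h1 hz2 hz1)
  -- existence
  have hex : ∃ t ∈ Set.Ioo 0 ℓ, g t = 0 := by
    have h0 : (0:ℝ) ∈ Set.Ioo (g ℓ) (g 0) := by rw [hg0, hgl]; exact ⟨neg_lt_zero.mpr hm, hm⟩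
    obtain ⟨t, ht, hgt⟩ := intermediate_value_Ioo' hℓ.le hgc.continuousOn h0
    exact ⟨t, ht, hgt⟩
  obtain ⟨tp, htp, hgtp⟩ := hex
  have hiff : ∀ t : ℝ, (m * deriv γ t = γ t) ↔ g t = 0 := by
    intro t; constructor <;> intro h <;> simp only [hgdef] at * <;> linarith
  constructor
  · exact ⟨tp, ⟨htp, (hiff tp).mpr hgtp⟩, fun y hy => huniq y hy.1 ((hiff y).mp hy.2) tp htp hgtp⟩
  · intro t₀ ht₀ hcrit0
    have hgt₀ : g t₀ = 0 := (hiff t₀).mp hcrit0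
    refine ⟨?_, hcrit t₀ ht₀ hgt₀⟩
    -- sign of g on both sides of t₀
    have hgpos : ∀ s ∈ Set.Ico 0 t₀, 0 < g s := by
      intro s hs
      rcases eq_or_lt_of_le hs.1 with rfl | hs0
      · rw [hg0]; exact hm
      by_contra hle
      push_neg at hle
      rcases eq_or_lt_of_le hle with heq | hsneg
      · have heqt := huniq s ⟨hs0, lt_trans hs.2 ht₀.2⟩ heq t₀ ht₀ hgt₀
        rw [heqt] at hs; exact absurd hs.2 (lt_irrefl t₀)
      · have h0 : (0:ℝ) ∈ Set.Ioo (g s) (g 0) := by rw [hg0]; exact ⟨hsneg, hm⟩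
        obtain ⟨y, hy, hgy⟩ := intermediate_value_Ioo' hs0.le hgc.continuousOn h0
        have hy' : y ∈ Set.Ioo 0 ℓ := ⟨hy.1, lt_trans (lt_trans hy.2 hs.2) ht₀.2⟩
        have heqt := huniq y hy' hgy t₀ ht₀ hgt₀
        rw [heqt] at hy; exact absurd (lt_trans hy.2 hs.2) (lt_irrefl t₀)
    have hgneg : ∀ s ∈ Set.Ioc t₀ ℓ, g s < 0 := by
      intro s hs
      rcases eq_or_lt_of_le hs.2 with rfl | hsl
      · rw [hgl]; exact neg_lt_zero.mpr hm
      by_contra hle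
      push_neg at hle
      rcases eq_or_lt_of_le hle with heq | hspos
      · have heqt := huniq s ⟨lt_trans ht₀.1 hs.1, hsl⟩ heq.symm t₀ ht₀ hgt₀
        rw [heqt] at hs; exact absurd hs.1 (lt_irrefl t₀)
      · have h0 : (0:ℝ) ∈ Set.Ioo (g ℓ) (g s) := by rw [hgl]; exact ⟨neg_lt_zero.mpr hm, hspos⟩
        obtain ⟨y, hy, hgy⟩ := intermediate_value_Ioo' hsl.le hgc.continuousOn h0
        have hy' : y ∈ Set.Ioo 0 ℓ := ⟨lt_trans (lt_trans ht₀.1 hs.1) hy.1, hy.2⟩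
        have heqt := huniq y hy' hgy t₀ ht₀ hgt₀
        rw [heqt] at hy; exact absurd (lt_trans hs.1 hy.1) (lt_irrefl t₀)
    -- the functional I and its derivative
    set I : ℝ → ℝ := fun t => m * γ t - Gam γ t with hIdef
    have hI : ∀ t : ℝ, HasDerivAt I (g t) t := by
      intro t
      have hFTC : HasDerivAt (fun u => ∫ s in (0:ℝ)..u, γ s) (γ t) t :=
        intervalIntegral.integral_hasDerivAt_right
          (hdiff.continuous.intervalIntegrable 0 t)
          (hdiff.continuous.stronglyMeasurableAtFilter _ _)
          hdiff.continuous.continuousAt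
      have hGam : HasDerivAt (Gam γ) (γ t) t := by
        unfold Gam
        exact hFTC.const_add (-1)
      exact (((hdiff t).hasDerivAt).const_mul m).sub hGam
    have hIc : Continuous I := by
      have : Differentiable ℝ I := fun t => (hI t).differentiableAt
      exact this.continuous
    have hIderiv : ∀ t : ℝ, deriv I t = g t := fun t => (hI t).deriv
    have hmono : StrictMonoOn I (Set.Icc 0 t₀) := by
      apply strictMonoOn_of_deriv_pos (convex_Icc 0 t₀) hIc.continuousOn
      intro x hx
      rw [interior_Icc] at hx
      rw [hIderiv]
      exact hgpos x ⟨hx.1.le, hx.2⟩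
    have hanti : StrictAntiOn I (Set.Icc t₀ ℓ) := by
      apply strictAntiOn_of_deriv_neg (convex_Icc t₀ ℓ) hIc.continuousOn
      intro x hx
      rw [interior_Icc] at hx
      rw [hIderiv]
      exact hgneg x ⟨hx.1, hx.2.le⟩
    intro s hs hne
    rcases lt_or_gt_of_ne hne with h | h
    · exact hmono ⟨hs.1, h.le⟩ ⟨ht₀.1.le, le_refl _⟩ h
    · exact hanti ⟨le_refl _, ht₀.2.le⟩ ⟨h.le, hs.2⟩ h
end

section
/- Let γ be a normalized profile function on [0,ℓ], let t₀ ∈ (0,ℓ) with γ'(t₀) ≠ 0, and set m := γ(t₀)/|γ'(t₀)|. If γ(t) − m²γ''(t) > 0 for all t ∈ (0,ℓ) (positive magnetic curvature K_m > 0), then the action of the latitude periodic orbit at height t₀ is strictly positive: (γ(t₀)² − γ'(t₀)·Γ(t₀)) / γ'(t₀)² > 0. -/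
open Set

lemma strictAntiOn_exp_weight {a b m c : ℝ} (hm : 0 < m) {q q' : ℝ → ℝ}
    (hq : ∀ t, HasDerivAt q (q' t) t)
    (h : ∀ t ∈ Set.Ioo a b, c * q t + m * q' t < 0) :
    StrictAntiOn (fun t => Real.exp (c * t / m) * q t) (Set.Icc a b) := by
  have hF : ∀ t, HasDerivAt (fun t => Real.exp (c * t / m) * q t)
      (Real.exp (c * t / m) / m * (c * q t + m * q' t)) t := by
    intro t
    have h1 : HasDerivAt (fun t : ℝ => c * t / m) (c / m) t := by
      simpa using ((hasDerivAt_id t).const_mul c).div_const m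
    have h2 : HasDerivAt (fun t => Real.exp (c * t / m)) (Real.exp (c * t / m) * (c / m)) t :=
      h1.exp
    have : HasDerivAt (fun t => Real.exp (c * t / m) * q t)
        (Real.exp (c * t / m) * (c / m) * q t + Real.exp (c * t / m) * q' t) t := h2.mul (hq t)
    convert this using 1
    have hmm : m * m⁻¹ = 1 := mul_inv_cancel₀ hm.ne'
    linear_combination (Real.exp (c * t / m) * q' t) * hmm
  apply strictAntiOn_of_deriv_neg (convex_Icc a b)
  · exact fun t _ => ((hF t).differentiableAt).continuousAt.continuousWithinAt
  · intro t ht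
    rw [interior_Icc] at ht
    rw [(hF t).deriv]
    have : Real.exp (c * t / m) / m > 0 := by positivity
    nlinarith [h t ht]



/-- Under positive magnetic curvature at speed `m = γ(t₀)/|γ'(t₀)|`, the action of the
latitude periodic orbit at height `t₀` is strictly positive. -/
theorem stmt_8 (ℓ : ℝ) (γ : ℝ → ℝ) (hγ : IsProfileFn ℓ γ) (hnorm : IsNormalized ℓ γ)
    (t₀ : ℝ) (ht₀ : t₀ ∈ Set.Ioo 0 ℓ) (hd : deriv γ t₀ ≠ 0)
    (m : ℝ) (hmdef : m = γ t₀ / |deriv γ t₀|)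
    (hK : ∀ t ∈ Set.Ioo 0 ℓ, 0 < γ t - m ^ 2 * iteratedDeriv 2 γ t) :
    0 < ((γ t₀) ^ 2 - deriv γ t₀ * Gam γ t₀) / (deriv γ t₀) ^ 2 := by
  obtain ⟨ht0, htl⟩ := ht₀
  have hγc : Continuous γ := hγ.smooth.continuous
  have hsm : ContDiff ℝ (⊤:ℕ∞) γ := hγ.smooth.of_le (by simp)
  obtain ⟨hγdiff, hdγsmooth⟩ := contDiff_infty_iff_deriv.mp hsm
  obtain ⟨hdγdiff, _⟩ := contDiff_infty_iff_deriv.mp hdγsmooth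
  have hγ' : ∀ t, HasDerivAt γ (deriv γ t) t := fun t => (hγdiff t).hasDerivAt
  have hγ'' : ∀ t, HasDerivAt (deriv γ) (deriv (deriv γ) t) t := fun t => (hdγdiff t).hasDerivAt
  have hGam : ∀ t, HasDerivAt (Gam γ) (γ t) t := by
    intro t
    have h1 : HasDerivAt (fun u => ∫ s in (0:ℝ)..u, γ s) (γ t) t :=
      intervalIntegral.integral_hasDerivAt_right (hγc.intervalIntegrable 0 t)
        (hγc.stronglyMeasurableAtFilter _ _) hγc.continuousAt
    exact h1.const_add (-1)
  have hit2 : iteratedDeriv 2 γ = deriv (deriv γ) := by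
    rw [show (2:ℕ) = 1 + 1 from rfl, iteratedDeriv_succ, iteratedDeriv_one]
  have hK' : ∀ t ∈ Set.Ioo 0 ℓ, 0 < γ t - m ^ 2 * deriv (deriv γ) t := by
    intro t ht; have := hK t ht; rwa [hit2] at this
  have hγ₀ : 0 < γ t₀ := hγ.pos t₀ ⟨ht0, htl⟩
  have hGam0 : Gam γ 0 = -1 := by simp [Gam]
  have hGaml : Gam γ ℓ = 1 := by
    have h2 : (∫ t in (0:ℝ)..ℓ, γ t) = 2 := hnorm
    simp [Gam, h2]; norm_num
  have hd2 : (0:ℝ) < (deriv γ t₀) ^ 2 := by positivity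
  rcases hd.lt_or_gt with hneg | hpos
  · -- deriv γ t₀ < 0
    have habs : |deriv γ t₀| = -(deriv γ t₀) := abs_of_neg hneg
    have hm : 0 < m := by
      rw [hmdef, habs]; exact div_pos hγ₀ (by linarith)
    have hmd : m * deriv γ t₀ = -(γ t₀) := by
      rw [hmdef, habs, div_neg, neg_mul, div_mul_cancel₀ _ hd]
    set p : ℝ → ℝ := fun t => m * deriv γ t + γ t with hp
    have hp' : ∀ t, HasDerivAt p (m * deriv (deriv γ) t + deriv γ t) t :=
      fun t => ((hγ'' t).const_mul m).add (hγ' t)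
    have hanti := strictAntiOn_exp_weight (a := t₀) (b := ℓ) (c := -1) hm hp'
      (by
        intro t ht
        have hKt := hK' t ⟨lt_trans ht0 ht.1, ht.2⟩
        have hmm : m ^ 2 = m * m := sq m
        show -1 * (m * deriv γ t + γ t) + m * (m * deriv (deriv γ) t + deriv γ t) < 0
        nlinarith)
    have hpt₀ : p t₀ = 0 := by simp only [hp]; linarith
    have hpneg : ∀ t ∈ Set.Ioo t₀ ℓ, p t ≤ 0 := by
      intro t ht
      have h1 := hanti (left_mem_Icc.mpr (le_of_lt htl)) ⟨le_of_lt ht.1, le_of_lt ht.2⟩ ht.1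
      have h2 : Real.exp (-1 * t / m) * p t < Real.exp (-1 * t₀ / m) * p t₀ := h1
      rw [hpt₀, mul_zero] at h2
      have he := Real.exp_pos (-1 * t / m)
      by_contra hc
      push_neg at hc
      exact absurd h2 (not_lt.mpr (mul_pos he hc).le)
    -- k = m γ + Gam is antitone on [t₀, ℓ]
    have hk : ∀ t, HasDerivAt (fun t => m * γ t + Gam γ t) (p t) t :=
      fun t => ((hγ' t).const_mul m).add (hGam t)
    have hanti2 : AntitoneOn (fun t => m * γ t + Gam γ t) (Set.Icc t₀ ℓ) := by
      apply antitoneOn_of_deriv_nonpos (convex_Icc t₀ ℓ)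
      · exact fun t _ => ((hk t).differentiableAt).continuousAt.continuousWithinAt
      · exact fun t _ => ((hk t).differentiableAt).differentiableWithinAt
      · intro t ht
        rw [interior_Icc] at ht
        rw [(hk t).deriv]
        exact hpneg t ht
    have hkey : m * γ ℓ + Gam γ ℓ ≤ m * γ t₀ + Gam γ t₀ :=
      hanti2 (left_mem_Icc.mpr (le_of_lt htl)) (right_mem_Icc.mpr (le_of_lt htl)) (le_of_lt htl)
    rw [hγ.zero_right, hGaml] at hkey
    -- hkey : m * 0 + 1 ≤ m * γ t₀ + Gam γ t₀
    apply div_pos _ hd2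
    nlinarith [mul_le_mul_of_nonpos_left (by linarith : 1 - m * γ t₀ ≤ Gam γ t₀) (le_of_lt hneg)]
  · -- 0 < deriv γ t₀
    have habs : |deriv γ t₀| = deriv γ t₀ := abs_of_pos hpos
    have hm : 0 < m := by rw [hmdef, habs]; positivity
    have hmd : m * deriv γ t₀ = γ t₀ := by
      rw [hmdef, habs, div_mul_cancel₀ _ hd]
    set g : ℝ → ℝ := fun t => m * deriv γ t - γ t with hg
    have hg' : ∀ t, HasDerivAt g (m * deriv (deriv γ) t - deriv γ t) t :=
      fun t => ((hγ'' t).const_mul m).sub (hγ' t)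
    have hanti := strictAntiOn_exp_weight (a := 0) (b := t₀) (c := 1) hm hg'
      (by
        intro t ht
        have hKt := hK' t ⟨ht.1, lt_trans ht.2 htl⟩
        have hmm : m ^ 2 = m * m := sq m
        show 1 * (m * deriv γ t - γ t) + m * (m * deriv (deriv γ) t - deriv γ t) < 0
        nlinarith)
    have hgt₀ : g t₀ = 0 := by simp only [hg]; linarith
    have hgpos : ∀ t ∈ Set.Ioo 0 t₀, 0 ≤ g t := by
      intro t ht
      have h1 := hanti ⟨le_of_lt ht.1, le_of_lt ht.2⟩ (right_mem_Icc.mpr (le_of_lt ht0)) ht.2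
      have h2 : Real.exp (1 * t₀ / m) * g t₀ < Real.exp (1 * t / m) * g t := h1
      rw [hgt₀, mul_zero] at h2
      have he := Real.exp_pos (1 * t / m)
      by_contra hc
      push_neg at hc
      exact absurd h2 (not_lt.mpr (mul_neg_of_pos_of_neg he hc).le)
    have hk : ∀ t, HasDerivAt (fun t => m * γ t - Gam γ t) (g t) t :=
      fun t => ((hγ' t).const_mul m).sub (hGam t)
    have hmono : MonotoneOn (fun t => m * γ t - Gam γ t) (Set.Icc 0 t₀) := by
      apply monotoneOn_of_deriv_nonneg (convex_Icc 0 t₀)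
      · exact fun t _ => ((hk t).differentiableAt).continuousAt.continuousWithinAt
      · exact fun t _ => ((hk t).differentiableAt).differentiableWithinAt
      · intro t ht
        rw [interior_Icc] at ht
        rw [(hk t).deriv]
        exact hgpos t ht
    have hkey : m * γ 0 - Gam γ 0 ≤ m * γ t₀ - Gam γ t₀ :=
      hmono (left_mem_Icc.mpr (le_of_lt ht0)) (right_mem_Icc.mpr (le_of_lt ht0)) (le_of_lt ht0)
    rw [hγ.zero_left, hGam0] at hkey
    -- hkey : m * 0 - (-1) ≤ m * γ t₀ - Gam γ t₀
    apply div_pos _ hd2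
    nlinarith [mul_le_mul_of_nonneg_left (by linarith : Gam γ t₀ ≤ m * γ t₀ - 1) (le_of_lt hpos)]
end

section
/- There exist ℓ > 0, a normalized profile function γ on [0,ℓ], and a point t₀ ∈ (0,ℓ) with γ'(t₀) ≠ 0 such that γ(t₀)² − γ'(t₀)·Γ(t₀) < 0; that is, the latitude periodic orbit of the magnetic flow at height t₀ has strictly negative action, so the corresponding energy level of the magnetic system (S²_γ, g_γ, μ_γ) is not of contact type. -/
set_option maxHeartbeats 1000000


/- ## Auxiliary construction: `γ(t) = (7/16) sin(t/2) + (5/16) sin(5t/2)` on `[0, 2π]`. -/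

noncomputable def mgam : ℝ → ℝ := fun t => 7/16 * Real.sin ((1/2)*t) + 5/16 * Real.sin ((5/2)*t)

noncomputable def mdgam : ℝ → ℝ := fun t => 7/32 * Real.cos ((1/2)*t) + 25/32 * Real.cos ((5/2)*t)

noncomputable def mG : ℝ → ℝ := fun t => 1 - 7/8 * Real.cos ((1/2)*t) - 1/8 * Real.cos ((5/2)*t)

lemma hsin_aux (A k t : ℝ) : HasDerivAt (fun t => A * Real.sin (k*t)) (A*k*Real.cos (k*t)) t := by
  have h := (((hasDerivAt_id t).const_mul k).sin).const_mul A
  simp only [id_eq, mul_one] at h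
  exact h.congr_deriv (by ring)

lemma hcos_aux (A k t : ℝ) : HasDerivAt (fun t => A * Real.cos (k*t)) (-(A*k)*Real.sin (k*t)) t := by
  have h := (((hasDerivAt_id t).const_mul k).cos).const_mul A
  simp only [id_eq, mul_one] at h
  exact h.congr_deriv (by ring)

lemma mgam_hasDeriv (t : ℝ) : HasDerivAt mgam (mdgam t) t := by
  have h := (hsin_aux (7/16) (1/2) t).add (hsin_aux (5/16) (5/2) t)
  exact h.congr_deriv (by unfold mdgam; ring)

lemma deriv_mgam : deriv mgam = mdgam := funext fun t => (mgam_hasDeriv t).deriv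

lemma mG_hasDeriv (t : ℝ) : HasDerivAt mG (mgam t) t := by
  have h := ((hasDerivAt_const t (1:ℝ)).sub (hcos_aux (7/8) (1/2) t)).sub (hcos_aux (1/8) (5/2) t)
  exact h.congr_deriv (by unfold mgam; ring)

lemma mgam_cont : Continuous mgam := by
  unfold mgam; fun_prop

lemma mgam_integral (t : ℝ) : (∫ s in (0:ℝ)..t, mgam s) = mG t - mG 0 := by
  exact intervalIntegral.integral_eq_sub_of_hasDerivAt (fun x _ => mG_hasDeriv x)
    (mgam_cont.intervalIntegrable 0 t)

lemma sin5_eq (x : ℝ) : Real.sin (5*x) = Real.sin x * (16*(Real.cos x)^4 - 12*(Real.cos x)^2 + 1) := by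
  rw [show (5:ℝ)*x = 2*x + 3*x by ring, Real.sin_add, Real.sin_two_mul, Real.cos_two_mul,
    Real.sin_three_mul, Real.cos_three_mul]
  linear_combination (-4*Real.sin x*(2*(Real.cos x)^2-1)) * (Real.sin_sq_add_cos_sq x)

lemma cos5_eq (x : ℝ) : Real.cos (5*x) = 16*(Real.cos x)^5 - 20*(Real.cos x)^3 + 5*Real.cos x := by
  rw [show (5:ℝ)*x = 2*x + 3*x by ring, Real.cos_add, Real.sin_two_mul, Real.cos_two_mul,
    Real.sin_three_mul, Real.cos_three_mul]
  linear_combination (Real.cos x*(8*(Real.sin x)^2 + 2 - 8*(Real.cos x)^2)) * (Real.sin_sq_add_cos_sq x)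

lemma deriv2_sum (A B : ℝ) :
    deriv (deriv (fun t => A * Real.sin ((1/2:ℝ)*t) + B * Real.sin ((5/2:ℝ)*t))) =
    fun t => (-(1/4)*A) * Real.sin ((1/2)*t) + (-(25/4)*B) * Real.sin ((5/2)*t) := by
  have d1 : deriv (fun t => A * Real.sin ((1/2:ℝ)*t) + B * Real.sin ((5/2:ℝ)*t)) =
      fun t => (A*(1/2)) * Real.cos ((1/2)*t) + (B*(5/2)) * Real.cos ((5/2)*t) := by
    funext t
    have h := ((hsin_aux A (1/2) t).add (hsin_aux B (5/2) t)).deriv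
    exact h
  rw [d1]
  funext t
  have h := ((hcos_aux (A*(1/2)) (1/2) t).add (hcos_aux (B*(5/2)) (5/2) t)).deriv
  exact h.trans (by ring)

lemma mgam_iter_even (n : ℕ) : iteratedDeriv (2*n) mgam =
    fun t => ((-1:ℝ)^n*(1/4)^n*(7/16)) * Real.sin ((1/2)*t)
      + ((-1:ℝ)^n*(25/4)^n*(5/16)) * Real.sin ((5/2)*t) := by
  induction n with
  | zero =>
    funext t
    norm_num [mgam]
  | succ n ih =>
    rw [show 2*(n+1) = 2*n+1+1 by ring, iteratedDeriv_succ, iteratedDeriv_succ, ih, deriv2_sum]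
    funext t
    ring

/-- There is a normalized profile function and a latitude whose periodic orbit has strictly
negative action, so the corresponding energy level is not of contact type. -/
theorem stmt_9 :
    ∃ ℓ : ℝ, ∃ γ : ℝ → ℝ, ∃ t₀ : ℝ, IsProfileFn ℓ γ ∧ IsNormalized ℓ γ ∧
      t₀ ∈ Set.Ioo 0 ℓ ∧ deriv γ t₀ ≠ 0 ∧
      (γ t₀) ^ 2 - deriv γ t₀ * Gam γ t₀ < 0 := by
  have pi_pos := Real.pi_pos
  have s3 : Real.sqrt 3 ^ 2 = 3 := Real.sq_sqrt (by norm_num)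
  have s3pos : 0 < Real.sqrt 3 := Real.sqrt_pos.2 (by norm_num)
  -- values at t₀ = π/3
  have e16 : (1/2:ℝ)*(Real.pi/3) = Real.pi/6 := by ring
  have e56 : (5/2:ℝ)*(Real.pi/3) = Real.pi - Real.pi/6 := by ring
  have hsin56 : Real.sin ((5/2:ℝ)*(Real.pi/3)) = 1/2 := by
    rw [e56, Real.sin_pi_sub, Real.sin_pi_div_six]
  have hcos56 : Real.cos ((5/2:ℝ)*(Real.pi/3)) = -(Real.sqrt 3/2) := by
    rw [e56, Real.cos_pi_sub, Real.cos_pi_div_six]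
  have hval : mgam (Real.pi/3) = 3/8 := by
    unfold mgam
    rw [e16, hsin56, Real.sin_pi_div_six]; norm_num
  have hder : deriv mgam (Real.pi/3) = 7/32 * (Real.sqrt 3/2) + 25/32 * (-(Real.sqrt 3/2)) := by
    rw [deriv_mgam]; unfold mdgam
    rw [e16, hcos56, Real.cos_pi_div_six]
  have hG0 : mG 0 = 0 := by unfold mG; norm_num
  have hGam : Gam mgam (Real.pi/3) = -1 + (mG (Real.pi/3) - mG 0) := by
    unfold Gam; rw [mgam_integral]
  have hGamval : Gam mgam (Real.pi/3) = -(3*Real.sqrt 3/8) := by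
    rw [hGam, hG0]; unfold mG
    rw [e16, hcos56, Real.cos_pi_div_six]; ring
  -- values at 2π
  have e1pi : (1/2:ℝ)*(2*Real.pi) = Real.pi := by ring
  have e5pi : (5/2:ℝ)*(2*Real.pi) = Real.pi + 2*Real.pi + 2*Real.pi := by ring
  have hcos5pi : Real.cos ((5/2:ℝ)*(2*Real.pi)) = -1 := by
    rw [e5pi, Real.cos_add_two_pi, Real.cos_add_two_pi, Real.cos_pi]
  have hsin5pi : Real.sin ((5/2:ℝ)*(2*Real.pi)) = 0 := by
    rw [e5pi, Real.sin_add_two_pi, Real.sin_add_two_pi, Real.sin_pi]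
  refine ⟨2*Real.pi, mgam, Real.pi/3, ?_, ?_, ?_, ?_, ?_⟩
  · constructor
    · linarith
    · unfold mgam
      exact (contDiff_const.mul (Real.contDiff_sin.comp (contDiff_const.mul contDiff_id))).add
        (contDiff_const.mul (Real.contDiff_sin.comp (contDiff_const.mul contDiff_id)))
    · unfold mgam; norm_num
    · unfold mgam; rw [e1pi, hsin5pi, Real.sin_pi]; norm_num
    · rintro t ⟨ht0, ht2⟩
      have hx0 : 0 < (1/2)*t := by linarith
      have hxpi : (1/2)*t < Real.pi := by linarith
      have hs : 0 < Real.sin ((1/2)*t) := Real.sin_pos_of_pos_of_lt_pi hx0 hxpi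
      have h5 : (5/2:ℝ)*t = 5*((1/2)*t) := by ring
      unfold mgam
      rw [h5, sin5_eq]
      set c := Real.cos ((1/2)*t)
      have hpoly : (0:ℝ) < 80*c^4 - 60*c^2 + 12 := by nlinarith [sq_nonneg (4*c^2 - 3/2)]
      nlinarith [mul_pos hs hpoly]
    · rw [deriv_mgam]; unfold mdgam; norm_num
    · rw [deriv_mgam]; unfold mdgam; rw [e1pi, hcos5pi, Real.cos_pi]; norm_num
    · rintro t ⟨ht0, ht2⟩
      have hx0 : 0 < (1/2)*t := by linarith
      have hxpi : (1/2)*t < Real.pi := by linarith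
      have hc1 : Real.cos ((1/2)*t) < 1 := by
        have := Real.cos_lt_cos_of_nonneg_of_le_pi (le_refl 0) (le_of_lt hxpi) hx0
        rwa [Real.cos_zero] at this
      have hc2 : -1 < Real.cos ((1/2)*t) := by
        have := Real.cos_lt_cos_of_nonneg_of_le_pi (le_of_lt hx0) (le_refl Real.pi) hxpi
        rwa [Real.cos_pi] at this
      have h5 : (5/2:ℝ)*t = 5*((1/2)*t) := by ring
      rw [deriv_mgam]; unfold mdgam
      rw [h5, cos5_eq]
      set c := Real.cos ((1/2)*t)
      rw [abs_lt]
      constructor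
      · have hS : (0:ℝ) < 100*c^4 - 100*c^3 - 25*c^2 + 25*c + 8 := by
          nlinarith [sq_nonneg (10*c^2 - 5*c - 5/2)]
        nlinarith [mul_pos (show (0:ℝ) < 1 + c by linarith) hS]
      · have hS : (0:ℝ) < 100*c^4 + 100*c^3 - 25*c^2 - 25*c + 8 := by
          nlinarith [sq_nonneg (10*c^2 + 5*c - 5/2)]
        nlinarith [mul_pos (show (0:ℝ) < 1 - c by linarith) hS]
    · intro n _
      rw [mgam_iter_even]; simp
    · intro n _
      rw [mgam_iter_even]
      simp only [e1pi, hsin5pi, Real.sin_pi]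
      ring
  · unfold IsNormalized
    rw [mgam_integral, hG0]
    unfold mG
    rw [e1pi, hcos5pi, Real.cos_pi]; norm_num
  · constructor
    · positivity
    · linarith
  · rw [hder]
    intro h
    nlinarith [h]
  · rw [hval, hder, hGamval]
    nlinarith [s3]
end

section
/- For every ε ∈ (0,1) and every δ ∈ (0, π/2) there exist ℓ > δ and a normalized profile function γ on [0,ℓ] such that γ'(δ) < −ε. -/
open Real
set_option linter.unusedSectionVars false
set_option maxHeartbeats 1000000


noncomputable section
namespace Stmt10Proof

variable (ε δ : ℝ)

def D : ℝ := ε + Real.cos δ + (1 - ε) / 8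
def b : ℝ := (1 - ε) ^ 2 * Real.sin δ * Real.cos δ ^ 2 / 1000
def mu : ℝ := b ε δ * Real.sin δ ^ 2 / D ε δ
def Rp : ℝ := (1 - ε) * Real.sin δ ^ 2 * Real.cos δ / 8
def G (c : ℝ) : ℝ :=
  Real.arctan ((c - Real.cos δ) / mu ε δ) - Real.arctan ((c + Real.cos δ) / mu ε δ)
def Gd (c : ℝ) : ℝ :=
  mu ε δ / ((c - Real.cos δ) ^ 2 + mu ε δ ^ 2) -
    mu ε δ / ((c + Real.cos δ) ^ 2 + mu ε δ ^ 2)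
def Fa (a c : ℝ) : ℝ :=
  (c - a) * Real.arctan ((c - a) / mu ε δ) -
    (mu ε δ / 2) * Real.log (mu ε δ ^ 2 + (c - a) ^ 2)
def AG (c : ℝ) : ℝ := Fa ε δ (Real.cos δ) c - Fa ε δ (-Real.cos δ) c
def IG : ℝ := AG ε δ 1 - AG ε δ (-1)
def w : ℝ := 3 / 4 * b ε δ * (IG ε δ - 2 * G ε δ 1)
def P (c : ℝ) : ℝ := 1 + b ε δ * (G ε δ c - G ε δ 1) + w ε δ * (c ^ 2 - 1)
def Pd (c : ℝ) : ℝ := b ε δ * Gd ε δ c + 2 * w ε δ * c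
def hc (c : ℝ) : ℝ := c * P ε δ c - (1 - c ^ 2) * Pd ε δ c
def gam (t : ℝ) : ℝ := Real.sin t * P ε δ (Real.cos t)

variable {ε δ : ℝ} (hε0 : 0 < ε) (hε1 : ε < 1) (hδ0 : 0 < δ) (hδ : δ < Real.pi / 2)

section Basic
include hδ0 hδ

lemma c0_pos : 0 < Real.cos δ :=
  Real.cos_pos_of_mem_Ioo ⟨by nlinarith [Real.pi_pos], hδ⟩

lemma c0_lt_one : Real.cos δ < 1 := by
  have h := Real.cos_lt_cos_of_nonneg_of_le_pi (le_refl 0)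
    (by nlinarith [Real.pi_pos]) hδ0
  simpa using h

lemma s0_pos : 0 < Real.sin δ :=
  Real.sin_pos_of_pos_of_lt_pi hδ0 (by nlinarith [Real.pi_pos])

lemma s0_lt_one : Real.sin δ < 1 := by
  have h : Real.sin δ = Real.cos (Real.pi / 2 - δ) := (Real.cos_pi_div_two_sub δ).symm
  have h2 := Real.cos_lt_cos_of_nonneg_of_le_pi (le_refl 0)
    (by nlinarith [Real.pi_pos]) (by linarith : (0:ℝ) < Real.pi / 2 - δ)
  rw [h]; simpa using h2

lemma pyth : Real.sin δ ^ 2 + Real.cos δ ^ 2 = 1 := Real.sin_sq_add_cos_sq δ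

include hε0 hε1

lemma D_pos : 0 < D ε δ := by
  have := c0_pos hδ0 hδ; unfold D; nlinarith

lemma D_lb : (1 - ε) / 8 ≤ D ε δ := by
  have := c0_pos hδ0 hδ; unfold D; nlinarith

lemma D_lb' : ε + Real.cos δ ≤ D ε δ := by unfold D; nlinarith

lemma D_ub : D ε δ ≤ 17 / 8 := by
  have := c0_lt_one hδ0 hδ; unfold D; nlinarith

lemma b_pos : 0 < b ε δ := by
  have h1 := c0_pos hδ0 hδ; have h2 := s0_pos hδ0 hδ
  have h5 : 0 < 1 - ε := by linarith
  unfold b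
  have := mul_pos (mul_pos (pow_pos h5 2) h2) (pow_pos h1 2)
  linarith

lemma b_le : b ε δ ≤ (1 - ε) / 1000 := by
  have h1 := c0_pos hδ0 hδ; have h2 := c0_lt_one hδ0 hδ
  have h3 := s0_pos hδ0 hδ; have h4 : Real.sin δ ≤ 1 := Real.sin_le_one δ
  have h5 : 0 < 1 - ε := by linarith
  have key : (1 - ε) ^ 2 * Real.sin δ * Real.cos δ ^ 2 ≤ 1 - ε := by
    calc (1 - ε) ^ 2 * Real.sin δ * Real.cos δ ^ 2 ≤ (1 - ε) ^ 2 * 1 * 1 ^ 2 := by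
          gcongr <;> nlinarith
      _ ≤ 1 - ε := by nlinarith
  unfold b
  linarith

lemma mu_pos : 0 < mu ε δ := by
  have := b_pos hε0 hε1 hδ0 hδ; have := D_pos hε0 hε1 hδ0 hδ
  have := s0_pos hδ0 hδ; unfold mu; positivity

lemma mu_mul_D : mu ε δ * D ε δ = b ε δ * Real.sin δ ^ 2 := by
  have := D_pos hε0 hε1 hδ0 hδ; unfold mu; field_simp

end Basic

section Gfacts
include hε0 hε1 hδ0 hδ

lemma G_neg (c : ℝ) : G ε δ c < 0 := by
  have hmu := mu_pos hε0 hε1 hδ0 hδ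
  have hc0 := c0_pos hδ0 hδ
  have h : (c - Real.cos δ) / mu ε δ < (c + Real.cos δ) / mu ε δ :=
    (div_lt_div_iff_of_pos_right hmu).mpr (by linarith)
  have := Real.arctan_strictMono h
  unfold G; linarith

lemma G_gt (c : ℝ) : -Real.pi < G ε δ c := by
  have h1 := Real.neg_pi_div_two_lt_arctan ((c - Real.cos δ) / mu ε δ)
  have h2 := Real.arctan_lt_pi_div_two ((c + Real.cos δ) / mu ε δ)
  unfold G; linarith

lemma G_even (c : ℝ) : G ε δ (-c) = G ε δ c := by
  unfold G
  rw [show (-c - Real.cos δ) / mu ε δ = -((c + Real.cos δ) / mu ε δ) by ring,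
    show (-c + Real.cos δ) / mu ε δ = -((c - Real.cos δ) / mu ε δ) by ring,
    Real.arctan_neg, Real.arctan_neg]
  ring

lemma hasDerivAt_atan_aff (a x : ℝ) :
    HasDerivAt (fun c => Real.arctan ((c - a) / mu ε δ))
      (mu ε δ / ((x - a) ^ 2 + mu ε δ ^ 2)) x := by
  have hmu := mu_pos hε0 hε1 hδ0 hδ
  have h1 : HasDerivAt (fun c : ℝ => (c - a) / mu ε δ) (1 / mu ε δ) x := by
    simpa using ((hasDerivAt_id x).sub_const a).div_const (mu ε δ)
  have h2 := (Real.hasDerivAt_arctan ((x - a) / mu ε δ)).comp x h1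
  refine h2.congr_deriv ?_
  field_simp
  ring

lemma hasDerivAt_G (x : ℝ) : HasDerivAt (G ε δ) (Gd ε δ x) x := by
  have h1 := hasDerivAt_atan_aff hε0 hε1 hδ0 hδ (Real.cos δ) x
  have h2 := hasDerivAt_atan_aff hε0 hε1 hδ0 hδ (-Real.cos δ) x
  have h2' : HasDerivAt (fun c => Real.arctan ((c + Real.cos δ) / mu ε δ))
      (mu ε δ / ((x + Real.cos δ) ^ 2 + mu ε δ ^ 2)) x := by
    simpa [sub_neg_eq_add] using h2
  exact h1.sub h2'

lemma contG : Continuous (G ε δ) :=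
  continuous_iff_continuousAt.mpr fun x =>
    (hasDerivAt_G hε0 hε1 hδ0 hδ x).continuousAt

lemma Gd_nonneg {c : ℝ} (hcnn : 0 ≤ c) : 0 ≤ Gd ε δ c := by
  have hmu := mu_pos hε0 hε1 hδ0 hδ
  have hc0 := c0_pos hδ0 hδ
  have key : (c - Real.cos δ) ^ 2 ≤ (c + Real.cos δ) ^ 2 := by nlinarith
  have d1 : 0 < (c - Real.cos δ) ^ 2 + mu ε δ ^ 2 := by positivity
  have d2 : 0 < (c + Real.cos δ) ^ 2 + mu ε δ ^ 2 := by positivity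
  have : mu ε δ / ((c + Real.cos δ) ^ 2 + mu ε δ ^ 2) ≤
      mu ε δ / ((c - Real.cos δ) ^ 2 + mu ε δ ^ 2) := by
    apply div_le_div_of_nonneg_left (le_of_lt hmu) d1
    linarith
  unfold Gd; linarith

lemma Gd_le (c : ℝ) : Gd ε δ c ≤ mu ε δ / ((c - Real.cos δ) ^ 2 + mu ε δ ^ 2) := by
  have hmu := mu_pos hε0 hε1 hδ0 hδ
  have d2 : 0 < (c + Real.cos δ) ^ 2 + mu ε δ ^ 2 := by positivity
  have : 0 ≤ mu ε δ / ((c + Real.cos δ) ^ 2 + mu ε δ ^ 2) := by positivity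
  unfold Gd; linarith

lemma G_mono : MonotoneOn (G ε δ) (Set.Ici (0:ℝ)) := by
  apply monotoneOn_of_deriv_nonneg (convex_Ici 0)
    (contG hε0 hε1 hδ0 hδ).continuousOn
  · intro x hx
    exact (hasDerivAt_G hε0 hε1 hδ0 hδ x).differentiableAt.differentiableWithinAt
  · intro x hx
    rw [(hasDerivAt_G hε0 hε1 hδ0 hδ x).deriv]
    apply Gd_nonneg hε0 hε1 hδ0 hδ
    simp [interior_Ici] at hx
    exact le_of_lt hx

lemma G_le_G1 {c : ℝ} (h1 : -1 ≤ c) (h2 : c ≤ 1) : G ε δ c ≤ G ε δ 1 := by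
  rcases le_or_gt 0 c with h | h
  · exact G_mono hε0 hε1 hδ0 hδ (by simpa using h) (by simp) h2
  · rw [← G_even hε0 hε1 hδ0 hδ c]
    exact G_mono hε0 hε1 hδ0 hδ (by simp; linarith) (by simp) (by linarith)

end Gfacts

section Wfacts
include hε0 hε1 hδ0 hδ

lemma hasDerivAt_Fa (a x : ℝ) : HasDerivAt (Fa ε δ a)
    (Real.arctan ((x - a) / mu ε δ)) x := by
  have hmu := mu_pos hε0 hε1 hδ0 hδ
  have hpos : 0 < mu ε δ ^ 2 + (x - a) ^ 2 := by positivity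
  have h1 : HasDerivAt (fun c : ℝ => (c - a) * Real.arctan ((c - a) / mu ε δ))
      (1 * Real.arctan ((x - a) / mu ε δ) +
        (x - a) * (mu ε δ / ((x - a) ^ 2 + mu ε δ ^ 2))) x :=
    ((hasDerivAt_id x).sub_const a).mul (hasDerivAt_atan_aff hε0 hε1 hδ0 hδ a x)
  have h2 : HasDerivAt (fun c : ℝ => mu ε δ ^ 2 + (c - a) ^ 2) (2 * (x - a)) x := by
    simpa using (((hasDerivAt_id x).sub_const a).pow 2).const_add (mu ε δ ^ 2)
  have h3 : HasDerivAt (fun c : ℝ => (mu ε δ / 2) *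
      Real.log (mu ε δ ^ 2 + (c - a) ^ 2))
      ((mu ε δ / 2) * (2 * (x - a) / (mu ε δ ^ 2 + (x - a) ^ 2))) x :=
    (h2.log (ne_of_gt hpos)).const_mul (mu ε δ / 2)
  have := h1.sub h3
  refine this.congr_deriv ?_
  field_simp
  ring

lemma hasDerivAt_AG (x : ℝ) : HasDerivAt (AG ε δ) (G ε δ x) x := by
  have h1 := hasDerivAt_Fa hε0 hε1 hδ0 hδ (Real.cos δ) x
  have h2 := hasDerivAt_Fa hε0 hε1 hδ0 hδ (-Real.cos δ) x
  have h2' : HasDerivAt (Fa ε δ (-Real.cos δ))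
      (Real.arctan ((x + Real.cos δ) / mu ε δ)) x := by
    simpa [sub_neg_eq_add] using h2
  exact h1.sub h2'

lemma IG_eq : (∫ c in (-1:ℝ)..1, G ε δ c) = IG ε δ := by
  rw [show IG ε δ = AG ε δ 1 - AG ε δ (-1) from rfl]
  exact intervalIntegral.integral_eq_sub_of_hasDerivAt
    (fun x _ => hasDerivAt_AG hε0 hε1 hδ0 hδ x)
    ((contG hε0 hε1 hδ0 hδ).intervalIntegrable _ _)

lemma w_nonpos : w ε δ ≤ 0 := by
  have hb := b_pos hε0 hε1 hδ0 hδ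
  have key : IG ε δ - 2 * G ε δ 1 ≤ 0 := by
    rw [← IG_eq hε0 hε1 hδ0 hδ]
    have h2 : (∫ c in (-1:ℝ)..1, G ε δ c) ≤ ∫ c in (-1:ℝ)..1, G ε δ 1 := by
      apply intervalIntegral.integral_mono_on (by norm_num)
        ((contG hε0 hε1 hδ0 hδ).intervalIntegrable _ _)
        (intervalIntegrable_const)
      intro x hx
      exact G_le_G1 hε0 hε1 hδ0 hδ hx.1 hx.2
    simp only [intervalIntegral.integral_const] at h2
    norm_num at h2
    linarith
  unfold w; nlinarith

lemma w_lb : -(5 * b ε δ) ≤ w ε δ := by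
  have hb := b_pos hε0 hε1 hδ0 hδ
  have hπ := Real.pi_lt_d2
  have key : -(2 * Real.pi) ≤ IG ε δ - 2 * G ε δ 1 := by
    rw [← IG_eq hε0 hε1 hδ0 hδ]
    have h2 : (∫ c in (-1:ℝ)..1, (-Real.pi + G ε δ 1)) ≤ ∫ c in (-1:ℝ)..1, G ε δ c := by
      apply intervalIntegral.integral_mono_on (by norm_num)
        (intervalIntegrable_const)
        ((contG hε0 hε1 hδ0 hδ).intervalIntegrable _ _)
      intro x hx
      have h1 := G_gt hε0 hε1 hδ0 hδ x
      have h2 := G_neg hε0 hε1 hδ0 hδ (1 : ℝ)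
      linarith
    simp only [intervalIntegral.integral_const] at h2
    norm_num at h2
    linarith
  unfold w; nlinarith [Real.pi_pos]

end Wfacts

section Pfacts
include hε0 hε1 hδ0 hδ

lemma P_one : P ε δ 1 = 1 := by unfold P; ring

lemma P_neg_one : P ε δ (-1) = 1 := by
  have h := G_even hε0 hε1 hδ0 hδ 1
  unfold P
  rw [show (-1:ℝ)^2 - 1 = 0 by norm_num]
  rw [h]; ring

lemma P_lb {c : ℝ} (h1 : -1 ≤ c) (h2 : c ≤ 1) : 1 - Real.pi * b ε δ ≤ P ε δ c := by
  have hb := b_pos hε0 hε1 hδ0 hδ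
  have hw := w_nonpos hε0 hε1 hδ0 hδ
  have hG1 := G_gt hε0 hε1 hδ0 hδ c
  have hG2 := G_neg hε0 hε1 hδ0 hδ 1
  have hsq : c ^ 2 - 1 ≤ 0 := by nlinarith
  have t1 : b ε δ * (G ε δ c - G ε δ 1) ≥ b ε δ * (-Real.pi) := by
    apply mul_le_mul_of_nonneg_left _ (le_of_lt hb)
    linarith
  have t2 : 0 ≤ w ε δ * (c ^ 2 - 1) := by nlinarith
  unfold P; nlinarith

lemma P_pos {c : ℝ} (h1 : -1 ≤ c) (h2 : c ≤ 1) : 0 < P ε δ c := by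
  have h := P_lb hε0 hε1 hδ0 hδ h1 h2
  have hb := b_le hε0 hε1 hδ0 hδ
  have hb0 := b_pos hε0 hε1 hδ0 hδ
  have hπ := Real.pi_lt_d2
  nlinarith

lemma P_ub {c : ℝ} (h1 : -1 ≤ c) (h2 : c ≤ 1) : P ε δ c ≤ 1 + 5 * b ε δ := by
  have hb := b_pos hε0 hε1 hδ0 hδ
  have hw := w_lb hε0 hε1 hδ0 hδ
  have hw0 := w_nonpos hε0 hε1 hδ0 hδ
  have hG := G_le_G1 hε0 hε1 hδ0 hδ h1 h2
  have t1 : b ε δ * (G ε δ c - G ε δ 1) ≤ 0 := by nlinarith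
  have hsq : -1 ≤ c ^ 2 - 1 ∧ c ^ 2 - 1 ≤ 0 := ⟨by nlinarith, by nlinarith⟩
  have t2 : w ε δ * (c ^ 2 - 1) ≤ 5 * b ε δ := by nlinarith [hsq.1, hsq.2]
  unfold P; nlinarith

lemma hasDerivAt_P (x : ℝ) : HasDerivAt (P ε δ) (Pd ε δ x) x := by
  have h1 := hasDerivAt_G hε0 hε1 hδ0 hδ x
  have h2 : HasDerivAt (fun c : ℝ => c ^ 2 - 1) (2 * x) x := by
    simpa using ((hasDerivAt_id x).pow 2).sub_const 1
  have := (((h1.sub_const (G ε δ 1)).const_mul (b ε δ)).const_add 1).add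
    (h2.const_mul (w ε δ))
  have heq : b ε δ * Gd ε δ x + w ε δ * (2 * x) = Pd ε δ x := by unfold Pd; ring
  rw [← heq]
  exact this

lemma hasDerivAt_gam (t : ℝ) : HasDerivAt (gam ε δ) (hc ε δ (Real.cos t)) t := by
  have h1 : HasDerivAt (fun s : ℝ => P ε δ (Real.cos s))
      (Pd ε δ (Real.cos t) * -Real.sin t) t :=
    (hasDerivAt_P hε0 hε1 hδ0 hδ (Real.cos t)).comp t (Real.hasDerivAt_cos t)
  have h2 := (Real.hasDerivAt_sin t).mul h1
  have heq : Real.cos t * P ε δ (Real.cos t) +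
      Real.sin t * (Pd ε δ (Real.cos t) * -Real.sin t) = hc ε δ (Real.cos t) := by
    unfold hc
    have hs : Real.sin t ^ 2 = 1 - Real.cos t ^ 2 := Real.sin_sq t
    linear_combination (-(Pd ε δ (Real.cos t))) * hs
  rw [← heq]
  exact h2

lemma deriv_gam (t : ℝ) : deriv (gam ε δ) t = hc ε δ (Real.cos t) :=
  (hasDerivAt_gam hε0 hε1 hδ0 hδ t).deriv

lemma smooth_gam : ContDiff ℝ (⊤ : ℕ∞) (gam ε δ) := by
  have hmu := mu_pos hε0 hε1 hδ0 hδ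
  have harct : ∀ a : ℝ, ContDiff ℝ (⊤ : ℕ∞) (fun c : ℝ => Real.arctan ((c - a) / mu ε δ)) :=
    fun a => Real.contDiff_arctan.comp (((contDiff_id.sub contDiff_const).div_const _))
  have hG : ContDiff ℝ (⊤ : ℕ∞) (G ε δ) := by
    have h2 : ContDiff ℝ (⊤ : ℕ∞) (fun c : ℝ => Real.arctan ((c + Real.cos δ) / mu ε δ)) := by
      have := harct (-Real.cos δ)
      simpa [sub_neg_eq_add] using this
    exact (harct (Real.cos δ)).sub h2
  have hP : ContDiff ℝ (⊤ : ℕ∞) (P ε δ) := by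
    unfold P
    exact (contDiff_const.add (contDiff_const.mul (hG.sub contDiff_const))).add
      (contDiff_const.mul ((contDiff_id.pow 2).sub contDiff_const))
  exact Real.contDiff_sin.mul (hP.comp Real.contDiff_cos)

end Pfacts


section Battery
include hε0 hε1 hδ0 hδ

lemma Rp_pos : 0 < Rp ε δ := by
  have h1 := s0_pos hδ0 hδ; have h2 := c0_pos hδ0 hδ
  have h3 : 0 < 1 - ε := by linarith
  have : 0 < (1 - ε) * Real.sin δ ^ 2 * Real.cos δ :=
    mul_pos (mul_pos h3 (pow_pos h1 2)) h2
  unfold Rp; linarith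

lemma hc_expand (c : ℝ) : hc ε δ c =
    c + c * b ε δ * (G ε δ c - G ε δ 1) - 3 * w ε δ * c * (1 - c ^ 2) -
      (1 - c ^ 2) * (b ε δ * Gd ε δ c) := by
  unfold hc P Pd; ring

lemma hc_odd (c : ℝ) : hc ε δ (-c) = -hc ε δ c := by
  have hG : G ε δ (-c) = G ε δ c := G_even hε0 hε1 hδ0 hδ c
  have hGd : Gd ε δ (-c) = -Gd ε δ c := by
    unfold Gd
    rw [show (-c - Real.cos δ) ^ 2 = (c + Real.cos δ) ^ 2 by ring,
      show (-c + Real.cos δ) ^ 2 = (c - Real.cos δ) ^ 2 by ring]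
    ring
  unfold hc P Pd
  rw [hG, hGd, show (-c) ^ 2 = c ^ 2 by ring]
  ring

lemma hc_one : hc ε δ 1 = 1 := by
  have h := P_one hε0 hε1 hδ0 hδ
  unfold hc; rw [h]; ring

lemma hc_neg_one : hc ε δ (-1) = -1 := by
  rw [show (-1 : ℝ) = -(1:ℝ) from rfl, hc_odd hε0 hε1 hδ0 hδ,
    hc_one hε0 hε1 hδ0 hδ]

lemma hc_ub {c : ℝ} (h0 : 0 ≤ c) (h1 : c < 1) : hc ε δ c < 1 := by
  have hb := b_pos hε0 hε1 hδ0 hδ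
  have hble := b_le hε0 hε1 hδ0 hδ
  have hw0 := w_nonpos hε0 hε1 hδ0 hδ
  have hw1 := w_lb hε0 hε1 hδ0 hδ
  have hG := G_le_G1 hε0 hε1 hδ0 hδ (by linarith) (le_of_lt h1)
  have hGd := Gd_nonneg hε0 hε1 hδ0 hδ h0
  have t1 : c * b ε δ * (G ε δ c - G ε δ 1) ≤ 0 :=
    mul_nonpos_of_nonneg_of_nonpos (mul_nonneg h0 hb.le) (by linarith)
  have t2 : 0 ≤ (1 - c ^ 2) * (b ε δ * Gd ε δ c) :=
    mul_nonneg (by nlinarith) (mul_nonneg hb.le hGd)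
  have key : 0 ≤ c * (1 - c ^ 2) ∧ c * (1 - c ^ 2) ≤ 2 * (1 - c) := by
    constructor
    · nlinarith
    · nlinarith [mul_nonneg (by linarith : (0:ℝ) ≤ 1 - c)
        (by nlinarith : (0:ℝ) ≤ 2 - c - c ^ 2)]
  have t3 : -(3 * w ε δ * c * (1 - c ^ 2)) ≤ 30 * b ε δ * (1 - c) := by
    have h5 : -w ε δ ≤ 5 * b ε δ := by linarith
    have h6 : 0 ≤ -w ε δ := by linarith
    calc -(3 * w ε δ * c * (1 - c ^ 2)) = 3 * (-w ε δ) * (c * (1 - c ^ 2)) := by ring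
      _ ≤ 3 * (5 * b ε δ) * (2 * (1 - c)) := by
          apply mul_le_mul (by linarith) key.2 key.1 (by positivity)
      _ = 30 * b ε δ * (1 - c) := by ring
  have hbsmall : 30 * b ε δ * (1 - c) < 1 - c := by nlinarith
  rw [hc_expand hε0 hε1 hδ0 hδ]
  linarith

lemma phase_lb {c : ℝ} (h0 : 0 ≤ c) (h1 : c ≤ 1) :
    -(Real.pi * b ε δ) ≤ c * b ε δ * (G ε δ c - G ε δ 1) := by
  have hb := b_pos hε0 hε1 hδ0 hδ
  have hGlb := G_gt hε0 hε1 hδ0 hδ c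
  have hGub := G_neg hε0 hε1 hδ0 hδ (1 : ℝ)
  have key : -(Real.pi) ≤ G ε δ c - G ε δ 1 := by linarith
  have key2 : G ε δ c - G ε δ 1 ≤ 0 := by
    have := G_le_G1 hε0 hε1 hδ0 hδ (by linarith : (-1:ℝ) ≤ c) h1
    linarith
  have hcb0 : 0 ≤ c * b ε δ := mul_nonneg h0 hb.le
  have hcb1 : c * b ε δ ≤ b ε δ := by nlinarith
  have s1 : (c * b ε δ) * (-(Real.pi)) ≤ (c * b ε δ) * (G ε δ c - G ε δ 1) :=
    mul_le_mul_of_nonneg_left key hcb0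
  have s2 : -(Real.pi * b ε δ) ≤ (c * b ε δ) * (-(Real.pi)) := by
    nlinarith [Real.pi_pos]
  calc -(Real.pi * b ε δ) ≤ (c * b ε δ) * (-(Real.pi)) := s2
    _ ≤ (c * b ε δ) * (G ε δ c - G ε δ 1) := s1
    _ = c * b ε δ * (G ε δ c - G ε δ 1) := by ring

lemma wterm_nonneg {c : ℝ} (h0 : 0 ≤ c) (h1 : c ≤ 1) :
    0 ≤ -(3 * w ε δ * c * (1 - c ^ 2)) := by
  have hw0 := w_nonpos hε0 hε1 hδ0 hδ
  have : 0 ≤ c * (1 - c ^ 2) := by nlinarith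
  nlinarith

lemma b_div_mu : b ε δ * Real.sin δ ^ 2 = mu ε δ * D ε δ :=
  (mu_mul_D hε0 hε1 hδ0 hδ).symm

-- far-regime tail bound:  (1-c²)·b·Gd c ≤ 1/100  when (c-c₀)² ≥ Rp²
lemma tail_bound {c : ℝ} (h0 : 0 ≤ c) (h1 : c ≤ 1)
    (hfar : Rp ε δ ^ 2 ≤ (c - Real.cos δ) ^ 2) :
    (1 - c ^ 2) * (b ε δ * Gd ε δ c) ≤ 1 / 100 := by
  have hb := b_pos hε0 hε1 hδ0 hδ
  have hmu := mu_pos hε0 hε1 hδ0 hδ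
  have hR := Rp_pos hε0 hε1 hδ0 hδ
  have hGd0 := Gd_nonneg hε0 hε1 hδ0 hδ h0
  have hGd1 := Gd_le hε0 hε1 hδ0 hδ c
  have hGd2 : Gd ε δ c ≤ mu ε δ / Rp ε δ ^ 2 := by
    refine le_trans hGd1 ?_
    apply div_le_div_of_nonneg_left hmu.le (by positivity)
    nlinarith [sq_nonneg (mu ε δ)]
  have step1 : (1 - c ^ 2) * (b ε δ * Gd ε δ c) ≤ b ε δ * (mu ε δ / Rp ε δ ^ 2) := by
    have h2 : b ε δ * Gd ε δ c ≤ b ε δ * (mu ε δ / Rp ε δ ^ 2) :=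
      mul_le_mul_of_nonneg_left hGd2 hb.le
    have h3 : 0 ≤ b ε δ * Gd ε δ c := mul_nonneg hb.le hGd0
    have h4 : 1 - c ^ 2 ≤ 1 := by nlinarith
    nlinarith
  refine le_trans step1 ?_
  have hD := D_pos hε0 hε1 hδ0 hδ
  have hDlb := D_lb hε0 hε1 hδ0 hδ
  have hs := s0_pos hδ0 hδ
  have hc0 := c0_pos hδ0 hδ
  have hc1 := c0_lt_one hδ0 hδ
  have hs1 := s0_lt_one hδ0 hδ
  have hm : 0 < 1 - ε := by linarith
  have hmuD := mu_mul_D hε0 hε1 hδ0 hδ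
  have hA : 0 < (1 - ε) ^ 3 * Real.sin δ ^ 4 * Real.cos δ ^ 2 := by positivity
  have l1 : 100 * b ε δ ^ 2 * Real.sin δ ^ 2 =
      (1 - ε) ^ 3 * Real.sin δ ^ 4 * Real.cos δ ^ 2 *
        ((1 - ε) * Real.cos δ ^ 2) / 10000 := by
    unfold b; ring
  have l2 : (1 - ε) ^ 3 * Real.sin δ ^ 4 * Real.cos δ ^ 2 / 512 ≤
      Rp ε δ ^ 2 * D ε δ := by
    have base : 0 ≤ ((1 - ε) * Real.sin δ ^ 2 * Real.cos δ / 8) ^ 2 := by positivity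
    have hstep := mul_le_mul_of_nonneg_left hDlb base
    calc (1 - ε) ^ 3 * Real.sin δ ^ 4 * Real.cos δ ^ 2 / 512
        = ((1 - ε) * Real.sin δ ^ 2 * Real.cos δ / 8) ^ 2 * ((1 - ε) / 8) := by ring
      _ ≤ ((1 - ε) * Real.sin δ ^ 2 * Real.cos δ / 8) ^ 2 * D ε δ := hstep
      _ = Rp ε δ ^ 2 * D ε δ := by unfold Rp; ring
  have l3 : (1 - ε) * Real.cos δ ^ 2 ≤ 1 := by nlinarith
  have goal2 : 100 * b ε δ ^ 2 * Real.sin δ ^ 2 ≤ Rp ε δ ^ 2 * D ε δ := by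
    rw [l1]
    have : (1 - ε) ^ 3 * Real.sin δ ^ 4 * Real.cos δ ^ 2 *
        ((1 - ε) * Real.cos δ ^ 2) / 10000 ≤
        (1 - ε) ^ 3 * Real.sin δ ^ 4 * Real.cos δ ^ 2 / 10000 := by nlinarith
    have h512 : (1 - ε) ^ 3 * Real.sin δ ^ 4 * Real.cos δ ^ 2 / 10000 ≤
        (1 - ε) ^ 3 * Real.sin δ ^ 4 * Real.cos δ ^ 2 / 512 := by nlinarith
    linarith
  -- conclude b * (mu / Rp^2) ≤ 1/100
  rw [show b ε δ * (mu ε δ / Rp ε δ ^ 2) = b ε δ * mu ε δ / Rp ε δ ^ 2 by ring]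
  rw [div_le_div_iff₀ (by positivity) (by norm_num : (0:ℝ) < 100)]
  -- b * mu * 100 ≤ 1 * Rp ^ 2
  have e : (b ε δ * mu ε δ * 100 - Rp ε δ ^ 2) * D ε δ =
      100 * b ε δ ^ 2 * Real.sin δ ^ 2 - Rp ε δ ^ 2 * D ε δ := by
    linear_combination (100 * b ε δ) * hmuD
  have h5 : (b ε δ * mu ε δ * 100 - Rp ε δ ^ 2) * D ε δ ≤ 0 * D ε δ := by
    rw [e, zero_mul]; linarith
  have h6 := le_of_mul_le_mul_right h5 hD
  linarith

lemma mu_Gd_le (c : ℝ) : mu ε δ * Gd ε δ c ≤ 1 := by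
  have hmu := mu_pos hε0 hε1 hδ0 hδ
  have h1 := Gd_le hε0 hε1 hδ0 hδ c
  have hden : 0 < (c - Real.cos δ) ^ 2 + mu ε δ ^ 2 := by positivity
  have h2 : mu ε δ / ((c - Real.cos δ) ^ 2 + mu ε δ ^ 2) ≤ 1 / mu ε δ := by
    rw [div_le_div_iff₀ hden hmu]
    nlinarith [sq_nonneg (c - Real.cos δ)]
  have h3 : Gd ε δ c ≤ 1 / mu ε δ := le_trans h1 h2
  calc mu ε δ * Gd ε δ c ≤ mu ε δ * (1 / mu ε δ) :=
        mul_le_mul_of_nonneg_left h3 hmu.le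
    _ = 1 := by field_simp

lemma near_bound {c : ℝ} (h0 : 0 ≤ c) (h1 : c ≤ 1)
    (hnear : (c - Real.cos δ) ^ 2 ≤ Rp ε δ ^ 2) :
    (1 - c ^ 2) * (b ε δ * Gd ε δ c) ≤
      D ε δ * (1 + (1 - ε) * Real.cos δ / 4) := by
  have hb := b_pos hε0 hε1 hδ0 hδ
  have hmu := mu_pos hε0 hε1 hδ0 hδ
  have hR := Rp_pos hε0 hε1 hδ0 hδ
  have hc0 := c0_pos hδ0 hδ
  have hc1 := c0_lt_one hδ0 hδ
  have hGd0 := Gd_nonneg hε0 hε1 hδ0 hδ h0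
  have hmuD := mu_mul_D hε0 hε1 hδ0 hδ
  have habs : Real.cos δ - c ≤ Rp ε δ := by
    nlinarith [sq_nonneg (Rp ε δ + (c - Real.cos δ))]
  have hcc : 1 - c ^ 2 ≤ Real.sin δ ^ 2 + 2 * Rp ε δ := by
    have hp := pyth (δ := δ) hδ0 hδ
    nlinarith
  have hkey : Real.sin δ ^ 2 + 2 * Rp ε δ =
      Real.sin δ ^ 2 * (1 + (1 - ε) * Real.cos δ / 4) := by
    unfold Rp; ring
  have hmuGd := mu_Gd_le hε0 hε1 hδ0 hδ c
  -- multiply target by mu and compare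
  have hmain : ((1 - c ^ 2) * (b ε δ * Gd ε δ c)) * mu ε δ ≤
      (D ε δ * (1 + (1 - ε) * Real.cos δ / 4)) * mu ε δ := by
    have lhs_eq : ((1 - c ^ 2) * (b ε δ * Gd ε δ c)) * mu ε δ =
        (1 - c ^ 2) * b ε δ * (mu ε δ * Gd ε δ c) := by ring
    have rhs_eq : (D ε δ * (1 + (1 - ε) * Real.cos δ / 4)) * mu ε δ =
        b ε δ * (Real.sin δ ^ 2 * (1 + (1 - ε) * Real.cos δ / 4)) := by
      linear_combination (1 + (1 - ε) * Real.cos δ / 4) * hmuD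
    rw [lhs_eq, rhs_eq, ← hkey]
    have s1 : (1 - c ^ 2) * b ε δ * (mu ε δ * Gd ε δ c) ≤ (1 - c ^ 2) * b ε δ := by
      have hnn : 0 ≤ (1 - c ^ 2) * b ε δ := mul_nonneg (by nlinarith) hb.le
      nlinarith [mul_nonneg (mul_nonneg hmu.le hGd0) hnn]
    have s2 : (1 - c ^ 2) * b ε δ ≤ (Real.sin δ ^ 2 + 2 * Rp ε δ) * b ε δ := by
      nlinarith
    calc (1 - c ^ 2) * b ε δ * (mu ε δ * Gd ε δ c) ≤ (1 - c ^ 2) * b ε δ := s1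
      _ ≤ (Real.sin δ ^ 2 + 2 * Rp ε δ) * b ε δ := s2
      _ = b ε δ * (Real.sin δ ^ 2 + 2 * Rp ε δ) := by ring
  exact le_of_mul_le_mul_right hmain hmu

lemma hc_lb {c : ℝ} (h0 : 0 ≤ c) (h1 : c ≤ 1) : -1 < hc ε δ c := by
  have hb := b_pos hε0 hε1 hδ0 hδ
  have hble := b_le hε0 hε1 hδ0 hδ
  have hπ := Real.pi_lt_d2
  have hπ0 := Real.pi_pos
  have hphase := phase_lb hε0 hε1 hδ0 hδ h0 h1
  have hwterm := wterm_nonneg hε0 hε1 hδ0 hδ h0 h1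
  have hπb : Real.pi * b ε δ ≤ (1 - ε) / 100 := by nlinarith
  rcases le_total ((c - Real.cos δ) ^ 2) (Rp ε δ ^ 2) with hnear | hfar
  · -- near regime
    have hc0 := c0_pos hδ0 hδ
    have hc1 := c0_lt_one hδ0 hδ
    have hR := Rp_pos hε0 hε1 hδ0 hδ
    have hnb := near_bound hε0 hε1 hδ0 hδ h0 h1 hnear
    have hclb : Real.cos δ - Rp ε δ ≤ c := by
      nlinarith [sq_nonneg (Rp ε δ - (c - Real.cos δ))]
    have hRub : Rp ε δ ≤ (1 - ε) / 8 := by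
      have hs := s0_pos hδ0 hδ
      have hs1 := s0_lt_one hδ0 hδ
      have hm : (0:ℝ) ≤ 1 - ε := by linarith
      have k : Real.sin δ ^ 2 * Real.cos δ ≤ 1 := by nlinarith
      have := mul_le_mul_of_nonneg_left k hm
      unfold Rp
      nlinarith
    have hDub := D_ub hε0 hε1 hδ0 hδ
    have hDlb' : D ε δ = ε + Real.cos δ + (1 - ε) / 8 := rfl
    have hT : D ε δ * (1 + (1 - ε) * Real.cos δ / 4) ≤
        ε + Real.cos δ + (1 - ε) / 8 + 17 / 32 * (1 - ε) * Real.cos δ := by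
      have : D ε δ * ((1 - ε) * Real.cos δ / 4) ≤
          17 / 8 * ((1 - ε) * Real.cos δ / 4) := by
        apply mul_le_mul_of_nonneg_right hDub
        nlinarith
      nlinarith [this]
    rw [hc_expand hε0 hε1 hδ0 hδ]
    nlinarith [hT, hnb, hclb, hphase, hwterm, hπb]
  · -- far regime
    have htail := tail_bound hε0 hε1 hδ0 hδ h0 h1 hfar
    rw [hc_expand hε0 hε1 hδ0 hδ]
    nlinarith [htail, hphase, hwterm, hπb]

lemma hc_dip : hc ε δ (Real.cos δ) < -ε := by
  have hb := b_pos hε0 hε1 hδ0 hδ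
  have hble := b_le hε0 hε1 hδ0 hδ
  have hw0 := w_nonpos hε0 hε1 hδ0 hδ
  have hw1 := w_lb hε0 hε1 hδ0 hδ
  have hc0 := c0_pos hδ0 hδ
  have hc1 := c0_lt_one hδ0 hδ
  have hs := s0_pos hδ0 hδ
  have hs1 := s0_lt_one hδ0 hδ
  have hmu := mu_pos hε0 hε1 hδ0 hδ
  have hD := D_pos hε0 hε1 hδ0 hδ
  have hDlb := D_lb hε0 hε1 hδ0 hδ
  have hmuD := mu_mul_D hε0 hε1 hδ0 hδ
  have hp := pyth (δ := δ) hδ0 hδ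
  have hm : 0 < 1 - ε := by linarith
  set c₀ := Real.cos δ with hc₀
  -- t1 : phase term ≤ 0
  have hG := G_le_G1 hε0 hε1 hδ0 hδ (by linarith : (-1:ℝ) ≤ c₀) hc1.le
  have t1 : c₀ * b ε δ * (G ε δ c₀ - G ε δ 1) ≤ 0 :=
    mul_nonpos_of_nonneg_of_nonpos (mul_nonneg hc0.le hb.le) (by linarith)
  -- t2 : w-term ≤ 15 b
  have t2 : -(3 * w ε δ * c₀ * (1 - c₀ ^ 2)) ≤ 15 * b ε δ := by
    have k1 : 0 ≤ c₀ * (1 - c₀ ^ 2) := by nlinarith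
    have k2 : c₀ * (1 - c₀ ^ 2) ≤ 1 := by nlinarith
    have h5 : -w ε δ ≤ 5 * b ε δ := by linarith
    have h6 : 0 ≤ -w ε δ := by linarith
    calc -(3 * w ε δ * c₀ * (1 - c₀ ^ 2)) = 3 * (-w ε δ) * (c₀ * (1 - c₀ ^ 2)) := by
          ring
      _ ≤ 3 * (5 * b ε δ) * 1 := mul_le_mul (by linarith) k2 k1 (by positivity)
      _ = 15 * b ε δ := by ring
  -- t3 : main dip term
  have e1 : Gd ε δ c₀ = mu ε δ / mu ε δ ^ 2 -
      mu ε δ / ((2 * c₀) ^ 2 + mu ε δ ^ 2) := by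
    unfold Gd
    rw [← hc₀, show (c₀ - c₀ : ℝ) ^ 2 = 0 by ring, zero_add,
      show (c₀ + c₀ : ℝ) ^ 2 = (2 * c₀) ^ 2 by ring]
  have e2 : mu ε δ * Gd ε δ c₀ = 1 - mu ε δ ^ 2 / ((2 * c₀) ^ 2 + mu ε δ ^ 2) := by
    rw [e1]
    have h4 : (0:ℝ) < (2 * c₀) ^ 2 + mu ε δ ^ 2 := by positivity
    field_simp
  have e3 : mu ε δ ^ 2 / ((2 * c₀) ^ 2 + mu ε δ ^ 2) ≤ mu ε δ ^ 2 / (4 * c₀ ^ 2) := by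
    apply div_le_div_of_nonneg_left (by positivity) (by positivity)
    nlinarith [sq_nonneg (mu ε δ)]
  -- err bound : sin²·b·mu²/(4c₀²) ≤ (1-ε)/100 · mu
  have err : Real.sin δ ^ 2 * b ε δ * (mu ε δ ^ 2 / (4 * c₀ ^ 2)) ≤
      (1 - ε) / 100 * mu ε δ := by
    rw [show Real.sin δ ^ 2 * b ε δ * (mu ε δ ^ 2 / (4 * c₀ ^ 2)) =
      Real.sin δ ^ 2 * b ε δ * mu ε δ ^ 2 / (4 * c₀ ^ 2) by ring]
    rw [div_le_iff₀ (by positivity : (0:ℝ) < 4 * c₀ ^ 2)]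
    -- s² b μ² ≤ (m/100) μ (4c₀²)  ⟺ (multiply by D)  s²b μ D ≤ ... use μD = bs²
    have key : (Real.sin δ ^ 2 * b ε δ * mu ε δ ^ 2 -
        (1 - ε) / 100 * mu ε δ * (4 * c₀ ^ 2)) * D ε δ =
        (b ε δ ^ 2 * Real.sin δ ^ 4 - (1 - ε) / 25 * c₀ ^ 2 * D ε δ) * mu ε δ := by
      linear_combination (Real.sin δ ^ 2 * b ε δ * mu ε δ) * hmuD
    have poly : b ε δ ^ 2 * Real.sin δ ^ 4 ≤ (1 - ε) / 25 * c₀ ^ 2 * D ε δ := by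
      have l1 : b ε δ ^ 2 * Real.sin δ ^ 4 =
          (1 - ε) ^ 2 * Real.sin δ ^ 4 * c₀ ^ 2 *
            ((1 - ε) ^ 2 * Real.sin δ ^ 2 * c₀ ^ 2) / 1000000 := by
        unfold b; rw [← hc₀]; ring
      have l2 : (1 - ε) ^ 2 * Real.sin δ ^ 2 * c₀ ^ 2 ≤ 1 := by
        calc (1 - ε) ^ 2 * Real.sin δ ^ 2 * c₀ ^ 2 ≤ 1 ^ 2 * 1 ^ 2 * 1 ^ 2 := by
              gcongr <;> nlinarith
          _ = 1 := by norm_num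
      have l3 : (1 - ε) ^ 2 * Real.sin δ ^ 4 * c₀ ^ 2 ≤ 1 := by
        have : Real.sin δ ^ 4 = (Real.sin δ ^ 2) ^ 2 := by ring
        calc (1 - ε) ^ 2 * Real.sin δ ^ 4 * c₀ ^ 2 ≤ 1 ^ 2 * 1 ^ 4 * 1 ^ 2 := by
              gcongr <;> nlinarith
          _ = 1 := by norm_num
      have l4 : (1 - ε) / 25 * c₀ ^ 2 * D ε δ ≥ (1 - ε) / 25 * c₀ ^ 2 * ((1 - ε) / 8) := by
        have : (0:ℝ) ≤ (1 - ε) / 25 * c₀ ^ 2 := by positivity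
        nlinarith [mul_le_mul_of_nonneg_left hDlb this]
      have l5 : (0:ℝ) ≤ (1 - ε) ^ 2 * Real.sin δ ^ 4 * c₀ ^ 2 := by positivity
      -- LHS ≤ 1/10⁶ · (A) ≤ (1-ε)²/200 ≤ RHS
      rw [l1]
      have lhs_le : (1 - ε) ^ 2 * Real.sin δ ^ 4 * c₀ ^ 2 *
          ((1 - ε) ^ 2 * Real.sin δ ^ 2 * c₀ ^ 2) / 1000000 ≤
          (1 - ε) ^ 2 * Real.sin δ ^ 4 * c₀ ^ 2 / 1000000 := by nlinarith
      have rhs_ge : (1 - ε) / 25 * c₀ ^ 2 * ((1 - ε) / 8) =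
          (1 - ε) ^ 2 * c₀ ^ 2 / 200 := by ring
      have mid : (1 - ε) ^ 2 * Real.sin δ ^ 4 * c₀ ^ 2 / 1000000 ≤
          (1 - ε) ^ 2 * c₀ ^ 2 / 200 := by
        have s4 : (1 - ε) ^ 2 * Real.sin δ ^ 4 * c₀ ^ 2 ≤
            (1 - ε) ^ 2 * 1 ^ 4 * c₀ ^ 2 := by gcongr <;> nlinarith
        have nn : (0:ℝ) ≤ (1 - ε) ^ 2 * Real.sin δ ^ 4 * c₀ ^ 2 := by positivity
        have : (1 - ε) ^ 2 * 1 ^ 4 * c₀ ^ 2 = (1 - ε) ^ 2 * c₀ ^ 2 := by ring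
        linarith
      linarith
    have h7 : (Real.sin δ ^ 2 * b ε δ * mu ε δ ^ 2 -
        (1 - ε) / 100 * mu ε δ * (4 * c₀ ^ 2)) * D ε δ ≤ 0 * D ε δ := by
      rw [key, zero_mul]
      nlinarith [poly, hmu]
    have h8 := le_of_mul_le_mul_right h7 hD
    linarith
  -- main : D - (1-ε)/100 ≤ (1-c₀²)(b Gd c₀)
  have main : D ε δ - (1 - ε) / 100 ≤ (1 - c₀ ^ 2) * (b ε δ * Gd ε δ c₀) := by
    have hsq : 1 - c₀ ^ 2 = Real.sin δ ^ 2 := by linarith [hp]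
    have expand : ((1 - c₀ ^ 2) * (b ε δ * Gd ε δ c₀)) * mu ε δ =
        Real.sin δ ^ 2 * b ε δ * (mu ε δ * Gd ε δ c₀) := by rw [hsq]; ring
    have e4 : Real.sin δ ^ 2 * b ε δ * (mu ε δ * Gd ε δ c₀) ≥
        Real.sin δ ^ 2 * b ε δ -
          Real.sin δ ^ 2 * b ε δ * (mu ε δ ^ 2 / (4 * c₀ ^ 2)) := by
      rw [e2]
      have hnn : (0:ℝ) ≤ Real.sin δ ^ 2 * b ε δ := by positivity
      nlinarith [e3, hnn]
    have e5 : Real.sin δ ^ 2 * b ε δ = D ε δ * mu ε δ := by linarith [hmuD]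
    have comb : ((1 - c₀ ^ 2) * (b ε δ * Gd ε δ c₀)) * mu ε δ ≥
        (D ε δ - (1 - ε) / 100) * mu ε δ := by
      rw [expand]
      calc Real.sin δ ^ 2 * b ε δ * (mu ε δ * Gd ε δ c₀) ≥
          Real.sin δ ^ 2 * b ε δ -
            Real.sin δ ^ 2 * b ε δ * (mu ε δ ^ 2 / (4 * c₀ ^ 2)) := e4
        _ ≥ D ε δ * mu ε δ - (1 - ε) / 100 * mu ε δ := by linarith [err, e5]
        _ = (D ε δ - (1 - ε) / 100) * mu ε δ := by ring
    exact le_of_mul_le_mul_right comb hmu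
  -- assemble
  have hexp := hc_expand hε0 hε1 hδ0 hδ c₀
  have hDe : D ε δ = ε + c₀ + (1 - ε) / 8 := rfl
  rw [hexp]
  nlinarith [t1, t2, main]

end Battery

section Assemble
include hε0 hε1 hδ0 hδ

lemma abs_hc_lt {c : ℝ} (h1 : -1 < c) (h2 : c < 1) : |hc ε δ c| < 1 := by
  rcases le_or_gt 0 c with h | h
  · rw [abs_lt]
    exact ⟨hc_lb hε0 hε1 hδ0 hδ h h2.le, hc_ub hε0 hε1 hδ0 hδ h h2⟩
  · rw [show c = -(-c) by ring, hc_odd hε0 hε1 hδ0 hδ, abs_neg, abs_lt]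
    constructor
    · exact hc_lb hε0 hε1 hδ0 hδ (by linarith) (by linarith)
    · exact hc_ub hε0 hε1 hδ0 hδ (by linarith) (by linarith)

lemma cont_P : Continuous (P ε δ) :=
  continuous_iff_continuousAt.mpr fun x =>
    (hasDerivAt_P hε0 hε1 hδ0 hδ x).continuousAt

lemma intP : (∫ c in (-1:ℝ)..1, P ε δ c) = 2 := by
  set PA : ℝ → ℝ := fun c => c + b ε δ * (AG ε δ c - G ε δ 1 * c) +
    w ε δ * (c ^ 3 / 3 - c) with hPA
  have hderiv : ∀ x ∈ Set.uIcc (-1:ℝ) 1, HasDerivAt PA (P ε δ x) x := by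
    intro x _
    have h1 : HasDerivAt (fun c : ℝ => c ^ 3 / 3 - c) (x ^ 2 - 1) x := by
      have := (((hasDerivAt_id x).pow 3).div_const 3).sub (hasDerivAt_id x)
      exact this.congr_deriv (by norm_num)
    have h2 : HasDerivAt (fun c : ℝ => AG ε δ c - G ε δ 1 * c)
        (G ε δ x - G ε δ 1) x := by
      exact ((hasDerivAt_AG hε0 hε1 hδ0 hδ x).sub
        ((hasDerivAt_id x).const_mul (G ε δ 1))).congr_deriv (by ring)
    have := ((hasDerivAt_id x).add (h2.const_mul (b ε δ))).add
      (h1.const_mul (w ε δ))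
    have heq : 1 + b ε δ * (G ε δ x - G ε δ 1) + w ε δ * (x ^ 2 - 1) = P ε δ x := by
      unfold P; ring
    rw [← heq]
    exact this
  have hint := intervalIntegral.integral_eq_sub_of_hasDerivAt hderiv
    ((cont_P hε0 hε1 hδ0 hδ).intervalIntegrable _ _)
  rw [hint, hPA]
  show (1 : ℝ) + b ε δ * (AG ε δ 1 - G ε δ 1 * 1) + w ε δ * (1 ^ 3 / 3 - 1) -
    ((-1 : ℝ) + b ε δ * (AG ε δ (-1) - G ε δ 1 * (-1)) +
      w ε δ * ((-1) ^ 3 / 3 - (-1))) = 2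
  rw [show w ε δ = 3 / 4 * b ε δ * (IG ε δ - 2 * G ε δ 1) from rfl,
    show IG ε δ = AG ε δ 1 - AG ε δ (-1) from rfl]
  ring

lemma area : (∫ t in (0:ℝ)..Real.pi, gam ε δ t) = 2 := by
  have hsub := intervalIntegral.integral_comp_smul_deriv
    (f := Real.cos) (f' := fun t => -Real.sin t) (g := P ε δ) (a := 0) (b := Real.pi)
    (fun x _ => Real.hasDerivAt_cos x)
    ((Real.continuous_sin.neg).continuousOn)
    (cont_P hε0 hε1 hδ0 hδ)
  rw [Real.cos_zero, Real.cos_pi] at hsub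
  have h1 : (∫ t in (0:ℝ)..Real.pi, (-Real.sin t) • (P ε δ ∘ Real.cos) t) =
      ∫ t in (0:ℝ)..Real.pi, -gam ε δ t := by
    apply intervalIntegral.integral_congr
    intro t _
    simp only [Function.comp_apply, smul_eq_mul, gam]
    ring
  have h2 : (∫ c in (1:ℝ)..(-1), P ε δ c) = -∫ c in (-1:ℝ)..1, P ε δ c :=
    intervalIntegral.integral_symm _ _
  rw [h1, h2, intP hε0 hε1 hδ0 hδ, intervalIntegral.integral_neg] at hsub
  linarith

lemma gam_odd (x : ℝ) : gam ε δ (-x) = -gam ε δ x := by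
  unfold gam; rw [Real.sin_neg, Real.cos_neg]; ring

lemma gam_pi_odd (u : ℝ) : gam ε δ (Real.pi + -u) = -gam ε δ (Real.pi + u) := by
  unfold gam
  rw [show Real.pi + -u = Real.pi - u by ring, Real.sin_pi_sub, Real.cos_pi_sub]
  rw [Real.sin_add, Real.cos_add, Real.sin_pi, Real.cos_pi]
  ring_nf

lemma odd_iteratedDeriv_even {f : ℝ → ℝ} (hodd : ∀ x, f (-x) = -f x) {n : ℕ}
    (hn : Even n) : iteratedDeriv n f 0 = 0 := by
  have h1 := iteratedDeriv_comp_neg n f 0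
  rw [neg_zero] at h1
  have h2 : (fun x => f (-x)) = fun x => -(f x) := funext fun x => hodd x
  rw [h2, iteratedDeriv_fun_neg] at h1
  have h3 : ((-1 : ℝ)) ^ n = 1 := hn.neg_one_pow
  rw [h3, one_smul] at h1
  linarith

lemma even_deriv_gam_left {n : ℕ} : iteratedDeriv (2 * n) (gam ε δ) 0 = 0 :=
  odd_iteratedDeriv_even hε0 hε1 hδ0 hδ (gam_odd hε0 hε1 hδ0 hδ) (even_two_mul n)

lemma even_deriv_gam_right {n : ℕ} : iteratedDeriv (2 * n) (gam ε δ) Real.pi = 0 := by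
  have hshift := iteratedDeriv_comp_const_add (2 * n) (gam ε δ) Real.pi
  have h0 : iteratedDeriv (2 * n) (fun z => gam ε δ (Real.pi + z)) 0 =
      iteratedDeriv (2 * n) (gam ε δ) Real.pi := by
    rw [hshift]; simp
  rw [← h0]
  exact odd_iteratedDeriv_even hε0 hε1 hδ0 hδ
    (fun u => gam_pi_odd hε0 hε1 hδ0 hδ u) (even_two_mul n)

end Assemble

end Stmt10Proof

/-- For every `ε ∈ (0,1)` and every `δ ∈ (0, π/2)` there is a normalized profile function
with `γ'(δ) < -ε`. -/
theorem stmt_10 (ε δ : ℝ) (hε : ε ∈ Set.Ioo (0 : ℝ) 1) (hδ0 : 0 < δ)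
    (hδ : δ < Real.pi / 2) :
    ∃ ℓ : ℝ, δ < ℓ ∧ ∃ γ : ℝ → ℝ, IsProfileFn ℓ γ ∧ IsNormalized ℓ γ ∧
      deriv γ δ < -ε := by
  obtain ⟨hε0, hε1⟩ := hε
  have hπ := Real.pi_pos
  refine ⟨Real.pi, by linarith, Stmt10Proof.gam ε δ, ?_, ?_, ?_⟩
  · refine ⟨hπ, Stmt10Proof.smooth_gam hε0 hε1 hδ0 hδ, ?_, ?_, ?_, ?_, ?_, ?_, ?_, ?_⟩
    · simp [Stmt10Proof.gam]
    · simp [Stmt10Proof.gam, Real.sin_pi]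
    · intro t ht
      exact mul_pos (Real.sin_pos_of_pos_of_lt_pi ht.1 ht.2)
        (Stmt10Proof.P_pos hε0 hε1 hδ0 hδ (Real.neg_one_le_cos t) (Real.cos_le_one t))
    · rw [Stmt10Proof.deriv_gam hε0 hε1 hδ0 hδ, Real.cos_zero,
        Stmt10Proof.hc_one hε0 hε1 hδ0 hδ]
    · rw [Stmt10Proof.deriv_gam hε0 hε1 hδ0 hδ, Real.cos_pi,
        Stmt10Proof.hc_neg_one hε0 hε1 hδ0 hδ]
    · intro t ht
      rw [Stmt10Proof.deriv_gam hε0 hε1 hδ0 hδ]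
      apply Stmt10Proof.abs_hc_lt hε0 hε1 hδ0 hδ
      · have h := Real.cos_lt_cos_of_nonneg_of_le_pi ht.1.le (le_refl Real.pi) ht.2
        rw [Real.cos_pi] at h
        linarith
      · have h := Real.cos_lt_cos_of_nonneg_of_le_pi (le_refl 0)
          (by linarith [ht.2] : t ≤ Real.pi) ht.1
        rw [Real.cos_zero] at h
        linarith
    · intro n _
      exact Stmt10Proof.even_deriv_gam_left hε0 hε1 hδ0 hδ
    · intro n _
      exact Stmt10Proof.even_deriv_gam_right hε0 hε1 hδ0 hδ
  · exact Stmt10Proof.area hε0 hε1 hδ0 hδ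
  · rw [Stmt10Proof.deriv_gam hε0 hε1 hδ0 hδ]
    exact Stmt10Proof.hc_dip hε0 hε1 hδ0 hδ
end
end

section
/- Let γ be a normalized profile function on [0,ℓ] that is symmetric about ℓ/2 (γ(t) = γ(ℓ−t) for all t), and suppose the Gaussian curvature K(t) = −γ''(t)/γ(t) is monotone nondecreasing on (0, ℓ/2]. Then Γ(t) + γ'(t) ≥ 0 for every t ∈ [0, ℓ/2]. -/
/-- If the normalized profile function is symmetric about `ℓ/2` and the Gaussian curvature
`K = -γ''/γ` is nondecreasing on `(0, ℓ/2]`, then `Γ + γ' ≥ 0` on `[0, ℓ/2]`. -/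
theorem stmt_11 (ℓ : ℝ) (γ : ℝ → ℝ) (hγ : IsProfileFn ℓ γ) (hnorm : IsNormalized ℓ γ)
    (hsym : ∀ t : ℝ, γ t = γ (ℓ - t))
    (hK : ∀ s ∈ Set.Ioc 0 (ℓ / 2), ∀ t ∈ Set.Ioc 0 (ℓ / 2), s ≤ t →
      -(iteratedDeriv 2 γ s) / γ s ≤ -(iteratedDeriv 2 γ t) / γ t) :
    ∀ t ∈ Set.Icc 0 (ℓ / 2), 0 ≤ Gam γ t + deriv γ t := by
  obtain ⟨hl, hsm, h0, hℓ0, hpos, hd0, hdℓ, habs, hev0, hevℓ⟩ := hγ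
  have hcont : Continuous γ := hsm.continuous
  have hdiff : Differentiable ℝ γ := hsm.differentiable (by simp)
  have hderiv_diff : Differentiable ℝ (deriv γ) := by
    have h := (contDiff_infty_iff_deriv.mp (hsm.of_le (by simp))).2
    exact h.differentiable (by simp)
  have hit2 : iteratedDeriv 2 γ = deriv (deriv γ) := by
    rw [iteratedDeriv_succ, iteratedDeriv_one]
  set β : ℝ → ℝ := fun t => Gam γ t + deriv γ t with hβdef
  have hβderiv : ∀ s : ℝ, HasDerivAt β (γ s + iteratedDeriv 2 γ s) s := by
    intro s
    have h1 : HasDerivAt (fun u : ℝ => ∫ x in (0:ℝ)..u, γ x) (γ s) s :=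
      intervalIntegral.integral_hasDerivAt_right (hcont.intervalIntegrable 0 s)
        (hcont.stronglyMeasurableAtFilter _ _) hcont.continuousAt
    have h1' : HasDerivAt (Gam γ) (γ s) s := by
      have := h1.const_add (-1 : ℝ)
      exact this
    have h2 : HasDerivAt (deriv γ) (iteratedDeriv 2 γ s) s := by
      rw [hit2]
      exact (hderiv_diff s).hasDerivAt
    exact h1'.add h2
  have hβcont : Continuous β := by
    apply continuous_iff_continuousAt.mpr
    exact fun s => (hβderiv s).continuousAt
  -- β 0 = 0
  have hβ0 : β 0 = 0 := by simp [hβdef, Gam, hd0]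
  -- deriv γ (ℓ/2) = 0
  have hderiv_symm : ∀ t : ℝ, deriv γ t = -deriv γ (ℓ - t) := by
    intro t
    have hfun : (fun x : ℝ => γ (ℓ - x)) = γ := funext fun x => (hsym x).symm
    have hinner : HasDerivAt (fun x : ℝ => ℓ - x) (-1 : ℝ) t := by
      simpa using (hasDerivAt_id t).const_sub ℓ
    have h1 : HasDerivAt (fun x : ℝ => γ (ℓ - x)) (deriv γ (ℓ - t) * (-1)) t :=
      ((hdiff (ℓ - t)).hasDerivAt).comp t hinner
    have e1 : deriv γ t = deriv (fun x : ℝ => γ (ℓ - x)) t := by rw [hfun]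
    rw [e1, h1.deriv]
    ring
  have hdhalf : deriv γ (ℓ / 2) = 0 := by
    have := hderiv_symm (ℓ / 2)
    have h2 : ℓ - ℓ / 2 = ℓ / 2 := by ring
    rw [h2] at this
    linarith
  -- ∫₀^{ℓ/2} γ = 1
  have hint : (∫ s in (0:ℝ)..(ℓ/2), γ s) = 1 := by
    have hswap : (∫ x in (0:ℝ)..(ℓ/2), γ x) = ∫ x in (ℓ/2)..ℓ, γ x := by
      have h1 : (∫ x in (0:ℝ)..(ℓ/2), γ x) = ∫ x in (0:ℝ)..(ℓ/2), γ (ℓ - x) := by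
        apply intervalIntegral.integral_congr
        intro x _
        exact hsym x
      rw [h1, intervalIntegral.integral_comp_sub_left γ ℓ,
        show ℓ - ℓ / 2 = ℓ / 2 from by ring, sub_zero]
    have hadd : (∫ x in (0:ℝ)..(ℓ/2), γ x) + (∫ x in (ℓ/2)..ℓ, γ x) = ∫ x in (0:ℝ)..ℓ, γ x :=
      intervalIntegral.integral_add_adjacent_intervals (hcont.intervalIntegrable _ _)
        (hcont.intervalIntegrable _ _)
    rw [IsNormalized] at hnorm
    rw [hnorm] at hadd
    linarith [hswap, hadd]
  have hβhalf : β (ℓ / 2) = 0 := by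
    simp [hβdef, Gam, hint, hdhalf]
  -- positivity on (0, ℓ/2]
  have hγpos : ∀ s ∈ Set.Ioc 0 (ℓ / 2), 0 < γ s := by
    intro s hs
    exact hpos s ⟨hs.1, lt_of_le_of_lt hs.2 (by linarith)⟩
  -- main goal
  intro t ht
  rcases eq_or_lt_of_le ht.1 with h | htpos
  · rw [← h]
    have : Gam γ 0 + deriv γ 0 = β 0 := rfl
    rw [this, hβ0]
  · have htmem : t ∈ Set.Ioc 0 (ℓ / 2) := ⟨htpos, ht.2⟩
    have hγt : 0 < γ t := hγpos t htmem
    show 0 ≤ β t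
    by_cases hc : 0 ≤ γ t + iteratedDeriv 2 γ t
    · -- K t ≤ 1, β nondecreasing on [0, t]
      have hKt : -(iteratedDeriv 2 γ t) / γ t ≤ 1 := by
        rw [div_le_one hγt]; linarith
      have hmono : MonotoneOn β (Set.Icc 0 t) := by
        apply monotoneOn_of_deriv_nonneg (convex_Icc 0 t) hβcont.continuousOn
        · intro x _
          exact ((hβderiv x).differentiableAt).differentiableWithinAt
        · intro x hx
          rw [interior_Icc] at hx
          have hxmem : x ∈ Set.Ioc 0 (ℓ / 2) := ⟨hx.1, le_trans (le_of_lt hx.2) ht.2⟩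
          have hγx : 0 < γ x := hγpos x hxmem
          have hKx : -(iteratedDeriv 2 γ x) / γ x ≤ 1 :=
            le_trans (hK x hxmem t htmem (le_of_lt hx.2)) hKt
          rw [div_le_one hγx] at hKx
          rw [(hβderiv x).deriv]
          linarith
      have := hmono (Set.mem_Icc.mpr ⟨le_refl 0, le_of_lt htpos⟩)
        (Set.mem_Icc.mpr ⟨le_of_lt htpos, le_refl t⟩) (le_of_lt htpos)
      rwa [hβ0] at this
    · -- K t > 1, β nonincreasing on [t, ℓ/2]
      push_neg at hc
      have hKt : 1 < -(iteratedDeriv 2 γ t) / γ t := by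
        rw [lt_div_iff₀ hγt]; linarith
      have hanti : AntitoneOn β (Set.Icc t (ℓ / 2)) := by
        apply antitoneOn_of_deriv_nonpos (convex_Icc t (ℓ / 2)) hβcont.continuousOn
        · intro x _
          exact ((hβderiv x).differentiableAt).differentiableWithinAt
        · intro x hx
          rw [interior_Icc] at hx
          have hxmem : x ∈ Set.Ioc 0 (ℓ / 2) := ⟨lt_trans htpos hx.1, le_of_lt hx.2⟩
          have hγx : 0 < γ x := hγpos x hxmem
          have hKx : 1 < -(iteratedDeriv 2 γ x) / γ x :=
            lt_of_lt_of_le hKt (hK t htmem x hxmem (le_of_lt hx.1))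
          rw [lt_div_iff₀ hγx] at hKx
          rw [(hβderiv x).deriv]
          linarith
      have := hanti (Set.mem_Icc.mpr ⟨le_refl t, ht.2⟩)
        (Set.mem_Icc.mpr ⟨ht.2, le_refl _⟩) ht.2
      rw [hβhalf] at this
      exact this
end

section
/- Let γ be a profile function on [0,ℓ] and let t₀ ∈ (0,ℓ) satisfy: γ'(t₀) > 0, Γ(t₀) < 0, Γ(t₀) + γ'(t₀) ≥ 0, and the critical point equation (Γ(t₀) + γ'(t₀))·γ'(t₀) = (1 − K(t₀))·γ(t₀)², where K(t₀) := −γ''(t₀)/γ(t₀). Then 1 − K(t₀) ≥ 0, (γ'(t₀)/γ(t₀))² > 1 − K(t₀), and (Γ(t₀) + γ'(t₀))/γ(t₀) ≤ √(1 − K(t₀)). -/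
/-- The estimate at an interior critical point of `(Γ + γ')/γ`: if `γ'(t₀) > 0`,
`Γ(t₀) < 0`, `Γ(t₀) + γ'(t₀) ≥ 0` and the critical point equation holds, then
`1 - K(t₀) ≥ 0`, `(γ'/γ)² > 1 - K` and `(Γ + γ')/γ ≤ √(1 - K)` at `t₀`. -/
theorem stmt_12 (ℓ : ℝ) (γ : ℝ → ℝ) (hγ : IsProfileFn ℓ γ)
    (t₀ : ℝ) (ht₀ : t₀ ∈ Set.Ioo 0 ℓ) (K : ℝ)
    (hKdef : K = -(iteratedDeriv 2 γ t₀) / γ t₀)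
    (h1 : 0 < deriv γ t₀) (h2 : Gam γ t₀ < 0) (h3 : 0 ≤ Gam γ t₀ + deriv γ t₀)
    (hcrit : (Gam γ t₀ + deriv γ t₀) * deriv γ t₀ = (1 - K) * (γ t₀) ^ 2) :
    0 ≤ 1 - K ∧ 1 - K < (deriv γ t₀ / γ t₀) ^ 2 ∧
      (Gam γ t₀ + deriv γ t₀) / γ t₀ ≤ Real.sqrt (1 - K) := by
  set g := γ t₀ with hg
  set d := deriv γ t₀ with hd
  set G := Gam γ t₀ with hG
  have hgpos : 0 < g := hγ.pos t₀ ht₀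
  have hg2 : (0:ℝ) < g ^ 2 := by positivity
  have hk0 : 0 ≤ 1 - K := by
    nlinarith [mul_nonneg h3 h1.le]
  refine ⟨hk0, ?_, ?_⟩
  · rw [div_pow, lt_div_iff₀ hg2]
    nlinarith
  · rw [show (G + d) / g = (G + d) * g⁻¹ by ring]
    have hsq : ((G + d) * g⁻¹) ^ 2 ≤ 1 - K := by
      have h : (G + d) ^ 2 ≤ (1 - K) * g ^ 2 := by nlinarith
      rw [mul_pow, inv_pow, ← div_eq_mul_inv, div_le_iff₀ hg2]
      exact h
    have hnn : 0 ≤ (G + d) * g⁻¹ := mul_nonneg h3 (by positivity)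
    exact (Real.le_sqrt hnn hk0).mpr hsq
end
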